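/- arXiv:2303.15073 — 13 statements merged into one kernel-verified Lean document; each statement's English description precedes it below -/
import Mathlib

section
/- If A ∈ ℝ^{n×k} and Z ∈ S^k (symmetric k×k), then the system A^T W A = Z has a symmetric solution W ∈ S^n if and only if the range (column space) of Z is contained in the range of A^T. Furthermore, if A has full row rank (rank n), the symmetric solution W is unique. -/
open Matrix

private lemma mulVec_ext' {m k : ℕ} {M N : Matrix (Fin m) (Fin k) ℝ}
    (h : ∀ v, M.mulVec v = N.mulVec v) : M = N := by
  ext i j
  have := congrFun (h (Pi.single j 1)) i
  simpa [Matrix.mulVec_single] using this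

/-- If `A ∈ ℝ^{n×k}` and `Z ∈ 𝒮^k`, the system `Aᵀ W A = Z` has a symmetric solution
`W ∈ 𝒮^n` iff the column space of `Z` is contained in the column space of `Aᵀ`;
moreover, if `A` has full row rank, the symmetric solution is unique. -/
theorem stmt_0 {n k : ℕ} (A : Matrix (Fin n) (Fin k) ℝ)
    (Z : Matrix (Fin k) (Fin k) ℝ) (hZ : Z.IsSymm) :
    ((∃ W : Matrix (Fin n) (Fin n) ℝ, W.IsSymm ∧ Aᵀ * W * A = Z) ↔
      LinearMap.range Z.mulVecLin ≤ LinearMap.range (Aᵀ).mulVecLin) ∧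
    (A.rank = n → ∀ W₁ W₂ : Matrix (Fin n) (Fin n) ℝ, W₁.IsSymm → W₂.IsSymm →
      Aᵀ * W₁ * A = Z → Aᵀ * W₂ * A = Z → W₁ = W₂) := by
  constructor
  · constructor
    · rintro ⟨W, hWs, hW⟩ y ⟨x, rfl⟩
      refine ⟨(W * A).mulVec x, ?_⟩
      simp only [mulVecLin_apply, mulVec_mulVec, ← Matrix.mul_assoc, hW]
    · intro hle
      -- construct a right inverse of `Aᵀ` on the range of `Aᵀ`
      set f := (Aᵀ).mulVecLin with hf
      obtain ⟨s, hs⟩ := f.rangeRestrict.exists_rightInverse_of_surjective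
        (LinearMap.range_rangeRestrict f ▸ rfl)
      obtain ⟨q, hq⟩ := (LinearMap.range f).exists_isCompl
      set π := (LinearMap.range f).linearProjOfIsCompl q hq with hπ
      set h : (Fin k → ℝ) →ₗ[ℝ] (Fin n → ℝ) := s.comp π with hh
      have key : ∀ y ∈ LinearMap.range f, f (h y) = y := by
        intro y hy
        have hπy : π y = ⟨y, hy⟩ := Submodule.linearProjOfIsCompl_apply_left hq ⟨y, hy⟩
        have : f.rangeRestrict (s ⟨y, hy⟩) = ⟨y, hy⟩ := by
          have := LinearMap.congr_fun hs ⟨y, hy⟩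
          exact this
        have : (f (s ⟨y, hy⟩) : Fin k → ℝ) = y := congrArg Subtype.val this
        simp [hh, hπy, this]
      set H := LinearMap.toMatrix' h with hH
      have hHmul : ∀ v, H.mulVec v = h v := by
        intro v
        rw [hH, ← Matrix.toLin'_apply, Matrix.toLin'_toMatrix']
      have hMZ : Aᵀ * H * Z = Z := by
        apply mulVec_ext'
        intro v
        rw [← mulVec_mulVec, ← mulVec_mulVec, hHmul]
        exact key (Z.mulVec v) (hle ⟨v, rfl⟩)
      have hZM : Z * (Aᵀ * H)ᵀ = Z := by
        have h2 := congrArg Matrix.transpose hMZ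
        rw [Matrix.transpose_mul, hZ.eq] at h2
        exact h2
      refine ⟨H * Z * Hᵀ, ?_, ?_⟩
      · unfold Matrix.IsSymm
        rw [Matrix.transpose_mul, Matrix.transpose_mul, Matrix.transpose_transpose, hZ,
          Matrix.mul_assoc]
      · calc Aᵀ * (H * Z * Hᵀ) * A = (Aᵀ * H * Z) * (Hᵀ * A) := by
              simp only [Matrix.mul_assoc]
          _ = Z * (Aᵀ * H)ᵀ := by rw [hMZ, Matrix.transpose_mul, Matrix.transpose_transpose]
          _ = Z := hZM
  · intro hrank W₁ W₂ h₁ h₂ hW₁ hW₂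
    have hrankT : (Aᵀ).rank = n := by rw [Matrix.rank_transpose]; exact hrank
    have hinj : Function.Injective (Aᵀ).mulVecLin := by
      rw [← LinearMap.ker_eq_bot]
      have hfr := (Aᵀ).mulVecLin.finrank_range_add_finrank_ker
      rw [Module.finrank_fin_fun] at hfr
      have : Module.finrank ℝ (LinearMap.ker (Aᵀ).mulVecLin) = 0 := by
        have : Matrix.rank Aᵀ = Module.finrank ℝ (LinearMap.range (Aᵀ).mulVecLin) := rfl
        omega
      exact Submodule.finrank_eq_zero.mp this
    have cancel : ∀ {m : ℕ} (M N : Matrix (Fin n) (Fin m) ℝ), Aᵀ * M = Aᵀ * N → M = N := by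
      intro m M N hMN
      apply mulVec_ext'
      intro v
      apply hinj
      simp only [mulVecLin_apply, mulVec_mulVec, hMN]
    have hWA : W₁ * A = W₂ * A := by
      apply cancel
      rw [← Matrix.mul_assoc, ← Matrix.mul_assoc, hW₁, hW₂]
    have : Aᵀ * W₁ᵀ = Aᵀ * W₂ᵀ := by
      have := congrArg Matrix.transpose hWA
      simpa [Matrix.transpose_mul] using this
    rw [h₁, h₂] at this
    exact cancel W₁ W₂ this
end

section
/- Let F = {x : G^T x ≤ g, H^T x = h} be nonempty, let d̂ ∈ F_∞ (i.e., G^T d̂ ≤ 0, H^T d̂ = 0), let x̂ ∈ F, and let P ∈ ℝ^{n×t} be a matrix whose columns d^1,…,d^t all lie in F_∞ (so G^T P ≤ 0 and H^T P = 0). Then for any componentwise nonnegative symmetric K̂ ∈ N^t, the pair (d̂, D̂) with D̂ = x̂ d̂^T + d̂ x̂^T + P K̂ P^T satisfies: G^T d̂ ≤ 0, H^T d̂ = 0, H^T D̂ − h d̂^T = 0, and G^T D̂ G − G^T d̂ g^T − g d̂^T G ≥ 0; that is, (d̂, D̂) is a recession direction of the RLT feasible region 𝓕. -/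
open Matrix

lemma mul_vvm {l n m : ℕ} (M : Matrix (Fin l) (Fin n) ℝ) (a : Fin n → ℝ) (b : Fin m → ℝ) :
    M * vecMulVec a b = vecMulVec (M.mulVec a) b := by
  ext i j
  simp [Matrix.mul_apply, vecMulVec_apply, Matrix.mulVec, dotProduct, Finset.sum_mul,
    mul_assoc]

lemma vvm_mul {l n m : ℕ} (M : Matrix (Fin n) (Fin m) ℝ) (a : Fin l → ℝ) (b : Fin n → ℝ) :
    vecMulVec a b * M = vecMulVec a (Mᵀ.mulVec b) := by
  ext i j
  simp [Matrix.mul_apply, vecMulVec_apply, Matrix.mulVec, dotProduct, Finset.mul_sum,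
    mul_comm, mul_left_comm]

/-- From `d̂ ∈ F_∞`, `x̂ ∈ F`, columns of `P` in `F_∞`, and `K̂ ∈ 𝒩^t`, the pair
`(d̂, D̂)` with `D̂ = x̂ d̂ᵀ + d̂ x̂ᵀ + P K̂ Pᵀ` is a recession direction of `𝓕`. -/
theorem stmt_4 {n m p t : ℕ} (G : Matrix (Fin n) (Fin m) ℝ) (H : Matrix (Fin n) (Fin p) ℝ)
    (g : Fin m → ℝ) (h : Fin p → ℝ)
    (F : Set (Fin n → ℝ)) (hF : F = {x | Gᵀ.mulVec x ≤ g ∧ Hᵀ.mulVec x = h})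
    (hne : F.Nonempty)
    (d : Fin n → ℝ) (hd1 : Gᵀ.mulVec d ≤ 0) (hd2 : Hᵀ.mulVec d = 0)
    (x : Fin n → ℝ) (hx : x ∈ F)
    (P : Matrix (Fin n) (Fin t) ℝ)
    (hP : ∀ j : Fin t, Gᵀ.mulVec (fun i => P i j) ≤ 0 ∧ Hᵀ.mulVec (fun i => P i j) = 0)
    (K : Matrix (Fin t) (Fin t) ℝ) (hKsymm : K.IsSymm) (hKnn : ∀ i j, 0 ≤ K i j)
    (D : Matrix (Fin n) (Fin n) ℝ)
    (hD : D = vecMulVec x d + vecMulVec d x + P * K * Pᵀ) :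
    Gᵀ.mulVec d ≤ 0 ∧ Hᵀ.mulVec d = 0 ∧ Hᵀ * D - vecMulVec h d = 0 ∧
      ∀ i j, 0 ≤ (Gᵀ * D * G - vecMulVec (Gᵀ.mulVec d) g
        - vecMulVec g (Gᵀ.mulVec d)) i j := by
  subst hF
  obtain ⟨hx1, hx2⟩ := hx
  have hHP : Hᵀ * P = 0 := by
    ext i j
    have := congrFun (hP j).2 i
    simpa [Matrix.mulVec, dotProduct, Matrix.mul_apply] using this
  have hGP : ∀ i j, (Gᵀ * P) i j ≤ 0 := by
    intro i j
    have := (hP j).1 i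
    simpa [Matrix.mulVec, dotProduct, Matrix.mul_apply] using this
  refine ⟨hd1, hd2, ?_, ?_⟩
  · have : Hᵀ * D = vecMulVec h d := by
      rw [hD, Matrix.mul_add, Matrix.mul_add, mul_vvm, mul_vvm, hx2, hd2,
        ← Matrix.mul_assoc, ← Matrix.mul_assoc, hHP]
      simp [vecMulVec_apply]
    rw [this]; simp
  · have key : Gᵀ * D * G - vecMulVec (Gᵀ.mulVec d) g - vecMulVec g (Gᵀ.mulVec d)
        = vecMulVec (Gᵀ.mulVec x - g) (Gᵀ.mulVec d)
          + vecMulVec (Gᵀ.mulVec d) (Gᵀ.mulVec x - g)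
          + (Gᵀ * P) * K * (Gᵀ * P)ᵀ := by
      rw [hD]
      have hT : (Gᵀ * P)ᵀ = Pᵀ * G := by simp [Matrix.transpose_mul]
      rw [hT]
      ext i j
      have h1 : (Gᵀ * (vecMulVec x d + vecMulVec d x + P * K * Pᵀ) * G)
          = vecMulVec (Gᵀ.mulVec x) (Gᵀ.mulVec d)
            + vecMulVec (Gᵀ.mulVec d) (Gᵀ.mulVec x)
            + Gᵀ * P * K * (Pᵀ * G) := by
        rw [Matrix.mul_add, Matrix.mul_add, Matrix.add_mul, Matrix.add_mul,
          mul_vvm, mul_vvm, vvm_mul, vvm_mul]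
        simp [Matrix.mul_assoc]
      rw [h1]
      simp [vecMulVec_apply]
      ring
    rw [key]
    intro i j
    simp only [Matrix.add_apply, vecMulVec_apply]
    have t1 : 0 ≤ (Gᵀ.mulVec x - g) i * (Gᵀ.mulVec d) j :=
      mul_nonneg_of_nonpos_of_nonpos (by simpa using sub_nonpos.2 (hx1 i)) (hd1 j)
    have t2 : 0 ≤ (Gᵀ.mulVec d) i * (Gᵀ.mulVec x - g) j :=
      mul_nonneg_of_nonpos_of_nonpos (hd1 i) (by simpa using sub_nonpos.2 (hx1 j))
    have t3 : 0 ≤ ((Gᵀ * P) * K * (Gᵀ * P)ᵀ) i j := by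
      rw [Matrix.mul_apply]
      refine Finset.sum_nonneg fun l _ => ?_
      rw [Matrix.mul_apply, Finset.sum_mul]
      refine Finset.sum_nonneg fun k _ => ?_
      have : 0 ≤ (Gᵀ * P) i k * (Gᵀ * P) j l * K k l := by
        exact mul_nonneg (mul_nonneg_of_nonpos_of_nonpos (hGP i k) (hGP j l)) (hKnn k l)
      simpa [Matrix.transpose_apply, mul_comm, mul_assoc, mul_left_comm] using this
    linarith
end

section
/- Let F = {x : G^T x ≤ g, H^T x = h} be nonempty. Then F is bounded if and only if the RLT feasible region 𝓕 = {(x,X) ∈ ℝ^n × S^n : G^T x ≤ g, H^T x = h, H^T X = h x^T, G^T X G − G^T x g^T − g x^T G + g g^T ≥ 0} is nonempty and bounded. -/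
open Matrix Finset
open scoped InnerProductSpace





private lemma dense_cone_eq_univ {E : Type*} [NormedAddCommGroup E] [InnerProductSpace ℝ E]
    [FiniteDimensional ℝ E] (C : Set E)
    (h0 : (0:E) ∈ C) (hadd : ∀ x ∈ C, ∀ y ∈ C, x + y ∈ C)
    (hsmul : ∀ (c : ℝ), 0 ≤ c → ∀ x ∈ C, c • x ∈ C)
    (hd : closure C = Set.univ) : C = Set.univ := by
  -- the span of C is everything
  have hspanC : Submodule.span ℝ C = ⊤ := by
    have h1 : closure C ⊆ (Submodule.span ℝ C : Set E) :=
      closure_minimal Submodule.subset_span (Submodule.span ℝ C).closed_of_finiteDimensional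
    rw [hd] at h1
    exact Submodule.eq_top_iff'.mpr fun x => h1 (Set.mem_univ x)
  obtain ⟨s, hsC, hspan, hli⟩ := exists_linearIndependent ℝ C
  rw [hspanC] at hspan
  have hsfin : s.Finite := hli.setFinite
  haveI : Fintype s := hsfin.fintype
  -- basis from s
  let B : Module.Basis s ℝ E := Module.Basis.mk hli (by rw [Subtype.range_coe, hspan])
  have hBmem : ∀ i : s, (B i) ∈ C := by
    intro i; rw [Module.Basis.mk_apply]; exact hsC i.2
  -- the open positive orthant maps into C
  let φ : (s → ℝ) ≃L[ℝ] E := B.equivFun.symm.toContinuousLinearEquiv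
  have hφ : ∀ t : s → ℝ, φ t = ∑ i, t i • B i := fun t => B.equivFun_symm_apply t
  let U : Set (s → ℝ) := {t | ∀ i, 0 < t i}
  have hUopen : IsOpen U := by
    have : U = ⋂ i, (fun t : s → ℝ => t i) ⁻¹' Set.Ioi 0 := by
      ext t; simp [U, Set.mem_iInter]
    rw [this]
    exact isOpen_iInter_of_finite fun i => (isOpen_Ioi).preimage (continuous_apply i)
  have hUsub : φ '' U ⊆ C := by
    rintro _ ⟨t, ht, rfl⟩
    rw [hφ]
    refine Finset.sum_induction _ (· ∈ C) (fun a b ha hb => hadd a ha b hb) h0 ?_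
    intro i _
    exact hsmul (t i) (le_of_lt (ht i)) _ (hBmem i)
  have hopen : IsOpen (φ '' U) := φ.toHomeomorph.isOpenMap U hUopen
  have hmem : φ (fun _ => 1) ∈ φ '' U := ⟨_, fun i => one_pos, rfl⟩
  obtain ⟨ε, hε, hball⟩ := Metric.isOpen_iff.mp hopen _ hmem
  set x₀ := φ (fun _ => 1)
  -- conclude
  ext w; simp only [Set.mem_univ, iff_true]
  have : w - x₀ ∈ closure C := hd ▸ Set.mem_univ _
  obtain ⟨c, hcC, hcd⟩ := Metric.mem_closure_iff.mp this ε hε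
  have hwc : w - c ∈ Metric.ball x₀ ε := by
    rw [Metric.mem_ball]
    have : dist (w - c) x₀ = dist (w - x₀) c := by
      rw [dist_eq_norm, dist_eq_norm]
      congr 1; abel
    rw [this]; exact hcd
  have : w - c ∈ C := hUsub (hball hwc)
  have := hadd c hcC (w - c) this
  simpa using this

private lemma farkas_euclid {n : ℕ} {ι : Type*} [Fintype ι] [DecidableEq ι]
    (a : ι → EuclideanSpace ℝ (Fin n))
    (hy : ∀ y : EuclideanSpace ℝ (Fin n), (∀ j, 0 ≤ ⟪a j, y⟫_ℝ) → y = 0)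
    (w : EuclideanSpace ℝ (Fin n)) :
    ∃ u : ι → ℝ, (∀ j, 0 ≤ u j) ∧ ∑ j, u j • a j = w := by
  set C : Set (EuclideanSpace ℝ (Fin n)) :=
    {x | ∃ u : ι → ℝ, (∀ j, 0 ≤ u j) ∧ ∑ j, u j • a j = x} with hC
  have h0 : (0 : EuclideanSpace ℝ (Fin n)) ∈ C := ⟨0, fun j => le_refl 0, by simp⟩
  have hadd : ∀ x ∈ C, ∀ y ∈ C, x + y ∈ C := by
    rintro x ⟨u, hu, rfl⟩ y ⟨v, hv, rfl⟩
    exact ⟨u + v, fun j => add_nonneg (hu j) (hv j), by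
      simp [add_smul, Finset.sum_add_distrib]⟩
  have hsmul : ∀ (c : ℝ), 0 ≤ c → ∀ x ∈ C, c • x ∈ C := by
    rintro c hc x ⟨u, hu, rfl⟩
    exact ⟨c • u, fun j => mul_nonneg hc (hu j), by
      simp [Finset.smul_sum, smul_smul]⟩
  have hgen : ∀ j, a j ∈ C := by
    intro j
    refine ⟨fun j' => if j' = j then 1 else 0, fun j' => by positivity, ?_⟩
    simp [ite_smul]
  -- C is dense
  have hd : closure C = Set.univ := by
    by_contra hne
    obtain ⟨b, hb⟩ : ∃ b, b ∉ closure C := by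
      by_contra hb; push_neg at hb
      exact hne (Set.eq_univ_of_forall hb)
    -- closure C as a convex cone
    let K : PointedCone ℝ (EuclideanSpace ℝ (Fin n)) :=
      { carrier := C
        zero_mem' := h0
        smul_mem' := fun c x hx => hsmul c c.2 x hx
        add_mem' := fun {x y} hx hy => hadd x hx y hy }
    let KP : ProperCone ℝ (EuclideanSpace ℝ (Fin n)) :=
      { toSubmodule := K.closure, isClosed' := isClosed_closure }
    obtain ⟨y, hy1, hy2⟩ :=
      ProperCone.hyperplane_separation' KP (x₀ := b) (by exact hb)
    have : y = 0 := hy y fun j => hy1 (a j) (subset_closure (hgen j))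
    rw [this] at hy2
    simp at hy2
  have := dense_cone_eq_univ C h0 hadd hsmul hd
  have : w ∈ C := this ▸ Set.mem_univ w
  exact this

private lemma farkas_pi {n : ℕ} {ι : Type*} [Fintype ι] [DecidableEq ι]
    (a : ι → (Fin n → ℝ))
    (hy : ∀ y : Fin n → ℝ, (∀ j, 0 ≤ ∑ i, a j i * y i) → y = 0)
    (w : Fin n → ℝ) :
    ∃ u : ι → ℝ, (∀ j, 0 ≤ u j) ∧ ∑ j, u j • a j = w := by
  have := farkas_euclid (n := n) (ι := ι)
    (fun j => (WithLp.equiv 2 (Fin n → ℝ)).symm (a j))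
    (fun y hin => by
      have hz := hy ((WithLp.equiv 2 (Fin n → ℝ)) y) (fun j => by
        have := hin j
        simpa [PiLp.inner_apply, RCLike.inner_apply, WithLp.equiv, mul_comm] using this)
      have : y = (WithLp.equiv 2 (Fin n → ℝ)).symm 0 := by
        rw [← hz]; rfl
      simpa using this)
    ((WithLp.equiv 2 (Fin n → ℝ)).symm w)
  obtain ⟨u, hu, hsum⟩ := this
  refine ⟨u, hu, ?_⟩
  have := congrArg (WithLp.equiv 2 (Fin n → ℝ)) hsum
  simpa [WithLp.equiv] using this

private lemma decomp {n m p : ℕ} (G : Matrix (Fin n) (Fin m) ℝ) (H : Matrix (Fin n) (Fin p) ℝ)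
    (hrec : ∀ d : Fin n → ℝ, Gᵀ.mulVec d ≤ 0 → Hᵀ.mulVec d = 0 → d = 0) (w : Fin n → ℝ) :
    ∃ (a : Fin m → ℝ) (b : Fin p → ℝ), (∀ j, a j ≤ 0) ∧ G.mulVec a + H.mulVec b = w := by
  obtain ⟨u, hu, hsum⟩ := farkas_pi
    (ι := (Fin m) ⊕ ((Fin p) ⊕ (Fin p)))
    (Sum.elim (fun j i => -G i j) (Sum.elim (fun j i => H i j) (fun j i => -H i j)))
    (by
      intro y hj
      apply hrec
      · intro j
        have := hj (Sum.inl j)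
        simp only [Sum.elim_inl, neg_mul, Finset.sum_neg_distrib] at this
        simp only [Matrix.mulVec, dotProduct, Matrix.transpose_apply, Pi.zero_apply]
        linarith [this]
      · funext j
        have h1 := hj (Sum.inr (Sum.inl j))
        have h2 := hj (Sum.inr (Sum.inr j))
        simp only [Sum.elim_inl, Sum.elim_inr, neg_mul, Finset.sum_neg_distrib] at h1 h2
        simp only [Matrix.mulVec, dotProduct, Matrix.transpose_apply, Pi.zero_apply]
        linarith [h1, h2])
    w
  refine ⟨fun j => -u (Sum.inl j), fun j => u (Sum.inr (Sum.inl j)) - u (Sum.inr (Sum.inr j)),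
    fun j => by simpa using hu (Sum.inl j), ?_⟩
  rw [← hsum]
  funext i
  simp only [Pi.add_apply, Matrix.mulVec, dotProduct, Finset.sum_apply, Pi.smul_apply,
    Fintype.sum_sum_type, Sum.elim_inl, Sum.elim_inr, smul_eq_mul]
  simp only [mul_sub, mul_neg, neg_mul, Finset.sum_sub_distrib, Finset.sum_neg_distrib]
  ring_nf
  simp [mul_comm]




private lemma dot1 {k n : ℕ} (A : Matrix (Fin n) (Fin k) ℝ) (v : Fin k → ℝ) (z : Fin n → ℝ) :
    (A.mulVec v) ⬝ᵥ z = v ⬝ᵥ (Aᵀ.mulVec z) := by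
  rw [dotProduct_comm, dotProduct_mulVec, ← Matrix.mulVec_transpose,
    dotProduct_comm]

private lemma dot2 {k l : ℕ} (u : Fin k → ℝ) (v : Fin k → ℝ) (w : Fin l → ℝ) (z : Fin l → ℝ) :
    u ⬝ᵥ (vecMulVec v w).mulVec z = (u ⬝ᵥ v) * (w ⬝ᵥ z) := by
  simp only [dotProduct, Matrix.mulVec, Matrix.vecMulVec_apply, Finset.mul_sum,
    Finset.sum_mul]
  rw [Finset.sum_comm]
  exact Finset.sum_congr rfl fun i _ => Finset.sum_congr rfl fun j _ => by ring

private lemma mul_vecMulVec {k l n : ℕ} (A : Matrix (Fin n) (Fin k) ℝ) (v : Fin k → ℝ)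
    (w : Fin l → ℝ) : A * vecMulVec v w = vecMulVec (A.mulVec v) w := by
  ext i j
  simp only [Matrix.mul_apply, Matrix.vecMulVec_apply, Matrix.mulVec, dotProduct,
    Finset.sum_mul]
  exact Finset.sum_congr rfl fun l _ => by ring

private lemma vecMulVec_mul {k l n : ℕ} (v : Fin k → ℝ) (w : Fin n → ℝ)
    (A : Matrix (Fin n) (Fin l) ℝ) : vecMulVec v w * A = vecMulVec v (Aᵀ.mulVec w) := by
  ext i j
  simp only [Matrix.mul_apply, Matrix.vecMulVec_apply, Matrix.mulVec, dotProduct,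
    Matrix.transpose_apply, Finset.mul_sum]
  exact Finset.sum_congr rfl fun l _ => by ring

private lemma abs_dot_le {k : ℕ} (v x : Fin k → ℝ) (M : ℝ) (hx : ∀ i, |x i| ≤ M) :
    |v ⬝ᵥ x| ≤ (∑ i, |v i|) * M := by
  calc |v ⬝ᵥ x| ≤ ∑ i, |v i * x i| := Finset.abs_sum_le_sum_abs _ _
    _ ≤ ∑ i, |v i| * M := by
        refine Finset.sum_le_sum fun i _ => ?_
        rw [abs_mul]
        exact mul_le_mul_of_nonneg_left (hx i) (abs_nonneg _)
    _ = (∑ i, |v i|) * M := by rw [Finset.sum_mul]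

/-- the explicit bound -/
private def bnd {n m p : ℕ} (G : Matrix (Fin n) (Fin m) ℝ) (H : Matrix (Fin n) (Fin p) ℝ)
    (g : Fin m → ℝ) (h : Fin p → ℝ) (M : ℝ)
    (a : Fin m → ℝ) (b : Fin p → ℝ) (a' : Fin m → ℝ) (b' : Fin p → ℝ) : ℝ :=
  (∑ i, |(G.mulVec a) i|) * M * |g ⬝ᵥ a'| + (∑ i, |(G.mulVec a) i|) * M * |h ⬝ᵥ b'|
    + (∑ i, |(G.mulVec a') i|) * M * |a ⬝ᵥ g| + (∑ i, |(G.mulVec a') i|) * M * |b ⬝ᵥ h|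
    + |a ⬝ᵥ g| * |g ⬝ᵥ a'| + |b ⬝ᵥ h| * |h ⬝ᵥ b'|

private lemma bnd_nonneg {n m p : ℕ} (G : Matrix (Fin n) (Fin m) ℝ) (H : Matrix (Fin n) (Fin p) ℝ)
    (g : Fin m → ℝ) (h : Fin p → ℝ) (M : ℝ) (hM : 0 ≤ M)
    (a : Fin m → ℝ) (b : Fin p → ℝ) (a' : Fin m → ℝ) (b' : Fin p → ℝ) :
    0 ≤ bnd G H g h M a b a' b' := by
  unfold bnd
  have h1 : (0:ℝ) ≤ ∑ i, |(G.mulVec a) i| := Finset.sum_nonneg fun i _ => abs_nonneg _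
  have h2 : (0:ℝ) ≤ ∑ i, |(G.mulVec a') i| := Finset.sum_nonneg fun i _ => abs_nonneg _
  positivity

private lemma key_bound {n m p : ℕ} (G : Matrix (Fin n) (Fin m) ℝ) (H : Matrix (Fin n) (Fin p) ℝ)
    (g : Fin m → ℝ) (h : Fin p → ℝ) (x : Fin n → ℝ) (X : Matrix (Fin n) (Fin n) ℝ)
    (hsym : X.IsSymm) (hx2 : Hᵀ.mulVec x = h)
    (hXH : Hᵀ * X = vecMulVec h x)
    (hQ : ∀ i j, 0 ≤ (Gᵀ * X * G - vecMulVec (Gᵀ.mulVec x) g - vecMulVec g (Gᵀ.mulVec x)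
      + vecMulVec g g) i j)
    (M : ℝ) (hMx : ∀ i, |x i| ≤ M)
    (a : Fin m → ℝ) (b : Fin p → ℝ) (a' : Fin m → ℝ) (b' : Fin p → ℝ)
    (ha : ∀ j, a j ≤ 0) (ha' : ∀ j, a' j ≤ 0) :
    -(bnd G H g h M a b a' b')
      ≤ (G.mulVec a + H.mulVec b) ⬝ᵥ X.mulVec (G.mulVec a' + H.mulVec b') := by
  set P := Gᵀ.mulVec x with hP
  set Q := Gᵀ * X * G - vecMulVec P g - vecMulVec g P + vecMulVec g g with hQdef
  -- transposes
  have hXs : Xᵀ = X := hsym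
  have eXH : X * H = vecMulVec x h := by
    have h1 := congrArg Matrix.transpose hXH
    rw [Matrix.transpose_mul, Matrix.transpose_transpose, hXs] at h1
    rw [h1]
    ext i j
    simp [Matrix.vecMulVec_apply, mul_comm]
  -- matrix identities
  have eGXH : Gᵀ * (X * H) = vecMulVec P h := by rw [eXH, mul_vecMulVec, hP]
  have eHXG : (Hᵀ * X) * G = vecMulVec h P := by rw [hXH, vecMulVec_mul, hP]
  have eHXH : (Hᵀ * X) * H = vecMulVec h h := by rw [hXH, vecMulVec_mul, hx2]
  have eGXG : Gᵀ * X * G = Q + (vecMulVec P g + vecMulVec g P - vecMulVec g g) := by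
    rw [hQdef]; abel
  -- expansion
  have expand : (G.mulVec a + H.mulVec b) ⬝ᵥ X.mulVec (G.mulVec a' + H.mulVec b')
      = a ⬝ᵥ (Gᵀ * X * G).mulVec a' + a ⬝ᵥ (Gᵀ * (X * H)).mulVec b'
        + b ⬝ᵥ ((Hᵀ * X) * G).mulVec a' + b ⬝ᵥ ((Hᵀ * X) * H).mulVec b' := by
    rw [Matrix.mulVec_add, dotProduct_add, add_dotProduct, add_dotProduct,
      dot1, dot1, dot1, dot1]
    simp only [Matrix.mulVec_mulVec, Matrix.mul_assoc]
    ring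
  rw [expand, eGXH, eHXG, eHXH, eGXG]
  simp only [Matrix.add_mulVec, Matrix.sub_mulVec, dotProduct_add,
    dotProduct_sub, dot2]
  -- nonnegative part
  have hQpos : 0 ≤ a ⬝ᵥ Q.mulVec a' := by
    rw [dotProduct]
    apply Finset.sum_nonneg
    intro i _
    have hin : (Q.mulVec a') i ≤ 0 := by
      rw [Matrix.mulVec, dotProduct]
      apply Finset.sum_nonpos
      intro j _
      exact mul_nonpos_of_nonneg_of_nonpos (hQ i j) (ha' j)
    have := mul_nonneg (neg_nonneg.2 (ha i)) (neg_nonneg.2 hin)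
    rwa [neg_mul_neg] at this
  -- rewrite dot products with x
  have haP : a ⬝ᵥ P = (G.mulVec a) ⬝ᵥ x := (dot1 G a x).symm
  have hPa' : P ⬝ᵥ a' = (G.mulVec a') ⬝ᵥ x := by
    rw [dotProduct_comm, ← dot1]
  have hb1 : |(G.mulVec a) ⬝ᵥ x| ≤ (∑ i, |(G.mulVec a) i|) * M := abs_dot_le _ _ M hMx
  have hb2 : |(G.mulVec a') ⬝ᵥ x| ≤ (∑ i, |(G.mulVec a') i|) * M := abs_dot_le _ _ M hMx
  rw [haP, hPa']
  unfold bnd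
  set T1 := (G.mulVec a) ⬝ᵥ x
  set T2 := (G.mulVec a') ⬝ᵥ x
  set S1 := ∑ i, |(G.mulVec a) i|
  set S2 := ∑ i, |(G.mulVec a') i|
  have e1 : -(S1 * M * |g ⬝ᵥ a'|) ≤ T1 * (g ⬝ᵥ a') := by
    have : |T1 * (g ⬝ᵥ a')| ≤ S1 * M * |g ⬝ᵥ a'| := by
      rw [abs_mul]; exact mul_le_mul_of_nonneg_right hb1 (abs_nonneg _)
    linarith [neg_abs_le (T1 * (g ⬝ᵥ a'))]
  have e2 : -(S1 * M * |h ⬝ᵥ b'|) ≤ T1 * (h ⬝ᵥ b') := by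
    have : |T1 * (h ⬝ᵥ b')| ≤ S1 * M * |h ⬝ᵥ b'| := by
      rw [abs_mul]; exact mul_le_mul_of_nonneg_right hb1 (abs_nonneg _)
    linarith [neg_abs_le (T1 * (h ⬝ᵥ b'))]
  have e3 : -(S2 * M * |a ⬝ᵥ g|) ≤ (a ⬝ᵥ g) * T2 := by
    have : |(a ⬝ᵥ g) * T2| ≤ S2 * M * |a ⬝ᵥ g| := by
      rw [abs_mul, mul_comm]
      exact mul_le_mul_of_nonneg_right hb2 (abs_nonneg _)
    linarith [neg_abs_le ((a ⬝ᵥ g) * T2)]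
  have e4 : -(S2 * M * |b ⬝ᵥ h|) ≤ (b ⬝ᵥ h) * T2 := by
    have : |(b ⬝ᵥ h) * T2| ≤ S2 * M * |b ⬝ᵥ h| := by
      rw [abs_mul, mul_comm]
      exact mul_le_mul_of_nonneg_right hb2 (abs_nonneg _)
    linarith [neg_abs_le ((b ⬝ᵥ h) * T2)]
  have e5 : (a ⬝ᵥ g) * (g ⬝ᵥ a') ≤ |a ⬝ᵥ g| * |g ⬝ᵥ a'| := by
    rw [← abs_mul]; exact le_abs_self _
  have e6 : -(|b ⬝ᵥ h| * |h ⬝ᵥ b'|) ≤ (b ⬝ᵥ h) * (h ⬝ᵥ b') := by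
    rw [← abs_mul]; exact neg_abs_le _
  linarith

private lemma mem_cF_of_mem_F {n m p : ℕ} (G : Matrix (Fin n) (Fin m) ℝ)
    (H : Matrix (Fin n) (Fin p) ℝ) (g : Fin m → ℝ) (h : Fin p → ℝ) (x : Fin n → ℝ)
    (hx1 : Gᵀ.mulVec x ≤ g) (hx2 : Hᵀ.mulVec x = h) :
    (vecMulVec x x).IsSymm ∧ Gᵀ.mulVec x ≤ g ∧ Hᵀ.mulVec x = h ∧
      Hᵀ * (vecMulVec x x) = vecMulVec h x ∧
      ∀ i j, 0 ≤ (Gᵀ * (vecMulVec x x) * G - vecMulVec (Gᵀ.mulVec x) g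
        - vecMulVec g (Gᵀ.mulVec x) + vecMulVec g g) i j := by
  refine ⟨?_, hx1, hx2, ?_, ?_⟩
  · show (vecMulVec x x)ᵀ = vecMulVec x x
    ext i j
    simp [Matrix.vecMulVec_apply, mul_comm]
  · rw [mul_vecMulVec, hx2]
  · intro i j
    have e : (Gᵀ * (vecMulVec x x) * G - vecMulVec (Gᵀ.mulVec x) g
        - vecMulVec g (Gᵀ.mulVec x) + vecMulVec g g) i j
        = (g i - (Gᵀ.mulVec x) i) * (g j - (Gᵀ.mulVec x) j) := by
      rw [mul_vecMulVec, vecMulVec_mul]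
      simp only [Matrix.sub_apply, Matrix.add_apply, Matrix.vecMulVec_apply]
      ring
    rw [e]
    exact mul_nonneg (sub_nonneg.2 (hx1 i)) (sub_nonneg.2 (hx1 j))

/-- A nonempty `F` is bounded iff the RLT feasible region `𝓕` is nonempty and bounded
(boundedness of `𝓕` expressed entrywise). -/
theorem stmt_5 {n m p : ℕ} (G : Matrix (Fin n) (Fin m) ℝ) (H : Matrix (Fin n) (Fin p) ℝ)
    (g : Fin m → ℝ) (h : Fin p → ℝ)
    (F : Set (Fin n → ℝ)) (hF : F = {x | Gᵀ.mulVec x ≤ g ∧ Hᵀ.mulVec x = h})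
    (hne : F.Nonempty)
    (cF : Set ((Fin n → ℝ) × Matrix (Fin n) (Fin n) ℝ))
    (hcF : cF = {s | s.2.IsSymm ∧ Gᵀ.mulVec s.1 ≤ g ∧ Hᵀ.mulVec s.1 = h ∧
      Hᵀ * s.2 = vecMulVec h s.1 ∧
      ∀ i j, 0 ≤ (Gᵀ * s.2 * G - vecMulVec (Gᵀ.mulVec s.1) g
        - vecMulVec g (Gᵀ.mulVec s.1) + vecMulVec g g) i j}) :
    Bornology.IsBounded F ↔
      (cF.Nonempty ∧ ∃ R : ℝ, ∀ s ∈ cF, (∀ i, |s.1 i| ≤ R) ∧ ∀ i j, |s.2 i j| ≤ R) := by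
  subst hF; subst hcF
  obtain ⟨x₀, hx₀⟩ := hne
  constructor
  · -- forward direction
    intro hb
    obtain ⟨M₀, hM₀⟩ := isBounded_iff_forall_norm_le.mp hb
    set M := max M₀ 0 with hMdef
    have hM0 : (0:ℝ) ≤ M := le_max_right _ _
    have hMx : ∀ x : Fin n → ℝ, Gᵀ.mulVec x ≤ g → Hᵀ.mulVec x = h → ∀ i, |x i| ≤ M := by
      intro x h1 h2 i
      calc |x i| = ‖x i‖ := (Real.norm_eq_abs _).symm
        _ ≤ ‖x‖ := norm_le_pi_norm x i
        _ ≤ M₀ := hM₀ x ⟨h1, h2⟩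
        _ ≤ M := le_max_left _ _
    -- recession cone is trivial
    have hrec : ∀ d : Fin n → ℝ, Gᵀ.mulVec d ≤ 0 → Hᵀ.mulVec d = 0 → d = 0 := by
      intro d hd1 hd2
      by_contra hd
      obtain ⟨i, hi⟩ : ∃ i, d i ≠ 0 := by
        by_contra hcon; push_neg at hcon
        exact hd (funext hcon)
      have habs : 0 < |d i| := abs_pos.mpr hi
      set t := (M + |x₀ i| + 1) / |d i| with ht
      have ht0 : 0 ≤ t := by positivity
      have hmem : Gᵀ.mulVec (x₀ + t • d) ≤ g ∧ Hᵀ.mulVec (x₀ + t • d) = h := by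
        constructor
        · intro j
          have : (Gᵀ.mulVec (x₀ + t • d)) j = (Gᵀ.mulVec x₀) j + t * (Gᵀ.mulVec d) j := by
            rw [Matrix.mulVec_add, Matrix.mulVec_smul]
            simp
          rw [this]
          have h1 : t * (Gᵀ.mulVec d) j ≤ 0 :=
            mul_nonpos_of_nonneg_of_nonpos ht0 (hd1 j)
          have h2 : (Gᵀ.mulVec x₀) j ≤ g j := hx₀.1 j
          linarith
        · rw [Matrix.mulVec_add, Matrix.mulVec_smul, hd2, hx₀.2]
          simp
      have hlem := hMx _ hmem.1 hmem.2 i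
      have : |x₀ i + t * d i| = |(x₀ + t • d) i| := by simp
      have habs2 : t * |d i| = M + |x₀ i| + 1 := by
        rw [ht, div_mul_cancel₀ _ habs.ne']
      have : M + 1 ≤ |x₀ i + t * d i| := by
        have h3 : |t * d i| - |x₀ i| ≤ |x₀ i + t * d i| := by
          have h4 := abs_sub_abs_le_abs_sub (t * d i) (-(x₀ i))
          simp only [abs_neg, sub_neg_eq_add] at h4
          rw [add_comm (t * d i) (x₀ i)] at h4
          linarith
        have h5 : |t * d i| = t * |d i| := by
          rw [abs_mul, abs_of_nonneg ht0]
        linarith [h3, h5.symm ▸ habs2]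
      have hle : |x₀ i + t * d i| ≤ M := by
        have := hlem
        simpa using this
      linarith
    -- decompositions of ±eᵢ
    choose aP bP haP hwP using fun i : Fin n => decomp G H hrec (Pi.single i 1)
    choose aN bN haN hwN using fun i : Fin n => decomp G H hrec (-Pi.single i 1)
    set B : Fin n × Fin n → ℝ := fun q =>
      bnd G H g h M (aP q.1) (bP q.1) (aP q.2) (bP q.2)
        + bnd G H g h M (aN q.1) (bN q.1) (aP q.2) (bP q.2) with hBdef
    have hBnn : ∀ q, 0 ≤ B q := fun q =>
      add_nonneg (bnd_nonneg G H g h M hM0 _ _ _ _) (bnd_nonneg G H g h M hM0 _ _ _ _)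
    set R := M + ∑ q : Fin n × Fin n, B q with hRdef
    have hsumnn : 0 ≤ ∑ q : Fin n × Fin n, B q := Finset.sum_nonneg fun q _ => hBnn q
    constructor
    · exact ⟨(x₀, vecMulVec x₀ x₀), mem_cF_of_mem_F G H g h x₀ hx₀.1 hx₀.2⟩
    refine ⟨R, ?_⟩
    rintro ⟨x, X⟩ ⟨hsym, hx1, hx2, hXH, hQ⟩
    have hxM : ∀ i, |x i| ≤ M := hMx x hx1 hx2
    constructor
    · intro i
      calc |x i| ≤ M := hxM i
        _ ≤ R := by rw [hRdef]; linarith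
    · intro i j
      have hlow := key_bound G H g h x X hsym hx2 hXH hQ M hxM
        (aP i) (bP i) (aP j) (bP j) (haP i) (haP j)
      have hup := key_bound G H g h x X hsym hx2 hXH hQ M hxM
        (aN i) (bN i) (aP j) (bP j) (haN i) (haP j)
      rw [hwP i, hwP j] at hlow
      rw [hwN i, hwP j] at hup
      have e1 : (Pi.single i (1:ℝ)) ⬝ᵥ X.mulVec (Pi.single j 1) = X i j := by
        rw [Matrix.mulVec_single, single_dotProduct]
        simp
      have e2 : (-Pi.single i (1:ℝ)) ⬝ᵥ X.mulVec (Pi.single j 1) = -(X i j) := by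
        rw [neg_dotProduct, e1]
      rw [e1] at hlow
      rw [e2] at hup
      have hBij : B (i, j) ≤ ∑ q : Fin n × Fin n, B q :=
        Finset.single_le_sum (fun q _ => hBnn q) (Finset.mem_univ (i, j))
      have hBsplit : B (i, j) = bnd G H g h M (aP i) (bP i) (aP j) (bP j)
          + bnd G H g h M (aN i) (bN i) (aP j) (bP j) := rfl
      rw [abs_le]
      constructor
      · rw [hRdef]
        have h1 : bnd G H g h M (aN i) (bN i) (aP j) (bP j) ≥ 0 :=
          bnd_nonneg G H g h M hM0 _ _ _ _
        nlinarith [hBij, hBsplit, hlow]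
      · rw [hRdef]
        have h1 : bnd G H g h M (aP i) (bP i) (aP j) (bP j) ≥ 0 :=
          bnd_nonneg G H g h M hM0 _ _ _ _
        nlinarith [hBij, hBsplit, hup]
  · -- reverse direction
    rintro ⟨-, R, hR⟩
    rw [isBounded_iff_forall_norm_le]
    refine ⟨max R 0, ?_⟩
    rintro x ⟨hx1, hx2⟩
    have hmem := mem_cF_of_mem_F G H g h x hx1 hx2
    have hb := (hR (x, vecMulVec x x) hmem).1
    rw [pi_norm_le_iff_of_nonneg (le_max_right R 0)]
    intro i
    rw [Real.norm_eq_abs]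
    exact le_trans (hb i) (le_max_left _ _)
end

section
/- Suppose F = {x : G^T x ≤ g, H^T x = h} is nonempty and F contains a line (equivalently, there is a nonzero d with G^T d ≤ 0, −G^T d ≤ 0, H^T d = 0). Then the RLT feasible region 𝓕 contains a line; in particular 𝓕 has no vertices. -/
open Matrix

lemma aux_mul_vecMulVec {k n m : Type*} [Fintype n] (A : Matrix k n ℝ) (a : n → ℝ) (b : m → ℝ) :
    A * vecMulVec a b = vecMulVec (A.mulVec a) b := by
  ext i j
  simp [Matrix.mul_apply, vecMulVec_apply, mulVec, dotProduct, Finset.sum_mul, mul_assoc]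

lemma aux_vecMulVec_mul {k n m : Type*} [Fintype n] (a : k → ℝ) (b : n → ℝ) (B : Matrix n m ℝ) :
    vecMulVec a b * B = vecMulVec a (Bᵀ.mulVec b) := by
  ext i j
  simp [Matrix.mul_apply, vecMulVec_apply, mulVec, dotProduct, Finset.mul_sum, transpose_apply]
  congr 1; ext k; ring

lemma aux_vecMulVec_transpose {k m : Type*} (a : k → ℝ) (b : m → ℝ) :
    (vecMulVec a b)ᵀ = vecMulVec b a := by
  ext i j; simp [vecMulVec_apply, mul_comm]

lemma aux_vecMulVec_zero_left {k m : Type*} (b : m → ℝ) :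
    vecMulVec (0 : k → ℝ) b = 0 := by ext i j; simp [vecMulVec_apply]

lemma aux_vecMulVec_smul_right {k m : Type*} (a : k → ℝ) (t : ℝ) (b : m → ℝ) :
    vecMulVec a (t • b) = t • vecMulVec a b := by
  ext i j; simp [vecMulVec_apply]; ring

lemma aux_vecMulVec_add_right {k m : Type*} (a : k → ℝ) (b c : m → ℝ) :
    vecMulVec a (b + c) = vecMulVec a b + vecMulVec a c := by
  ext i j; simp [vecMulVec_apply]; ring

/-- A vertex of a convex set `C` is a point `z ∈ C` such that `z + d ∈ C` and
`z - d ∈ C` imply `d = 0`. -/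
def IsVertexPt {E : Type*} [AddGroup E] (C : Set E) (z : E) : Prop :=
  z ∈ C ∧ ∀ d, z + d ∈ C → z - d ∈ C → d = 0

/-- If the nonempty polyhedron `F` contains a line, then the RLT feasible region `𝓕`
contains a line; in particular `𝓕` has no vertices. -/
theorem stmt_6 {n m p : ℕ} (G : Matrix (Fin n) (Fin m) ℝ) (H : Matrix (Fin n) (Fin p) ℝ)
    (g : Fin m → ℝ) (h : Fin p → ℝ)
    (F : Set (Fin n → ℝ)) (hF : F = {x | Gᵀ.mulVec x ≤ g ∧ Hᵀ.mulVec x = h})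
    (hne : F.Nonempty)
    (d : Fin n → ℝ) (hd0 : d ≠ 0) (hd1 : Gᵀ.mulVec d ≤ 0) (hd1' : Gᵀ.mulVec (-d) ≤ 0)
    (hd2 : Hᵀ.mulVec d = 0)
    (cF : Set ((Fin n → ℝ) × Matrix (Fin n) (Fin n) ℝ))
    (hcF : cF = {s | s.2.IsSymm ∧ Gᵀ.mulVec s.1 ≤ g ∧ Hᵀ.mulVec s.1 = h ∧
      Hᵀ * s.2 = vecMulVec h s.1 ∧
      ∀ i j, 0 ≤ (Gᵀ * s.2 * G - vecMulVec (Gᵀ.mulVec s.1) g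
        - vecMulVec g (Gᵀ.mulVec s.1) + vecMulVec g g) i j}) :
    (∃ z ∈ cF, ∃ dir : (Fin n → ℝ) × Matrix (Fin n) (Fin n) ℝ,
      dir ≠ 0 ∧ ∀ t : ℝ, z + t • dir ∈ cF) ∧
    ∀ z, ¬ IsVertexPt cF z := by
  -- G^T d = 0
  have hGd : Gᵀ.mulVec d = 0 := by
    apply le_antisymm hd1
    have : -(Gᵀ.mulVec d) ≤ 0 := by rwa [← Matrix.mulVec_neg]
    intro i; exact neg_nonpos.mp (this i)
  -- main line lemma
  have hline : ∀ z ∈ cF, ∀ t : ℝ,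
      z + t • (d, vecMulVec d z.1 + vecMulVec z.1 d) ∈ cF := by
    intro z hz t
    rw [hcF] at hz ⊢
    obtain ⟨hsym, hG, hH, hHX, hpos⟩ := hz
    have hfst : (z + t • (d, vecMulVec d z.1 + vecMulVec z.1 d)).1 = z.1 + t • d := rfl
    have hsnd : (z + t • (d, vecMulVec d z.1 + vecMulVec z.1 d)).2 =
        z.2 + t • (vecMulVec d z.1 + vecMulVec z.1 d) := rfl
    have hmvG : Gᵀ.mulVec (z.1 + t • d) = Gᵀ.mulVec z.1 := by
      rw [Matrix.mulVec_add, Matrix.mulVec_smul, hGd]; simp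
    have hmvH : Hᵀ.mulVec (z.1 + t • d) = Hᵀ.mulVec z.1 := by
      rw [Matrix.mulVec_add, Matrix.mulVec_smul, hd2]; simp
    refine ⟨?_, ?_, ?_, ?_, ?_⟩
    · rw [hsnd]
      unfold Matrix.IsSymm
      rw [transpose_add, transpose_smul, transpose_add,
        aux_vecMulVec_transpose, aux_vecMulVec_transpose, hsym,
        add_comm (vecMulVec z.1 d) (vecMulVec d z.1)]
    · rw [hfst, hmvG]; exact hG
    · rw [hfst, hmvH]; exact hH
    · rw [hfst, hsnd, Matrix.mul_add, Matrix.mul_smul, Matrix.mul_add,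
        aux_mul_vecMulVec, aux_mul_vecMulVec, hd2, hH, aux_vecMulVec_zero_left,
        aux_vecMulVec_add_right, aux_vecMulVec_smul_right, hHX, zero_add]
    · intro i j
      have key : Gᵀ * (z.2 + t • (vecMulVec d z.1 + vecMulVec z.1 d)) * G = Gᵀ * z.2 * G := by
        rw [Matrix.mul_add, Matrix.mul_smul, Matrix.mul_add,
          aux_mul_vecMulVec, aux_mul_vecMulVec, hGd, aux_vecMulVec_zero_left,
          Matrix.add_mul, Matrix.smul_mul, Matrix.add_mul,
          aux_vecMulVec_mul, hGd]
        simp [aux_vecMulVec_zero_left, Matrix.zero_mul]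
      rw [hfst, hsnd, key, hmvG]
      exact hpos i j
  -- base point
  obtain ⟨x₀, hx₀⟩ := hne
  rw [hF] at hx₀
  obtain ⟨hGx, hHx⟩ := hx₀
  have hz₀ : (x₀, vecMulVec x₀ x₀) ∈ cF := by
    rw [hcF]
    refine ⟨?_, hGx, hHx, ?_, ?_⟩
    · unfold Matrix.IsSymm; rw [aux_vecMulVec_transpose]
    · rw [aux_mul_vecMulVec, hHx]
    · intro i j
      have hq : Gᵀ * vecMulVec x₀ x₀ * G =
          vecMulVec (Gᵀ.mulVec x₀) (Gᵀ.mulVec x₀) := by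
        rw [aux_mul_vecMulVec, aux_vecMulVec_mul]
      rw [hq]
      simp only [Matrix.sub_apply, Matrix.add_apply, vecMulVec_apply]
      have : (Gᵀ.mulVec x₀) i * (Gᵀ.mulVec x₀) j - (Gᵀ.mulVec x₀) i * g j
          - g i * (Gᵀ.mulVec x₀) j + g i * g j
          = (g i - (Gᵀ.mulVec x₀) i) * (g j - (Gᵀ.mulVec x₀) j) := by ring
      rw [this]
      exact mul_nonneg (sub_nonneg.mpr (hGx i)) (sub_nonneg.mpr (hGx j))
  have hdirne : ∀ x : Fin n → ℝ,
      ((d, vecMulVec d x + vecMulVec x d) : (Fin n → ℝ) × Matrix (Fin n) (Fin n) ℝ) ≠ 0 := by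
    intro x hc
    exact hd0 (congrArg Prod.fst hc)
  constructor
  · exact ⟨_, hz₀, _, hdirne x₀, hline _ hz₀⟩
  · rintro z ⟨hz, hv⟩
    have h1 := hline z hz 1
    have h2 := hline z hz (-1)
    simp only [one_smul] at h1
    have h2' : z - (d, vecMulVec d z.1 + vecMulVec z.1 d) ∈ cF := by
      rw [sub_eq_add_neg, ← neg_one_smul ℝ]; exact h2
    exact hdirne z.1 (hv _ h1 h2')
end

section
/- Let F = {x : G^T x ≤ g, H^T x = h} be nonempty, let x̂ ∈ F, and set X̂ = x̂ x̂^T. Then (x̂, X̂) is a vertex of the RLT feasible region 𝓕 if and only if x̂ is a vertex of F. -/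
open Matrix

set_option linter.unusedSectionVars false

section aux
variable {α β γ : Type*} [Fintype α] [Fintype β] [Fintype γ]

lemma vmv_transpose (a : α → ℝ) (b : β → ℝ) : (vecMulVec a b)ᵀ = vecMulVec b a := by
  ext i j; simp [vecMulVec_apply, mul_comm]

lemma mul_vmv (A : Matrix β α ℝ) (a : α → ℝ) (b : γ → ℝ) :
    A * vecMulVec a b = vecMulVec (A.mulVec a) b := by
  ext i j
  simp only [Matrix.mul_apply, vecMulVec_apply, Matrix.mulVec, dotProduct]
  rw [Finset.sum_mul]
  exact Finset.sum_congr rfl fun k _ => by ring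

lemma vmv_mul (a : γ → ℝ) (b : α → ℝ) (B : Matrix α β ℝ) :
    vecMulVec a b * B = vecMulVec a (Bᵀ.mulVec b) := by
  ext i j
  simp only [Matrix.mul_apply, vecMulVec_apply, Matrix.mulVec, dotProduct, transpose_apply]
  rw [Finset.mul_sum]
  exact Finset.sum_congr rfl fun k _ => by ring

lemma GvG {n' m' : Type*} [Fintype n'] [Fintype m'] (G : Matrix n' m' ℝ) (a b : n' → ℝ) :
    Gᵀ * vecMulVec a b * G = vecMulVec (Gᵀ.mulVec a) (Gᵀ.mulVec b) := by
  rw [mul_vmv, vmv_mul]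

lemma mulVec_col (A : Matrix α β ℝ) (B : Matrix β γ ℝ) (j : γ) :
    A.mulVec (fun k => B k j) = fun i => (A * B) i j := by
  funext i
  simp [Matrix.mulVec, dotProduct, Matrix.mul_apply]

end aux

/-- Key: if `x` is a vertex of `F` and `v` satisfies `Hᵀv = 0` together with the
slack bound `|Gᵀv| ≤ g - Gᵀx`, then `v = 0`. -/
lemma key_vanish {n m p : ℕ} {G : Matrix (Fin n) (Fin m) ℝ} {H : Matrix (Fin n) (Fin p) ℝ}
    {g : Fin m → ℝ} {h : Fin p → ℝ} {F : Set (Fin n → ℝ)}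
    (hF : F = {x | Gᵀ.mulVec x ≤ g ∧ Hᵀ.mulVec x = h})
    {x : Fin n → ℝ} (hxg : Gᵀ.mulVec x ≤ g) (hxh : Hᵀ.mulVec x = h)
    (hvx : ∀ d, x + d ∈ F → x - d ∈ F → d = 0)
    (v : Fin n → ℝ) (hHv : Hᵀ.mulVec v = 0)
    (hGv : ∀ i, |Gᵀ.mulVec v i| ≤ g i - Gᵀ.mulVec x i) : v = 0 := by
  apply hvx
  · rw [hF]
    refine ⟨fun i => ?_, by rw [mulVec_add, hxh, hHv, add_zero]⟩
    rw [mulVec_add, Pi.add_apply]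
    have h1 := (abs_le.mp (hGv i)).2
    linarith
  · rw [hF]
    refine ⟨fun i => ?_, by rw [mulVec_sub, hxh, hHv, sub_zero]⟩
    rw [mulVec_sub, Pi.sub_apply]
    have h1 := (abs_le.mp (hGv i)).1
    linarith

/-- Membership of a perturbed lifted point in the RLT region. -/
lemma lift_mem {n m p : ℕ} {G : Matrix (Fin n) (Fin m) ℝ} {H : Matrix (Fin n) (Fin p) ℝ}
    {g : Fin m → ℝ} {h : Fin p → ℝ}
    {cF : Set ((Fin n → ℝ) × Matrix (Fin n) (Fin n) ℝ)}
    (hcF : cF = {s | s.2.IsSymm ∧ Gᵀ.mulVec s.1 ≤ g ∧ Hᵀ.mulVec s.1 = h ∧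
      Hᵀ * s.2 = vecMulVec h s.1 ∧
      ∀ i j, 0 ≤ (Gᵀ * s.2 * G - vecMulVec (Gᵀ.mulVec s.1) g
        - vecMulVec g (Gᵀ.mulVec s.1) + vecMulVec g g) i j})
    (x e : Fin n → ℝ)
    (hxg : Gᵀ.mulVec x ≤ g) (hxh : Hᵀ.mulVec x = h)
    (hpe : ∀ i, Gᵀ.mulVec x i + 2 * Gᵀ.mulVec e i ≤ g i)
    (hme : ∀ i, Gᵀ.mulVec x i - 2 * Gᵀ.mulVec e i ≤ g i)
    (hHe : Hᵀ.mulVec e = 0) :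
    (x + e, vecMulVec x x + (vecMulVec x e + vecMulVec e x)) ∈ cF := by
  rw [hcF]
  refine ⟨?_, fun i => ?_, ?_, ?_, fun i j => ?_⟩
  · show (vecMulVec x x + (vecMulVec x e + vecMulVec e x))ᵀ = _
    rw [transpose_add, transpose_add, vmv_transpose, vmv_transpose, vmv_transpose]
    abel
  · show Gᵀ.mulVec (x + e) i ≤ g i
    rw [mulVec_add, Pi.add_apply]
    have h1 := hpe i
    have h2 := hxg i
    linarith
  · show Hᵀ.mulVec (x + e) = h
    rw [mulVec_add, hxh, hHe, add_zero]
  · show Hᵀ * (vecMulVec x x + (vecMulVec x e + vecMulVec e x)) = vecMulVec h (x + e)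
    rw [Matrix.mul_add, Matrix.mul_add, mul_vmv, mul_vmv, mul_vmv, hxh, hHe]
    ext i j
    simp [vecMulVec_apply]
    ring
  · simp only [Matrix.mul_add, Matrix.add_mul, GvG, Matrix.sub_apply, Matrix.add_apply, vecMulVec_apply,
      mulVec_add, Pi.add_apply]
    nlinarith [mul_nonneg (by linarith [hxg i] : (0:ℝ) ≤ g i - Gᵀ.mulVec x i)
        (by linarith [hpe j] : (0:ℝ) ≤ g j - Gᵀ.mulVec x j - 2 * Gᵀ.mulVec e j),
      mul_nonneg (by linarith [hxg j] : (0:ℝ) ≤ g j - Gᵀ.mulVec x j)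
        (by linarith [hpe i] : (0:ℝ) ≤ g i - Gᵀ.mulVec x i - 2 * Gᵀ.mulVec e i)]

/-- For `x̂ ∈ F` and `X̂ = x̂ x̂ᵀ`, the pair `(x̂, X̂)` is a vertex of the RLT feasible
region `𝓕` iff `x̂` is a vertex of `F`. -/
theorem stmt_7 {n m p : ℕ} (G : Matrix (Fin n) (Fin m) ℝ) (H : Matrix (Fin n) (Fin p) ℝ)
    (g : Fin m → ℝ) (h : Fin p → ℝ)
    (F : Set (Fin n → ℝ)) (hF : F = {x | Gᵀ.mulVec x ≤ g ∧ Hᵀ.mulVec x = h})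
    (hne : F.Nonempty)
    (cF : Set ((Fin n → ℝ) × Matrix (Fin n) (Fin n) ℝ))
    (hcF : cF = {s | s.2.IsSymm ∧ Gᵀ.mulVec s.1 ≤ g ∧ Hᵀ.mulVec s.1 = h ∧
      Hᵀ * s.2 = vecMulVec h s.1 ∧
      ∀ i j, 0 ≤ (Gᵀ * s.2 * G - vecMulVec (Gᵀ.mulVec s.1) g
        - vecMulVec g (Gᵀ.mulVec s.1) + vecMulVec g g) i j})
    (x : Fin n → ℝ) (hx : x ∈ F) :
    IsVertexPt cF (x, vecMulVec x x) ↔ IsVertexPt F x := by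
  have hx' := hx
  rw [hF] at hx'
  obtain ⟨hxg, hxh⟩ := hx'
  constructor
  · -- vertex of cF → vertex of F
    intro hv
    refine ⟨hx, fun d hdp hdm => ?_⟩
    rw [hF] at hdp hdm
    obtain ⟨hdpg, hdph⟩ := hdp
    obtain ⟨hdmg, hdmh⟩ := hdm
    rw [mulVec_add] at hdpg hdph
    rw [mulVec_sub] at hdmg hdmh
    have hHd : Hᵀ.mulVec d = 0 := by
      rw [hxh] at hdph
      exact add_eq_left.mp hdph
    set e : Fin n → ℝ := (2:ℝ)⁻¹ • d with he
    have hGe : ∀ i, Gᵀ.mulVec e i = 2⁻¹ * Gᵀ.mulVec d i := by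
      intro i; rw [he, mulVec_smul, Pi.smul_apply, smul_eq_mul]
    have hHe : Hᵀ.mulVec e = 0 := by rw [he, mulVec_smul, hHd, smul_zero]
    have hpe : ∀ i, Gᵀ.mulVec x i + 2 * Gᵀ.mulVec e i ≤ g i := by
      intro i; rw [hGe i]
      have := hdpg i
      rw [Pi.add_apply] at this
      linarith
    have hme : ∀ i, Gᵀ.mulVec x i - 2 * Gᵀ.mulVec e i ≤ g i := by
      intro i; rw [hGe i]
      have := hdmg i
      rw [Pi.sub_apply] at this
      linarith
    have hpe' : ∀ i, Gᵀ.mulVec x i + 2 * Gᵀ.mulVec (-e) i ≤ g i := by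
      intro i; rw [mulVec_neg, Pi.neg_apply]; have := hme i; linarith
    have hme' : ∀ i, Gᵀ.mulVec x i - 2 * Gᵀ.mulVec (-e) i ≤ g i := by
      intro i; rw [mulVec_neg, Pi.neg_apply]; have := hpe i; linarith
    have hHe' : Hᵀ.mulVec (-e) = 0 := by rw [mulVec_neg, hHe, neg_zero]
    have memp := lift_mem hcF x e hxg hxh hpe hme hHe
    have memm := lift_mem hcF x (-e) hxg hxh hpe' hme' hHe'
    have hpair : (x, vecMulVec x x) - (e, vecMulVec x e + vecMulVec e x)
        = (x + (-e), vecMulVec x x + (vecMulVec x (-e) + vecMulVec (-e) x)) := by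
      rw [Prod.mk_sub_mk, Prod.mk.injEq]
      constructor
      · rw [sub_eq_add_neg]
      · ext i j
        simp [vecMulVec_apply]
        ring
    have hz := hv.2 (e, vecMulVec x e + vecMulVec e x)
      (by rw [Prod.mk_add_mk]; exact memp)
      (by rw [hpair]; exact memm)
    have he0 : e = 0 := congrArg Prod.fst hz
    rw [he] at he0
    have := smul_eq_zero.mp he0
    rcases this with h2 | h2
    · norm_num at h2
    · exact h2
  · -- vertex of F → vertex of cF
    intro hvF
    constructor
    · rw [hcF]
      refine ⟨?_, hxg, hxh, ?_, fun i j => ?_⟩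
      · show (vecMulVec x x)ᵀ = _
        rw [vmv_transpose]
      · show Hᵀ * vecMulVec x x = _
        rw [mul_vmv, hxh]
      · simp only [GvG, Matrix.sub_apply, Matrix.add_apply, vecMulVec_apply]
        nlinarith [mul_nonneg (by linarith [hxg i] : (0:ℝ) ≤ g i - Gᵀ.mulVec x i)
          (by linarith [hxg j] : (0:ℝ) ≤ g j - Gᵀ.mulVec x j)]
    · rintro ⟨d, Δ⟩ hp hm
      rw [Prod.mk_add_mk, hcF] at hp
      rw [Prod.mk_sub_mk, hcF] at hm
      obtain ⟨hps, hpg, hph, hpH, hpR⟩ := hp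
      obtain ⟨hms, hmg, hmh, hmH, hmR⟩ := hm
      have hd0 : d = 0 := hvF.2 d (by rw [hF]; exact ⟨hpg, hph⟩) (by rw [hF]; exact ⟨hmg, hmh⟩)
      subst hd0
      rw [add_zero] at hpH hpR
      rw [sub_zero] at hmH hmR
      -- symmetry of Δ
      have hsym : Δᵀ = Δ := by
        have h1 : (vecMulVec x x + Δ)ᵀ = vecMulVec x x + Δ := hps
        rw [transpose_add, vmv_transpose] at h1
        exact add_left_cancel h1
      -- Hᵀ Δ = 0
      have hHΔ : Hᵀ * Δ = 0 := by
        have hpH' : Hᵀ * (vecMulVec x x + Δ) = vecMulVec h x := hpH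
        rw [Matrix.mul_add, mul_vmv, hxh] at hpH'
        exact add_eq_left.mp hpH'
      -- entrywise bound on M = Gᵀ Δ G
      simp only [Matrix.mul_add, Matrix.add_mul, Matrix.mul_sub, Matrix.sub_mul, GvG] at hpR hmR
      have hM : ∀ i j, |(Gᵀ * Δ * G) i j| ≤ (g i - Gᵀ.mulVec x i) * (g j - Gᵀ.mulVec x j) := by
        intro i j
        have h1 := hpR i j
        have h2 := hmR i j
        simp only [Matrix.sub_apply, Matrix.add_apply, vecMulVec_apply] at h1 h2
        rw [abs_le]
        constructor <;> nlinarith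
      -- columns of Δ G vanish
      have hHΔG : Hᵀ * (Δ * G) = 0 := by rw [← Matrix.mul_assoc, hHΔ, Matrix.zero_mul]
      have hcols : ∀ j, (fun k => (Δ * G) k j) = 0 := by
        intro j
        set c : ℝ := (1 + (g j - Gᵀ.mulVec x j))⁻¹ with hc
        have hpos : (0:ℝ) < 1 + (g j - Gᵀ.mulVec x j) := by
          have := hxg j; linarith
        have hcpos : 0 < c := by rw [hc]; positivity
        have hv0 : c • (fun k => (Δ * G) k j) = 0 := by
          apply key_vanish hF hxg hxh hvF.2
          · rw [mulVec_smul, mulVec_col, hHΔG]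
            funext i
            simp
          · intro i
            rw [mulVec_smul, Pi.smul_apply, smul_eq_mul, mulVec_col, ← Matrix.mul_assoc,
              abs_mul, abs_of_pos hcpos]
            have h1 := hM i j
            have h2 : c * (g j - Gᵀ.mulVec x j) ≤ 1 := by
              rw [hc]
              rw [inv_mul_le_iff₀ hpos]
              have := hxg j; linarith
            have h3 : (0:ℝ) ≤ g i - Gᵀ.mulVec x i := by have := hxg i; linarith
            have h4 : (0:ℝ) ≤ g j - Gᵀ.mulVec x j := by have := hxg j; linarith
            calc c * |(Gᵀ * Δ * G) i j| ≤ c * ((g i - Gᵀ.mulVec x i) * (g j - Gᵀ.mulVec x j)) := by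
                  apply mul_le_mul_of_nonneg_left h1 (le_of_lt hcpos)
              _ = (g i - Gᵀ.mulVec x i) * (c * (g j - Gᵀ.mulVec x j)) := by ring
              _ ≤ (g i - Gᵀ.mulVec x i) * 1 := by
                  apply mul_le_mul_of_nonneg_left h2 h3
              _ = g i - Gᵀ.mulVec x i := mul_one _
        have := smul_eq_zero.mp hv0
        rcases this with h2 | h2
        · exact absurd h2 (ne_of_gt hcpos)
        · exact h2
      have hΔG : Δ * G = 0 := by
        ext k j
        exact congrFun (hcols j) k
      have hGΔ : Gᵀ * Δ = 0 := by
        have h1 : Gᵀ * Δ = (Δᵀ * G)ᵀ := by rw [transpose_mul, transpose_transpose]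
        rw [h1, hsym, hΔG, transpose_zero]
      have hΔ0 : Δ = 0 := by
        ext k j
        have hv0 : (fun k => Δ k j) = 0 := by
          apply key_vanish hF hxg hxh hvF.2
          · rw [mulVec_col, hHΔ]
            funext i'
            simp
          · intro i
            rw [mulVec_col, hGΔ]
            simp only [Matrix.zero_apply, abs_zero]
            have := hxg i; linarith
        exact congrFun hv0 k
      rw [hΔ0]
      rfl
end

section
/- Let v^1 and v^2 be two distinct vertices of the nonempty polyhedron F = {x : G^T x ≤ g, H^T x = h}. Set x̂ = (1/2)(v^1 + v^2) and X̂ = (1/2)(v^1 (v^2)^T + v^2 (v^1)^T). Then (x̂, X̂) is a vertex of the RLT feasible region 𝓕. -/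
open Matrix

lemma mul_vecMulVec' {a n b : Type*} [Fintype n] (M : Matrix a n ℝ) (u : n → ℝ) (v : b → ℝ) :
    M * vecMulVec u v = vecMulVec (M.mulVec u) v := by
  ext i j
  simp [Matrix.mul_apply, vecMulVec_apply, Matrix.mulVec, dotProduct, Finset.sum_mul, mul_assoc]

lemma vecMulVec_mul' {a n b : Type*} [Fintype n] (u : a → ℝ) (v : n → ℝ) (N : Matrix n b ℝ) :
    vecMulVec u v * N = vecMulVec u (Nᵀ.mulVec v) := by
  ext i j
  simp [Matrix.mul_apply, vecMulVec_apply, Matrix.mulVec, dotProduct, Finset.mul_sum, mul_comm,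
    mul_assoc, mul_left_comm]

lemma vecMulVec_transpose' {a b : Type*} (u : a → ℝ) (v : b → ℝ) :
    (vecMulVec u v)ᵀ = vecMulVec v u := by
  ext i j; simp [vecMulVec_apply, mul_comm]

lemma vecMulVec_zero_left {a b : Type*} (v : b → ℝ) : vecMulVec (0 : a → ℝ) v = 0 := by
  ext i j; simp [vecMulVec_apply]

lemma vecMulVec_zero_right {a b : Type*} (u : a → ℝ) : vecMulVec u (0 : b → ℝ) = 0 := by
  ext i j; simp [vecMulVec_apply]

lemma scalar_key (a2i a2j Tij ci cj gi gj : ℝ)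
    (P : 0 ≤ (1 / 2 : ℝ) * (gi * a2j + a2i * gj) + Tij - ((1 / 2 : ℝ) * (gi + a2i) + ci) * gj
      - gi * ((1 / 2 : ℝ) * (gj + a2j) + cj) + gi * gj)
    (M : 0 ≤ (1 / 2 : ℝ) * (gi * a2j + a2i * gj) - Tij - ((1 / 2 : ℝ) * (gi + a2i) - ci) * gj
      - gi * ((1 / 2 : ℝ) * (gj + a2j) - cj) + gi * gj) :
    Tij = gi * cj + ci * gj := by
  have h1 : Tij - gi * cj - ci * gj ≥ 0 := by nlinarith [P]
  have h2 : Tij - gi * cj - ci * gj ≤ 0 := by nlinarith [M]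
  linarith

lemma scalar_key' (a1i a1j Tij ci cj gi gj : ℝ)
    (P : 0 ≤ (1 / 2 : ℝ) * (a1i * gj + gi * a1j) + Tij - ((1 / 2 : ℝ) * (a1i + gi) + ci) * gj
      - gi * ((1 / 2 : ℝ) * (a1j + gj) + cj) + gi * gj)
    (M : 0 ≤ (1 / 2 : ℝ) * (a1i * gj + gi * a1j) - Tij - ((1 / 2 : ℝ) * (a1i + gi) - ci) * gj
      - gi * ((1 / 2 : ℝ) * (a1j + gj) - cj) + gi * gj) :
    Tij = gi * cj + ci * gj := by
  have h1 : Tij - gi * cj - ci * gj ≥ 0 := by nlinarith [P]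
  have h2 : Tij - gi * cj - ci * gj ≤ 0 := by nlinarith [M]
  linarith

lemma vertex_orth {n m p : ℕ} (G : Matrix (Fin n) (Fin m) ℝ) (H : Matrix (Fin n) (Fin p) ℝ)
    (g : Fin m → ℝ) (h : Fin p → ℝ) (v : Fin n → ℝ)
    (hv : IsVertexPt {x | Gᵀ.mulVec x ≤ g ∧ Hᵀ.mulVec x = h} v)
    (y : Fin n → ℝ) (hy1 : ∀ i, Gᵀ.mulVec v i = g i → Gᵀ.mulVec y i = 0)
    (hy2 : Hᵀ.mulVec y = 0) : y = 0 := by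
  obtain ⟨⟨hvG, hvH⟩, hvert⟩ := hv
  set c : Fin m → ℝ := Gᵀ.mulVec y with hc
  set a : Fin m → ℝ := Gᵀ.mulVec v with ha
  have hs : ∀ i, 0 ≤ g i - a i := fun i => sub_nonneg.2 (hvG i)
  have key : ∃ ε : ℝ, 0 < ε ∧ ∀ i, ε * |c i| ≤ g i - a i := by
    rcases isEmpty_or_nonempty (Fin m) with hm | hm
    · exact ⟨1, one_pos, fun i => isEmptyElim i⟩
    · set f : Fin m → ℝ := fun i => if c i = 0 then 1 else (g i - a i) / |c i| with hf
      have hfpos : ∀ i, 0 < f i := by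
        intro i
        by_cases hci : c i = 0
        · simp [hf, hci]
        · have hsne : g i - a i ≠ 0 := by
            intro h0
            exact hci (hy1 i (by linarith [sub_eq_zero.1 h0]))
          have : 0 < g i - a i := lt_of_le_of_ne (hs i) (Ne.symm hsne)
          simp only [hf, hci, if_false]
          exact div_pos this (abs_pos.2 hci)
      refine ⟨Finset.univ.inf' Finset.univ_nonempty f, ?_, ?_⟩
      · exact (Finset.lt_inf'_iff _).2 fun i _ => hfpos i
      · intro i
        by_cases hci : c i = 0
        · simpa [hci] using hs i
        · have h1 : Finset.univ.inf' Finset.univ_nonempty f ≤ f i :=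
            Finset.inf'_le _ (Finset.mem_univ i)
          have h2 : f i = (g i - a i) / |c i| := by simp [hf, hci]
          have h3 : 0 < |c i| := abs_pos.2 hci
          calc Finset.univ.inf' Finset.univ_nonempty f * |c i|
              = Finset.univ.inf' Finset.univ_nonempty f * |c i| := rfl
            _ ≤ f i * |c i| := mul_le_mul_of_nonneg_right h1 h3.le
            _ = g i - a i := by rw [h2]; field_simp
  obtain ⟨ε, hε, hεs⟩ := key
  have memP : v + ε • y ∈ {x | Gᵀ.mulVec x ≤ g ∧ Hᵀ.mulVec x = h} := by
    constructor
    · intro i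
      have h1 : ε * c i ≤ ε * |c i| := mul_le_mul_of_nonneg_left (le_abs_self _) hε.le
      have := hεs i
      simp only [Matrix.mulVec_add, Matrix.mulVec_smul, Pi.add_apply, Pi.smul_apply,
        smul_eq_mul]
      show a i + ε * c i ≤ g i
      linarith
    · simp [Matrix.mulVec_add, Matrix.mulVec_smul, hy2, hvH]
  have memM : v - ε • y ∈ {x | Gᵀ.mulVec x ≤ g ∧ Hᵀ.mulVec x = h} := by
    constructor
    · intro i
      have h1 : ε * (-c i) ≤ ε * |c i| := mul_le_mul_of_nonneg_left (neg_le_abs _) hε.le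
      have := hεs i
      simp only [Matrix.mulVec_sub, Matrix.mulVec_smul, Pi.sub_apply, Pi.smul_apply,
        smul_eq_mul]
      show a i - ε * c i ≤ g i
      linarith
    · simp [Matrix.mulVec_sub, Matrix.mulVec_smul, hy2, hvH]
  have := hvert (ε • y) memP memM
  rcases smul_eq_zero.1 this with h1 | h1
  · exact absurd h1 hε.ne'
  · exact h1

lemma mat_zero {n m p : ℕ} (G : Matrix (Fin n) (Fin m) ℝ) (H : Matrix (Fin n) (Fin p) ℝ)
    (g : Fin m → ℝ) (h : Fin p → ℝ) (v : Fin n → ℝ)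
    (hv : IsVertexPt {x | Gᵀ.mulVec x ≤ g ∧ Hᵀ.mulVec x = h} v)
    (B : Matrix (Fin n) (Fin n) ℝ)
    (hGBG : ∀ i j, Gᵀ.mulVec v i = g i → Gᵀ.mulVec v j = g j → (Gᵀ * B * G) i j = 0)
    (hHB : Hᵀ * B = 0) (hBH : B * H = 0) : B = 0 := by
  have step1 : ∀ j, Gᵀ.mulVec v j = g j → B.mulVec (fun k => G k j) = 0 := by
    intro j hj
    apply vertex_orth G H g h v hv
    · intro i hi
      have : Gᵀ.mulVec (B.mulVec fun k => G k j) i = (Gᵀ * B * G) i j := by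
        rw [Matrix.mulVec_mulVec]
        simp [Matrix.mulVec, Matrix.mul_apply, dotProduct]
      rw [this]
      exact hGBG i j hi hj
    · rw [Matrix.mulVec_mulVec, hHB]
      simp
  have step1' : ∀ k, B.mulVec (fun l => H l k) = 0 := by
    intro k
    ext i
    have : (B * H) i k = 0 := by rw [hBH]; simp
    simpa [Matrix.mul_apply, Matrix.mulVec, dotProduct] using this
  ext l j
  have hrow : (fun k => B l k) = 0 := by
    apply vertex_orth G H g h v hv
    · intro i hi
      have := congrFun (step1 i hi) l
      simpa [Matrix.mulVec, dotProduct, mul_comm] using this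
    · ext k'
      have := congrFun (step1' k') l
      simpa [Matrix.mulVec, dotProduct, mul_comm] using this
  simpa using congrFun hrow j

/-- If `v¹ ≠ v²` are vertices of `F`, then `(½(v¹+v²), ½(v¹(v²)ᵀ + v²(v¹)ᵀ))` is a
vertex of the RLT feasible region `𝓕`. -/
theorem stmt_8 {n m p : ℕ} (G : Matrix (Fin n) (Fin m) ℝ) (H : Matrix (Fin n) (Fin p) ℝ)
    (g : Fin m → ℝ) (h : Fin p → ℝ)
    (F : Set (Fin n → ℝ)) (hF : F = {x | Gᵀ.mulVec x ≤ g ∧ Hᵀ.mulVec x = h})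
    (hne : F.Nonempty)
    (cF : Set ((Fin n → ℝ) × Matrix (Fin n) (Fin n) ℝ))
    (hcF : cF = {s | s.2.IsSymm ∧ Gᵀ.mulVec s.1 ≤ g ∧ Hᵀ.mulVec s.1 = h ∧
      Hᵀ * s.2 = vecMulVec h s.1 ∧
      ∀ i j, 0 ≤ (Gᵀ * s.2 * G - vecMulVec (Gᵀ.mulVec s.1) g
        - vecMulVec g (Gᵀ.mulVec s.1) + vecMulVec g g) i j})
    (v₁ v₂ : Fin n → ℝ) (hv₁ : IsVertexPt F v₁) (hv₂ : IsVertexPt F v₂) (hne' : v₁ ≠ v₂) :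
    IsVertexPt cF
      ((1 / 2 : ℝ) • (v₁ + v₂), (1 / 2 : ℝ) • (vecMulVec v₁ v₂ + vecMulVec v₂ v₁)) := by
  subst hF
  subst hcF
  obtain ⟨⟨hG1, hH1⟩, -⟩ := id hv₁
  obtain ⟨⟨hG2, hH2⟩, -⟩ := id hv₂
  set xh : Fin n → ℝ := (1 / 2 : ℝ) • (v₁ + v₂) with hxh
  set Xh : Matrix (Fin n) (Fin n) ℝ := (1 / 2 : ℝ) • (vecMulVec v₁ v₂ + vecMulVec v₂ v₁)
    with hXh
  set a₁ : Fin m → ℝ := Gᵀ.mulVec v₁ with ha₁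
  set a₂ : Fin m → ℝ := Gᵀ.mulVec v₂ with ha₂
  have hGx : Gᵀ.mulVec xh = (1 / 2 : ℝ) • (a₁ + a₂) := by
    rw [hxh, Matrix.mulVec_smul, Matrix.mulVec_add]
  have hXsymm : Xhᵀ = Xh := by
    rw [hXh, Matrix.transpose_smul, Matrix.transpose_add, vecMulVec_transpose',
      vecMulVec_transpose', add_comm]
  have hXG : Gᵀ * Xh * G = (1 / 2 : ℝ) • (vecMulVec a₁ a₂ + vecMulVec a₂ a₁) := by
    rw [hXh, Matrix.mul_smul, Matrix.smul_mul, Matrix.mul_add, Matrix.add_mul,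
      mul_vecMulVec', mul_vecMulVec', vecMulVec_mul', vecMulVec_mul', ← ha₁, ← ha₂]
  have hHX : Hᵀ * Xh = vecMulVec h xh := by
    rw [hXh, Matrix.mul_smul, Matrix.mul_add, mul_vecMulVec', mul_vecMulVec', hH1, hH2, hxh]
    ext i j
    simp [vecMulVec_apply, Matrix.smul_apply, Matrix.add_apply]
    ring
  have hmem : (xh, Xh) ∈ {s : (Fin n → ℝ) × Matrix (Fin n) (Fin n) ℝ |
      s.2.IsSymm ∧ Gᵀ.mulVec s.1 ≤ g ∧ Hᵀ.mulVec s.1 = h ∧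
      Hᵀ * s.2 = vecMulVec h s.1 ∧
      ∀ i j, 0 ≤ (Gᵀ * s.2 * G - vecMulVec (Gᵀ.mulVec s.1) g
        - vecMulVec g (Gᵀ.mulVec s.1) + vecMulVec g g) i j} := by
    refine ⟨hXsymm, ?_, ?_, hHX, ?_⟩
    · intro i
      have h1 := hG1 i
      have h2 := hG2 i
      rw [hGx]
      simp only [Pi.smul_apply, Pi.add_apply, smul_eq_mul]
      linarith
    · rw [hxh, Matrix.mulVec_smul, Matrix.mulVec_add, hH1, hH2]
      ext k; simp; ring
    · intro i j
      rw [hXG, hGx]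
      simp only [Matrix.sub_apply, Matrix.add_apply, Matrix.smul_apply, vecMulVec_apply,
        Pi.smul_apply, Pi.add_apply, smul_eq_mul]
      nlinarith [mul_nonneg (sub_nonneg.2 (hG1 i)) (sub_nonneg.2 (hG2 j)),
        mul_nonneg (sub_nonneg.2 (hG2 i)) (sub_nonneg.2 (hG1 j))]
  refine ⟨hmem, ?_⟩
  rintro ⟨d, D⟩ hqP hqM
  simp only [Set.mem_setOf_eq, Prod.mk_add_mk, Prod.mk_sub_mk] at hqP hqM
  obtain ⟨hsP, hGP, hHP, hHXP, hPP⟩ := hqP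
  obtain ⟨hsM, hGM, hHM, hHXM, hPM⟩ := hqM
  set c : Fin m → ℝ := Gᵀ.mulVec d with hc
  -- H^T d = 0
  have hHd : Hᵀ.mulVec d = 0 := by
    ext k
    have e1 := congrFun hHP k
    have e2 := congrFun hHM k
    simp only [Matrix.mulVec_add, Matrix.mulVec_sub, Pi.add_apply, Pi.sub_apply] at e1 e2
    simp only [Pi.zero_apply]
    linarith
  -- D is symmetric
  have hDsym : Dᵀ = D := by
    have e1 : (Xh + D)ᵀ = Xh + D := hsP
    rw [Matrix.transpose_add, hXsymm] at e1
    exact add_left_cancel e1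
  -- H^T D = h d^T
  have hHD : Hᵀ * D = vecMulVec h d := by
    have eP : Hᵀ * (Xh + D) = vecMulVec h (xh + d) := hHXP
    rw [Matrix.mul_add, hHX] at eP
    have : vecMulVec h (xh + d) = vecMulVec h xh + vecMulVec h d := by
      ext i j; simp [vecMulVec_apply]; ring
    rw [this] at eP
    exact add_left_cancel eP
  -- D H = d h^T
  have hDH : D * H = vecMulVec d h := by
    have := congrArg Matrix.transpose hHD
    rwa [Matrix.transpose_mul, Matrix.transpose_transpose, hDsym, vecMulVec_transpose']
      at this
  -- matrix-level rewrites for the RLT entries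
  have hM1 : Gᵀ * (Xh + D) * G = Gᵀ * Xh * G + Gᵀ * D * G := by
    rw [Matrix.mul_add, Matrix.add_mul]
  have hM1' : Gᵀ * (Xh - D) * G = Gᵀ * Xh * G - Gᵀ * D * G := by
    rw [Matrix.mul_sub, Matrix.sub_mul]
  have hM2 : Gᵀ.mulVec (xh + d) = (1 / 2 : ℝ) • (a₁ + a₂) + c := by
    rw [Matrix.mulVec_add, hGx, hc]
  have hM2' : Gᵀ.mulVec (xh - d) = (1 / 2 : ℝ) • (a₁ + a₂) - c := by
    rw [Matrix.mulVec_sub, hGx, hc]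
  set T : Matrix (Fin m) (Fin m) ℝ := Gᵀ * D * G with hTdef
  have keyP : ∀ i j, 0 ≤ (1 / 2 : ℝ) * (a₁ i * a₂ j + a₂ i * a₁ j) + T i j
      - ((1 / 2 : ℝ) * (a₁ i + a₂ i) + c i) * g j
      - g i * ((1 / 2 : ℝ) * (a₁ j + a₂ j) + c j) + g i * g j := by
    intro i j
    have := hPP i j
    rw [hM1, hXG, hM2] at this
    simpa only [Matrix.sub_apply, Matrix.add_apply, Matrix.smul_apply, vecMulVec_apply,
      Pi.smul_apply, Pi.add_apply, smul_eq_mul] using this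
  have keyM : ∀ i j, 0 ≤ (1 / 2 : ℝ) * (a₁ i * a₂ j + a₂ i * a₁ j) - T i j
      - ((1 / 2 : ℝ) * (a₁ i + a₂ i) - c i) * g j
      - g i * ((1 / 2 : ℝ) * (a₁ j + a₂ j) - c j) + g i * g j := by
    intro i j
    have := hPM i j
    rw [hM1', hXG, hM2'] at this
    simpa only [Matrix.sub_apply, Matrix.add_apply, Matrix.smul_apply, vecMulVec_apply,
      Pi.smul_apply, Pi.add_apply, Pi.sub_apply, smul_eq_mul] using this
  have hT1 : ∀ i j, a₁ i = g i → a₁ j = g j → T i j = g i * c j + c i * g j := by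
    intro i j hi hj
    have P := keyP i j
    have M := keyM i j
    rw [hi, hj] at P M
    exact scalar_key (a₂ i) (a₂ j) (T i j) (c i) (c j) (g i) (g j) P M
  have hT2 : ∀ i j, a₂ i = g i → a₂ j = g j → T i j = g i * c j + c i * g j := by
    intro i j hi hj
    have P := keyP i j
    have M := keyM i j
    rw [hi, hj] at P M
    exact scalar_key' (a₁ i) (a₁ j) (T i j) (c i) (c j) (g i) (g j) P M
  -- B₁ = 0
  have hB1 : D - vecMulVec v₁ d - vecMulVec d v₁ = 0 := by
    apply mat_zero G H g h v₁ hv₁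
    · intro i j hi hj
      have hexp : Gᵀ * (D - vecMulVec v₁ d - vecMulVec d v₁) * G
          = T - vecMulVec a₁ c - vecMulVec c a₁ := by
        rw [Matrix.mul_sub, Matrix.mul_sub, Matrix.sub_mul, Matrix.sub_mul,
          mul_vecMulVec', mul_vecMulVec', vecMulVec_mul', vecMulVec_mul', ← ha₁, ← hc,
          hTdef]
      rw [hexp]
      simp only [Matrix.sub_apply, vecMulVec_apply]
      have hi' : a₁ i = g i := hi
      have hj' : a₁ j = g j := hj
      have := hT1 i j hi' hj'
      rw [hi', hj']
      linarith
    · rw [Matrix.mul_sub, Matrix.mul_sub, hHD, mul_vecMulVec', mul_vecMulVec', hH1, hHd,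
        vecMulVec_zero_left]
      simp
    · rw [Matrix.sub_mul, Matrix.sub_mul, hDH, vecMulVec_mul', vecMulVec_mul', hH1, hHd,
        vecMulVec_zero_right]
      simp
  -- B₂ = 0
  have hB2 : D - vecMulVec v₂ d - vecMulVec d v₂ = 0 := by
    apply mat_zero G H g h v₂ hv₂
    · intro i j hi hj
      have hexp : Gᵀ * (D - vecMulVec v₂ d - vecMulVec d v₂) * G
          = T - vecMulVec a₂ c - vecMulVec c a₂ := by
        rw [Matrix.mul_sub, Matrix.mul_sub, Matrix.sub_mul, Matrix.sub_mul,
          mul_vecMulVec', mul_vecMulVec', vecMulVec_mul', vecMulVec_mul', ← ha₂, ← hc,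
          hTdef]
      rw [hexp]
      simp only [Matrix.sub_apply, vecMulVec_apply]
      have hi' : a₂ i = g i := hi
      have hj' : a₂ j = g j := hj
      have := hT2 i j hi' hj'
      rw [hi', hj']
      linarith
    · rw [Matrix.mul_sub, Matrix.mul_sub, hHD, mul_vecMulVec', mul_vecMulVec', hH2, hHd,
        vecMulVec_zero_left]
      simp
    · rw [Matrix.sub_mul, Matrix.sub_mul, hDH, vecMulVec_mul', vecMulVec_mul', hH2, hHd,
        vecMulVec_zero_right]
      simp
  -- entrywise consequences
  have hent : ∀ i j, (v₁ i - v₂ i) * d j + d i * (v₁ j - v₂ j) = 0 := by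
    intro i j
    have e1 := Matrix.ext_iff.mpr hB1 i j
    have e2 := Matrix.ext_iff.mpr hB2 i j
    simp only [Matrix.sub_apply, vecMulVec_apply, Matrix.zero_apply] at e1 e2
    linarith
  obtain ⟨j₀, hj₀⟩ := Function.ne_iff.1 hne'
  have hwj₀ : v₁ j₀ - v₂ j₀ ≠ 0 := sub_ne_zero.2 hj₀
  have hdj₀ : d j₀ = 0 := by
    have := hent j₀ j₀
    rcases mul_eq_zero.1 (by linarith : (v₁ j₀ - v₂ j₀) * d j₀ = 0) with h' | h'
    · exact absurd h' hwj₀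
    · exact h'
  have hd : d = 0 := by
    funext i
    have := hent i j₀
    rw [hdj₀] at this
    simp only [mul_zero, zero_add] at this
    rcases mul_eq_zero.1 this with h' | h'
    · exact h'
    · exact absurd h' hwj₀
  have hD : D = 0 := by
    have h0 := hB1
    rw [hd, vecMulVec_zero_left, vecMulVec_zero_right, sub_zero, sub_zero] at h0
    exact h0
  rw [hd, hD]
  rfl
end

section
/- Let v^1, v^2 be two vertices of F = {x : G^T x ≤ g, H^T x = h} with residuals r^{(1)} = g − G^T v^1 ≥ 0 and r^{(2)} = g − G^T v^2 ≥ 0. Then with x̂ = (1/2)(v^1+v^2) and X̂ = (1/2)(v^1 (v^2)^T + v^2 (v^1)^T), one has G^T X̂ G − G^T x̂ g^T − g x̂^T G + g g^T = (1/2)(r^{(1)} (r^{(2)})^T + r^{(2)} (r^{(1)})^T) ≥ 0; together with H^T x̂ = h and H^T X̂ = h x̂^T, this shows (x̂, X̂) ∈ 𝓕. -/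
open Matrix

lemma mul_vmv_s9 {k n m : ℕ} (M : Matrix (Fin k) (Fin n) ℝ) (a : Fin n → ℝ) (b : Fin m → ℝ) :
    M * vecMulVec a b = vecMulVec (M.mulVec a) b := by
  ext i j
  simp [Matrix.mul_apply, Matrix.vecMulVec_apply, Matrix.mulVec, dotProduct,
    Finset.sum_mul, mul_assoc]

lemma vmv_mul_s9 {k n m : ℕ} (M : Matrix (Fin n) (Fin m) ℝ) (a : Fin k → ℝ) (b : Fin n → ℝ) :
    vecMulVec a b * M = vecMulVec a (Mᵀ.mulVec b) := by
  ext i j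
  simp only [Matrix.mul_apply, Matrix.vecMulVec_apply, Matrix.mulVec, dotProduct,
    Finset.mul_sum, Matrix.transpose_apply]
  exact Finset.sum_congr rfl fun k _ => by ring

/-- For vertices `v¹, v²` of `F` with residuals `r⁽¹⁾ = g - Gᵀ v¹ ≥ 0`,
`r⁽²⁾ = g - Gᵀ v² ≥ 0`, setting `x̂ = ½(v¹+v²)` and `X̂ = ½(v¹(v²)ᵀ + v²(v¹)ᵀ)`,
one has `Gᵀ X̂ G − Gᵀ x̂ gᵀ − g x̂ᵀ G + g gᵀ = ½(r⁽¹⁾(r⁽²⁾)ᵀ + r⁽²⁾(r⁽¹⁾)ᵀ) ≥ 0`,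
`Hᵀ x̂ = h`, `Hᵀ X̂ = h x̂ᵀ`, and hence `(x̂, X̂) ∈ 𝓕`. -/
theorem stmt_9 {n m p : ℕ} (G : Matrix (Fin n) (Fin m) ℝ) (H : Matrix (Fin n) (Fin p) ℝ)
    (g : Fin m → ℝ) (h : Fin p → ℝ)
    (F : Set (Fin n → ℝ)) (hF : F = {x | Gᵀ.mulVec x ≤ g ∧ Hᵀ.mulVec x = h})
    (hne : F.Nonempty)
    (cF : Set ((Fin n → ℝ) × Matrix (Fin n) (Fin n) ℝ))
    (hcF : cF = {s | s.2.IsSymm ∧ Gᵀ.mulVec s.1 ≤ g ∧ Hᵀ.mulVec s.1 = h ∧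
      Hᵀ * s.2 = vecMulVec h s.1 ∧
      ∀ i j, 0 ≤ (Gᵀ * s.2 * G - vecMulVec (Gᵀ.mulVec s.1) g
        - vecMulVec g (Gᵀ.mulVec s.1) + vecMulVec g g) i j})
    (v₁ v₂ : Fin n → ℝ) (hv₁ : IsVertexPt F v₁) (hv₂ : IsVertexPt F v₂)
    (r₁ r₂ : Fin m → ℝ) (hr₁ : r₁ = g - Gᵀ.mulVec v₁) (hr₂ : r₂ = g - Gᵀ.mulVec v₂)
    (x : Fin n → ℝ) (hx : x = (1 / 2 : ℝ) • (v₁ + v₂))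
    (X : Matrix (Fin n) (Fin n) ℝ)
    (hX : X = (1 / 2 : ℝ) • (vecMulVec v₁ v₂ + vecMulVec v₂ v₁)) :
    0 ≤ r₁ ∧ 0 ≤ r₂ ∧
    Gᵀ * X * G - vecMulVec (Gᵀ.mulVec x) g - vecMulVec g (Gᵀ.mulVec x) + vecMulVec g g
      = (1 / 2 : ℝ) • (vecMulVec r₁ r₂ + vecMulVec r₂ r₁) ∧
    (∀ i j, 0 ≤ ((1 / 2 : ℝ) • (vecMulVec r₁ r₂ + vecMulVec r₂ r₁)) i j) ∧
    Hᵀ.mulVec x = h ∧ Hᵀ * X = vecMulVec h x ∧ (x, X) ∈ cF := by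
  obtain ⟨hm₁, -⟩ := hv₁
  obtain ⟨hm₂, -⟩ := hv₂
  rw [hF] at hm₁ hm₂
  obtain ⟨hG₁, hH₁⟩ := hm₁
  obtain ⟨hG₂, hH₂⟩ := hm₂
  have h0₁ : 0 ≤ r₁ := by rw [hr₁]; exact sub_nonneg.mpr hG₁
  have h0₂ : 0 ≤ r₂ := by rw [hr₂]; exact sub_nonneg.mpr hG₂
  have hGx : Gᵀ.mulVec x = (1 / 2 : ℝ) • (Gᵀ.mulVec v₁ + Gᵀ.mulVec v₂) := by
    rw [hx]; simp [Matrix.mulVec_add, Matrix.mulVec_smul]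
  have hHx : Hᵀ.mulVec x = h := by
    rw [hx]
    simp only [Matrix.mulVec_smul, Matrix.mulVec_add, hH₁, hH₂]
    ext i; simp; ring
  have hmain : Gᵀ * X * G - vecMulVec (Gᵀ.mulVec x) g - vecMulVec g (Gᵀ.mulVec x)
      + vecMulVec g g = (1 / 2 : ℝ) • (vecMulVec r₁ r₂ + vecMulVec r₂ r₁) := by
    rw [hX, hGx, hr₁, hr₂, Matrix.mul_smul, Matrix.smul_mul, Matrix.mul_add, Matrix.add_mul,
      mul_vmv_s9, mul_vmv_s9, vmv_mul_s9, vmv_mul_s9]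
    ext i j
    simp only [Matrix.smul_apply, Matrix.add_apply, Matrix.sub_apply, Matrix.vecMulVec_apply,
      Pi.smul_apply, Pi.add_apply, Pi.sub_apply, smul_eq_mul]
    ring
  have hnn : ∀ i j, 0 ≤ ((1 / 2 : ℝ) • (vecMulVec r₁ r₂ + vecMulVec r₂ r₁)) i j := by
    intro i j
    have h1 := h0₁ i; have h2 := h0₂ j; have h3 := h0₂ i; have h4 := h0₁ j
    simp only [Matrix.smul_apply, Matrix.add_apply, Matrix.vecMulVec_apply, smul_eq_mul]
    nlinarith [mul_nonneg h1 h2, mul_nonneg h3 h4]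
  have hHX : Hᵀ * X = vecMulVec h x := by
    rw [hX, hx, Matrix.mul_smul, Matrix.mul_add, mul_vmv_s9, mul_vmv_s9, hH₁, hH₂]
    ext i j
    simp only [Matrix.smul_apply, Matrix.add_apply, Matrix.vecMulVec_apply, Pi.smul_apply,
      Pi.add_apply, smul_eq_mul]
    ring
  have hsym : X.IsSymm := by
    show Xᵀ = X
    rw [hX]
    ext i j
    simp only [Matrix.transpose_apply, Matrix.smul_apply, Matrix.add_apply,
      Matrix.vecMulVec_apply, smul_eq_mul]
    ring
  refine ⟨h0₁, h0₂, hmain, hnn, hHx, hHX, ?_⟩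
  rw [hcF]
  refine ⟨hsym, ?_, hHx, hHX, fun i j => hmain ▸ hnn i j⟩
  rw [hGx]
  intro i
  have h1 := hG₁ i; have h2 := hG₂ i
  simp only [Pi.smul_apply, Pi.add_apply, smul_eq_mul]
  linarith
end

section
/- Let a ∈ ℝ^n with a ≥ 0 and a ≠ 0, and let 𝓕 = {(x,X) ∈ ℝ^n × S^n : X a = x, a^T x = 1, x ≥ 0, X ≥ 0}. Define V = {(1/a_j) e^j : a_j > 0}. Then (x̂, X̂) is a vertex of 𝓕 if and only if either (x̂, X̂) = (v, v v^T) for some v ∈ V, or (x̂, X̂) = ((1/2)(v^1 + v^2), (1/2)(v^1 (v^2)^T + v^2 (v^1)^T)) for distinct v^1, v^2 ∈ V. -/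
open Matrix

lemma pisingle_bnd {n : ℕ} (i m : Fin n) {c : ℝ} (hc : 0 ≤ c) :
    0 ≤ (Pi.single i c : Fin n → ℝ) m ∧ (Pi.single i c : Fin n → ℝ) m ≤ c := by
  rw [Pi.single_apply]; split <;> simp [hc]

lemma vecMulVec_mulVec' {n : ℕ} (u w v : Fin n → ℝ) :
    (vecMulVec u w).mulVec v = (w ⬝ᵥ v) • u := by
  ext m
  simp only [mulVec, dotProduct, vecMulVec_apply, Pi.smul_apply, smul_eq_mul]
  rw [Finset.sum_mul]
  exact Finset.sum_congr rfl fun q _ => by ring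

def symE {n : ℕ} (i j : Fin n) (c : ℝ) : Matrix (Fin n) (Fin n) ℝ :=
  Matrix.single i j c + Matrix.single j i c

lemma symE_apply {n : ℕ} (i j p q : Fin n) (c : ℝ) :
    symE i j c p q = (if i = p ∧ j = q then c else 0) + (if j = p ∧ i = q then c else 0) := by
  simp [symE, Matrix.single, Matrix.add_apply]

lemma stdBasis_transpose {n : ℕ} (i j : Fin n) (c : ℝ) :
    (Matrix.single i j c)ᵀ = Matrix.single j i c := by
  ext p q
  simp only [transpose_apply, Matrix.single, of_apply]
  split_ifs <;> tauto

lemma symE_isSymm {n : ℕ} (i j : Fin n) (c : ℝ) : (symE i j c).IsSymm := by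
  unfold Matrix.IsSymm symE
  rw [transpose_add, stdBasis_transpose, stdBasis_transpose, add_comm]

lemma symE_mulVec {n : ℕ} (i j : Fin n) (c : ℝ) (a : Fin n → ℝ) :
    (symE i j c).mulVec a = Pi.single i (c * a j) + Pi.single j (c * a i) := by
  rw [symE, add_mulVec, single_mulVec, single_mulVec]
  rfl

/-- For `a ≥ 0`, `a ≠ 0`, and `𝓕 = {(x,X) : X a = x, aᵀ x = 1, x ≥ 0, X ≥ 0}`,
`(x̂,X̂)` is a vertex of `𝓕` iff it equals `(v, v vᵀ)` for some `v ∈ V`, or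
`(½(v¹+v²), ½(v¹(v²)ᵀ+v²(v¹)ᵀ))` for distinct `v¹, v² ∈ V`, where
`V = {(1/aⱼ) eʲ : aⱼ > 0}`. -/
theorem stmt_10 {n : ℕ} (a : Fin n → ℝ) (ha : 0 ≤ a) (ha0 : a ≠ 0)
    (cF : Set ((Fin n → ℝ) × Matrix (Fin n) (Fin n) ℝ))
    (hcF : cF = {s | s.2.IsSymm ∧ s.2.mulVec a = s.1 ∧ a ⬝ᵥ s.1 = 1 ∧
      0 ≤ s.1 ∧ ∀ i j, 0 ≤ s.2 i j})
    (V : Set (Fin n → ℝ))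
    (hV : V = {v | ∃ j : Fin n, 0 < a j ∧ v = Pi.single j (a j)⁻¹})
    (x : Fin n → ℝ) (X : Matrix (Fin n) (Fin n) ℝ) :
    IsVertexPt cF (x, X) ↔
      ((∃ v ∈ V, x = v ∧ X = vecMulVec v v) ∨
       (∃ v₁ ∈ V, ∃ v₂ ∈ V, v₁ ≠ v₂ ∧ x = (1 / 2 : ℝ) • (v₁ + v₂) ∧
          X = (1 / 2 : ℝ) • (vecMulVec v₁ v₂ + vecMulVec v₂ v₁))) := by
  subst hcF hV
  have ha' : ∀ i, 0 ≤ a i := fun i => ha i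
  constructor
  · rintro ⟨hmem, hvert⟩
    obtain ⟨hsym, hXa, hax, hx0, hX0⟩ := hmem
    dsimp only at hsym hXa hax hx0 hX0
    have hx' : ∀ i, 0 ≤ x i := fun i => hx0 i
    have hXsym : ∀ p q, X q p = X p q := fun p q => hsym.apply p q
    have hxsum : ∀ m, x m = ∑ q, X m q * a q := by
      intro m
      rw [← hXa]
      rfl
    have hxlow : ∀ m r, X m r * a r ≤ x m := by
      intro m r
      rw [hxsum]
      exact Finset.single_le_sum (fun q _ => mul_nonneg (hX0 m q) (ha' q)) (Finset.mem_univ r)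
    have key : ∀ D : Matrix (Fin n) (Fin n) ℝ, D.IsSymm → a ⬝ᵥ D.mulVec a = 0 →
        (∀ m, -(x m) ≤ D.mulVec a m ∧ D.mulVec a m ≤ x m) →
        (∀ r s, -(X r s) ≤ D r s ∧ D r s ≤ X r s) → D = 0 := by
      intro D hDs hDa hdx hD
      have h1 : (x, X) + (D.mulVec a, D) ∈ {s : (Fin n → ℝ) × Matrix (Fin n) (Fin n) ℝ |
          s.2.IsSymm ∧ s.2.mulVec a = s.1 ∧ a ⬝ᵥ s.1 = 1 ∧ 0 ≤ s.1 ∧ ∀ i j, 0 ≤ s.2 i j} := by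
        rw [Prod.mk_add_mk]
        refine ⟨hsym.add hDs, ?_, ?_, ?_, ?_⟩
        · show (X + D).mulVec a = x + D.mulVec a
          rw [add_mulVec, hXa]
        · show a ⬝ᵥ (x + D.mulVec a) = 1
          rw [dotProduct_add, hax, hDa, add_zero]
        · intro m
          have h := (hdx m).1
          have h' := hx' m
          show 0 ≤ x m + D.mulVec a m
          linarith
        · intro r s
          have h := (hD r s).1
          show 0 ≤ X r s + D r s
          linarith
      have h2 : (x, X) - (D.mulVec a, D) ∈ {s : (Fin n → ℝ) × Matrix (Fin n) (Fin n) ℝ |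
          s.2.IsSymm ∧ s.2.mulVec a = s.1 ∧ a ⬝ᵥ s.1 = 1 ∧ 0 ≤ s.1 ∧ ∀ i j, 0 ≤ s.2 i j} := by
        rw [Prod.mk_sub_mk]
        refine ⟨hsym.sub hDs, ?_, ?_, ?_, ?_⟩
        · show (X - D).mulVec a = x - D.mulVec a
          rw [sub_mulVec, hXa]
        · show a ⬝ᵥ (x - D.mulVec a) = 1
          rw [dotProduct_sub, hax, hDa, sub_zero]
        · intro m
          have h := (hdx m).2
          have h' := hx' m
          show 0 ≤ x m - D.mulVec a m
          linarith
        · intro r s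
          have h := (hD r s).2
          show 0 ≤ X r s - D r s
          linarith
      have h3 := hvert (D.mulVec a, D) h1 h2
      rw [Prod.mk_eq_zero] at h3
      exact h3.2
    have hA : ∀ i k, a i = 0 → X i k = 0 := by
      intro i k hai
      by_contra hne0
      have hik : 0 < X i k := lt_of_le_of_ne (hX0 i k) (Ne.symm hne0)
      set c : ℝ := X i k / 2 with hc
      have hc0 : 0 < c := by rw [hc]; linarith
      have hcc : c + c = X i k := by rw [hc]; ring
      have hD0 := key (symE i k c) (symE_isSymm i k c) ?_ ?_ ?_
      · have h1 : symE i k c i k = 0 := by rw [hD0, Matrix.zero_apply]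
        rw [symE_apply, if_pos (⟨rfl, rfl⟩ : i = i ∧ k = k)] at h1
        split_ifs at h1 <;> linarith
      · rw [symE_mulVec, dotProduct_add, dotProduct_single, dotProduct_single, hai]
        ring
      · intro m
        rw [symE_mulVec]
        have hb1 := pisingle_bnd i m (mul_nonneg hc0.le (ha' k))
        have hb2 := pisingle_bnd k m (mul_nonneg hc0.le (ha' i))
        have hm := hx' m
        have hxm : (Pi.single i (c * a k) : Fin n → ℝ) m ≤ x m := by
          rw [Pi.single_apply]
          split_ifs with hmi
          · rw [hmi]
            have hxl := hxlow i k
            have h2c : X i k = 2 * c := by rw [hc]; ring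
            rw [h2c] at hxl
            have := mul_nonneg hc0.le (ha' k)
            linarith
          · exact hm
        have hz : (Pi.single k (c * a i) : Fin n → ℝ) m = 0 := by
          rw [hai, mul_zero]
          simp
        constructor
        · simp only [Pi.add_apply]
          linarith [hb1.1, hb2.1]
        · simp only [Pi.add_apply]
          rw [hz]
          linarith
      · intro r s
        rw [symE_apply]
        split_ifs with h1 h2 h2
        · have e : X r s = X i k := by rw [← h1.1, ← h1.2]
          constructor <;> (rw [e]; linarith)
        · have e : X r s = X i k := by rw [← h1.1, ← h1.2]
          constructor <;> (rw [e]; linarith)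
        · have e : X r s = X i k := by rw [← h2.1, ← h2.2]; exact hXsym i k
          constructor <;> (rw [e]; linarith)
        · have h := hX0 r s
          constructor <;> linarith
    have hA' : ∀ i k, a k = 0 → X i k = 0 := by
      intro i k h
      rw [hXsym k i]
      exact hA k i h
    have hB : ∀ i k p q, X i k ≠ 0 → X p q ≠ 0 →
        (p = i ∧ q = k) ∨ (p = k ∧ q = i) := by
      intro i k p q hik0 hpq0
      by_contra hnot
      rw [not_or] at hnot
      have hik : 0 < X i k := lt_of_le_of_ne (hX0 i k) (Ne.symm hik0)
      have hpq : 0 < X p q := lt_of_le_of_ne (hX0 p q) (Ne.symm hpq0)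
      have hai : 0 < a i := lt_of_le_of_ne (ha' i) fun h => hik0 (hA i k h.symm)
      have hak : 0 < a k := lt_of_le_of_ne (ha' k) fun h => hik0 (hA' i k h.symm)
      have hap : 0 < a p := lt_of_le_of_ne (ha' p) fun h => hpq0 (hA p q h.symm)
      have haq : 0 < a q := lt_of_le_of_ne (ha' q) fun h => hpq0 (hA' p q h.symm)
      set B : ℝ := (a p * a q) * (a k + a i) + (a i * a k) * (a q + a p) with hBdef
      have hBpos : 0 < B := by
        rw [hBdef]
        have h1 := mul_pos hap haq
        have h2 := mul_pos hai hak
        nlinarith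
      set ε : ℝ := min (min (X i k / (2 * (a p * a q))) (X p q / (2 * (a i * a k))))
        (min (min (x i / B) (x k / B)) (min (x p / B) (x q / B))) with hεdef
      have hxi : 0 < x i := lt_of_lt_of_le (mul_pos hik hak) (hxlow i k)
      have hxk : 0 < x k := by
        have h := hxlow k i
        have h2 : 0 < X k i * a i := mul_pos (by rw [hXsym i k]; exact hik) hai
        linarith
      have hxp : 0 < x p := lt_of_lt_of_le (mul_pos hpq haq) (hxlow p q)
      have hxq : 0 < x q := by
        have h := hxlow q p
        have h2 : 0 < X q p * a p := mul_pos (by rw [hXsym p q]; exact hpq) hap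
        linarith
      have hε : 0 < ε := by
        rw [hεdef]
        have e1 : 0 < X i k / (2 * (a p * a q)) :=
          div_pos hik (by have := mul_pos hap haq; linarith)
        have e2 : 0 < X p q / (2 * (a i * a k)) :=
          div_pos hpq (by have := mul_pos hai hak; linarith)
        simp only [lt_min_iff]
        exact ⟨⟨e1, e2⟩, ⟨⟨div_pos hxi hBpos, div_pos hxk hBpos⟩,
          ⟨div_pos hxp hBpos, div_pos hxq hBpos⟩⟩⟩
      set c₁ : ℝ := ε * (a p * a q) with hc₁
      set c₂ : ℝ := ε * (a i * a k) with hc₂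
      have hc₁0 : 0 < c₁ := by rw [hc₁]; exact mul_pos hε (mul_pos hap haq)
      have hc₂0 : 0 < c₂ := by rw [hc₂]; exact mul_pos hε (mul_pos hai hak)
      have h2c₁ : c₁ + c₁ ≤ X i k := by
        have h1 : ε ≤ X i k / (2 * (a p * a q)) := by
          rw [hεdef]; exact le_trans (min_le_left _ _) (min_le_left _ _)
        have h2 := (le_div_iff₀ (by have := mul_pos hap haq; linarith)).mp h1
        calc c₁ + c₁ = ε * (2 * (a p * a q)) := by rw [hc₁]; ring
          _ ≤ X i k := h2
      have h2c₂ : c₂ + c₂ ≤ X p q := by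
        have h1 : ε ≤ X p q / (2 * (a i * a k)) := by
          rw [hεdef]; exact le_trans (min_le_left _ _) (min_le_right _ _)
        have h2 := (le_div_iff₀ (by have := mul_pos hai hak; linarith)).mp h1
        calc c₂ + c₂ = ε * (2 * (a i * a k)) := by rw [hc₂]; ring
          _ ≤ X p q := h2
      have hεB : ∀ m, m = i ∨ m = k ∨ m = p ∨ m = q → ε * B ≤ x m := by
        intro m hm
        have hd : ∀ y : ℝ, ε ≤ y / B → ε * B ≤ y := fun y hy => (le_div_iff₀ hBpos).mp hy
        rcases hm with rfl | rfl | rfl | rfl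
        · refine hd _ ?_
          rw [hεdef]
          exact le_trans (min_le_right _ _) (le_trans (min_le_left _ _) (min_le_left _ _))
        · refine hd _ ?_
          rw [hεdef]
          exact le_trans (min_le_right _ _) (le_trans (min_le_left _ _) (min_le_right _ _))
        · refine hd _ ?_
          rw [hεdef]
          exact le_trans (min_le_right _ _) (le_trans (min_le_right _ _) (min_le_left _ _))
        · refine hd _ ?_
          rw [hεdef]
          exact le_trans (min_le_right _ _) (le_trans (min_le_right _ _) (min_le_right _ _))
      have hεBe : ε * B = c₁ * a k + c₁ * a i + (c₂ * a q + c₂ * a p) := by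
        rw [hBdef, hc₁, hc₂]; ring
      set D : Matrix (Fin n) (Fin n) ℝ := symE i k c₁ - symE p q c₂ with hDdef
      have hD0 := key D ((symE_isSymm i k c₁).sub (symE_isSymm p q c₂)) ?_ ?_ ?_
      · have h1 : D i k = 0 := by rw [hD0, Matrix.zero_apply]
        rw [hDdef, Matrix.sub_apply, symE_apply, symE_apply,
          if_pos (⟨rfl, rfl⟩ : i = i ∧ k = k), if_neg hnot.1,
          if_neg (fun hh => hnot.2 ⟨hh.2, hh.1⟩ : ¬(q = i ∧ p = k))] at h1
        split_ifs at h1 <;> linarith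
      · rw [hDdef, sub_mulVec, dotProduct_sub, symE_mulVec, symE_mulVec,
          dotProduct_add, dotProduct_add, dotProduct_single, dotProduct_single,
          dotProduct_single, dotProduct_single, hc₁, hc₂]
        ring
      · intro m
        have e : D.mulVec a m = (Pi.single i (c₁ * a k) : Fin n → ℝ) m
            + (Pi.single k (c₁ * a i) : Fin n → ℝ) m
            - ((Pi.single p (c₂ * a q) : Fin n → ℝ) m
              + (Pi.single q (c₂ * a p) : Fin n → ℝ) m) := by
          rw [hDdef, sub_mulVec, symE_mulVec, symE_mulVec]
          simp [Pi.sub_apply, Pi.add_apply]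
        have b1 := pisingle_bnd i m (mul_nonneg hc₁0.le (ha' k))
        have b2 := pisingle_bnd k m (mul_nonneg hc₁0.le (ha' i))
        have b3 := pisingle_bnd p m (mul_nonneg hc₂0.le (ha' q))
        have b4 := pisingle_bnd q m (mul_nonneg hc₂0.le (ha' p))
        by_cases hm : m = i ∨ m = k ∨ m = p ∨ m = q
        · have hxb := hεB m hm
          constructor
          · rw [e]
            linarith [b1.1, b1.2, b2.1, b2.2, b3.1, b3.2, b4.1, b4.2]
          · rw [e]
            linarith [b1.1, b1.2, b2.1, b2.2, b3.1, b3.2, b4.1, b4.2]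
        · push_neg at hm
          obtain ⟨hm1, hm2, hm3, hm4⟩ := hm
          have z1 : (Pi.single i (c₁ * a k) : Fin n → ℝ) m = 0 := Pi.single_eq_of_ne hm1 _
          have z2 : (Pi.single k (c₁ * a i) : Fin n → ℝ) m = 0 := Pi.single_eq_of_ne hm2 _
          have z3 : (Pi.single p (c₂ * a q) : Fin n → ℝ) m = 0 := Pi.single_eq_of_ne hm3 _
          have z4 : (Pi.single q (c₂ * a p) : Fin n → ℝ) m = 0 := Pi.single_eq_of_ne hm4 _
          constructor
          · rw [e, z1, z2, z3, z4]
            linarith [hx' m]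
          · rw [e, z1, z2, z3, z4]
            linarith [hx' m]
      · intro r s
        have e : D r s = ((if i = r ∧ k = s then c₁ else 0) + (if k = r ∧ i = s then c₁ else 0))
            - ((if p = r ∧ q = s then c₂ else 0) + (if q = r ∧ p = s then c₂ else 0)) := by
          rw [hDdef, Matrix.sub_apply, symE_apply, symE_apply]
        rw [e]
        by_cases h1 : i = r ∧ k = s <;> by_cases h2 : k = r ∧ i = s <;>
          by_cases h3 : p = r ∧ q = s <;> by_cases h4 : q = r ∧ p = s
        all_goals (first | rw [if_pos h1] | rw [if_neg h1])
        all_goals (first | rw [if_pos h2] | rw [if_neg h2])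
        all_goals (first | rw [if_pos h3] | rw [if_neg h3])
        all_goals (first | rw [if_pos h4] | rw [if_neg h4])
        all_goals try (obtain ⟨e1, e2⟩ := h1; obtain ⟨e3, e4⟩ := h3; exfalso; exact hnot.1 ⟨e3.trans e1.symm, e4.trans e2.symm⟩)
        all_goals try (obtain ⟨e1, e2⟩ := h1; obtain ⟨e3, e4⟩ := h4; exfalso; exact hnot.2 ⟨e4.trans e2.symm, e3.trans e1.symm⟩)
        all_goals try (obtain ⟨e1, e2⟩ := h2; obtain ⟨e3, e4⟩ := h3; exfalso; exact hnot.2 ⟨e3.trans e1.symm, e4.trans e2.symm⟩)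
        all_goals try (obtain ⟨e1, e2⟩ := h2; obtain ⟨e3, e4⟩ := h4; exfalso; exact hnot.1 ⟨e4.trans e2.symm, e3.trans e1.symm⟩)
        all_goals (
          first
          | (obtain ⟨e1, e2⟩ := h1
             have eX : X r s = X i k := by rw [← e1, ← e2]
             constructor <;> (rw [eX]; linarith [h2c₁, hc₁0.le, hc₂0.le, hik.le, hpq.le]))
          | (obtain ⟨e1, e2⟩ := h2
             have eX : X r s = X i k := by rw [← e1, ← e2]; exact hXsym i k
             constructor <;> (rw [eX]; linarith [h2c₁, hc₁0.le, hc₂0.le, hik.le, hpq.le]))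
          | (obtain ⟨e1, e2⟩ := h3
             have eX : X r s = X p q := by rw [← e1, ← e2]
             constructor <;> (rw [eX]; linarith [h2c₂, hc₁0.le, hc₂0.le, hik.le, hpq.le]))
          | (obtain ⟨e1, e2⟩ := h4
             have eX : X r s = X p q := by rw [← e1, ← e2]; exact hXsym p q
             constructor <;> (rw [eX]; linarith [h2c₂, hc₁0.le, hc₂0.le, hik.le, hpq.le]))
          | (constructor <;> linarith [hX0 r s]))
    have hXne : ∃ i k, X i k ≠ 0 := by
      by_contra h
      push_neg at h
      have hX00 : X = 0 := by
        ext p q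
        exact h p q
      rw [hX00, zero_mulVec] at hXa
      rw [← hXa, dotProduct_zero] at hax
      exact one_ne_zero hax.symm
    obtain ⟨i, k, hik0⟩ := hXne
    have hik : 0 < X i k := lt_of_le_of_ne (hX0 i k) (Ne.symm hik0)
    have hai : 0 < a i := lt_of_le_of_ne (ha' i) fun h => hik0 (hA i k h.symm)
    have hak : 0 < a k := lt_of_le_of_ne (ha' k) fun h => hik0 (hA' i k h.symm)
    have hsupp : ∀ p q, ¬((p = i ∧ q = k) ∨ (p = k ∧ q = i)) → X p q = 0 := by
      intro p q h
      by_contra h0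
      exact h (hB i k p q hik0 h0)
    by_cases hikeq : i = k
    · subst hikeq
      left
      have hxeq : x = Pi.single i (X i i * a i) := by
        funext m
        rw [hxsum m, Pi.single_apply]
        split_ifs with hmi
        · rw [hmi]
          refine Finset.sum_eq_single_of_mem i (Finset.mem_univ i) fun b _ hb => ?_
          rw [hsupp i b (by simp [hb]), zero_mul]
        · refine Finset.sum_eq_zero fun q _ => ?_
          rw [hsupp m q (by simp [hmi]), zero_mul]
      have h1 : a i * (X i i * a i) = 1 := by
        rw [hxeq, dotProduct_single] at hax
        exact hax
      have hane : a i ≠ 0 := hai.ne'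
      have hXii : X i i * a i = (a i)⁻¹ := by
        field_simp
        linear_combination h1
      refine ⟨Pi.single i (a i)⁻¹, ⟨i, hai, rfl⟩, ?_, ?_⟩
      · rw [hxeq, hXii]
      · ext p q
        rw [vecMulVec_apply]
        simp only [Pi.single_apply]
        by_cases h1' : p = i ∧ q = i
        · obtain ⟨rfl, rfl⟩ := h1'
          simp only [if_pos rfl]
          simp only [if_true]
          field_simp
          linear_combination h1
        · rw [hsupp p q (by rw [or_self]; exact h1')]
          rcases not_and_or.mp h1' with h | h <;> simp [h]
    · right
      have hXki : X k i = X i k := hXsym i k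
      have hxeq : x = Pi.single i (X i k * a k) + Pi.single k (X i k * a i) := by
        funext m
        rw [hxsum m, Pi.add_apply, Pi.single_apply, Pi.single_apply]
        by_cases h1 : m = i
        · rw [if_pos h1, if_neg (fun hh : m = k => hikeq (h1.symm.trans hh)), add_zero, h1]
          refine Finset.sum_eq_single_of_mem k (Finset.mem_univ k) fun b _ hb => ?_
          have hc : ¬((i = i ∧ b = k) ∨ (i = k ∧ b = i)) := by
            rintro (⟨-, h⟩ | ⟨h, -⟩)
            · exact hb h
            · exact hikeq h
          rw [hsupp i b hc, zero_mul]
        · by_cases h2 : m = k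
          · rw [if_neg h1, if_pos h2, zero_add, h2, ← hXki]
            refine Finset.sum_eq_single_of_mem i (Finset.mem_univ i) fun b _ hb => ?_
            have hc : ¬((k = i ∧ b = k) ∨ (k = k ∧ b = i)) := by
              rintro (⟨h, -⟩ | ⟨-, h⟩)
              · exact hikeq h.symm
              · exact hb h
            rw [hsupp k b hc, zero_mul]
          · rw [if_neg h1, if_neg h2, add_zero]
            refine Finset.sum_eq_zero fun q _ => ?_
            have hc : ¬((m = i ∧ q = k) ∨ (m = k ∧ q = i)) := by
              rintro (⟨h, -⟩ | ⟨h, -⟩)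
              · exact h1 h
              · exact h2 h
            rw [hsupp m q hc, zero_mul]
      have h1 : a i * (X i k * a k) + a k * (X i k * a i) = 1 := by
        rw [hxeq, dotProduct_add, dotProduct_single, dotProduct_single] at hax
        exact hax
      have hXik : X i k * (2 * (a i * a k)) = 1 := by linear_combination h1
      have hane : a i ≠ 0 := hai.ne'
      have hkne : a k ≠ 0 := hak.ne'
      refine ⟨Pi.single i (a i)⁻¹, ⟨i, hai, rfl⟩, Pi.single k (a k)⁻¹, ⟨k, hak, rfl⟩, ?_, ?_, ?_⟩
      · intro hv
        have h := congrFun hv i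
        rw [Pi.single_eq_same, Pi.single_eq_of_ne hikeq] at h
        exact inv_ne_zero hane h
      · rw [hxeq]
        funext m
        simp only [Pi.add_apply, Pi.smul_apply, Pi.single_apply, smul_eq_mul]
        by_cases hm1 : m = i
        · rw [if_pos hm1, if_pos hm1, if_neg (fun hh : m = k => hikeq (hm1.symm.trans hh)),
            if_neg (fun hh : m = k => hikeq (hm1.symm.trans hh))]
          rw [add_zero, add_zero]
          apply mul_left_cancel₀ (show (2 * a i) ≠ 0 by positivity)
          rw [show 2 * a i * (1 / 2 * (a i)⁻¹) = a i * (a i)⁻¹ by ring, mul_inv_cancel₀ hane]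
          linear_combination hXik
        · by_cases hm2 : m = k
          · rw [if_neg hm1, if_neg hm1, if_pos hm2, if_pos hm2, zero_add, zero_add]
            apply mul_left_cancel₀ (show (2 * a k) ≠ 0 by positivity)
            rw [show 2 * a k * (1 / 2 * (a k)⁻¹) = a k * (a k)⁻¹ by ring, mul_inv_cancel₀ hkne]
            linear_combination hXik
          · rw [if_neg hm1, if_neg hm1, if_neg hm2, if_neg hm2]
            ring
      · ext p q
        simp only [Matrix.smul_apply, Matrix.add_apply, vecMulVec_apply, smul_eq_mul, Pi.single_apply]
        by_cases h1' : p = i ∧ q = k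
        · obtain ⟨rfl, rfl⟩ := h1'
          rw [if_pos rfl, if_pos rfl, if_neg hikeq, if_neg (Ne.symm hikeq)]
          field_simp
          linear_combination hXik
        · by_cases h2' : p = k ∧ q = i
          · obtain ⟨rfl, rfl⟩ := h2'
            rw [if_pos rfl, if_pos rfl, if_neg (Ne.symm hikeq), if_neg hikeq, hXki]
            field_simp
            linear_combination hXik
          · rw [hsupp p q (by rw [not_or]; exact ⟨h1', h2'⟩)]
            have z1 : (if p = i then (a i)⁻¹ else 0) * (if q = k then (a k)⁻¹ else 0) = 0 := by
              rcases not_and_or.mp h1' with h | h <;> simp [h]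
            have z2 : (if p = k then (a k)⁻¹ else 0) * (if q = i then (a i)⁻¹ else 0) = 0 := by
              rcases not_and_or.mp h2' with h | h <;> simp [h]
            rw [z1, z2]
            ring
  · rintro (⟨v, hvV, rfl, rfl⟩ | ⟨v₁, hv1, v₂, hv2, hne, rfl, rfl⟩)
    · obtain ⟨j, hj, rfl⟩ := hvV
      set v : Fin n → ℝ := Pi.single j (a j)⁻¹ with hv
      have hv0 : ∀ m, 0 ≤ v m := fun m => (pisingle_bnd j m (inv_nonneg.mpr hj.le)).1
      have hva : v ⬝ᵥ a = 1 := by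
        rw [hv, single_dotProduct]; exact inv_mul_cancel₀ hj.ne'
      have hav : a ⬝ᵥ v = 1 := by
        rw [hv, dotProduct_single]; exact mul_inv_cancel₀ hj.ne'
      have hXv : (vecMulVec v v).mulVec a = v := by
        rw [vecMulVec_mulVec', hva, one_smul]
      have hvz : ∀ p q : Fin n, ¬(p = j ∧ q = j) → vecMulVec v v p q = 0 := by
        intro p q h
        rw [not_and_or] at h
        rw [vecMulVec_apply]
        rcases h with h | h
        · rw [hv, Pi.single_eq_of_ne h, zero_mul]
        · rw [hv, Pi.single_eq_of_ne h, mul_zero]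
      refine ⟨⟨?_, hXv, hav, fun m => hv0 m, fun p q => mul_nonneg (hv0 p) (hv0 q)⟩, ?_⟩
      · show (vecMulVec v v).IsSymm
        ext p q
        rw [transpose_apply, vecMulVec_apply, vecMulVec_apply, mul_comm]
      · rintro ⟨dx, D⟩ hp hm
        simp only [Prod.mk_add_mk, Prod.mk_sub_mk, Set.mem_setOf_eq] at hp hm
        obtain ⟨hps, hpa, hpd, hpx, hpM⟩ := hp
        obtain ⟨hms, hma, hmd, hmx, hmM⟩ := hm
        have hDz : ∀ p q, ¬(p = j ∧ q = j) → D p q = 0 := by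
          intro p q h
          have h1 := hpM p q
          have h2 := hmM p q
          rw [Matrix.add_apply, hvz p q h] at h1
          rw [Matrix.sub_apply, hvz p q h] at h2
          linarith
        have hdxD : D.mulVec a = dx := by
          rw [add_mulVec, hXv] at hpa
          exact add_left_cancel hpa
        have hda0 : a ⬝ᵥ dx = 0 := by
          rw [dotProduct_add, hav] at hpd
          linarith
        have hrow : ∀ p, D.mulVec a p = if p = j then D j j * a j else 0 := by
          intro p
          show ∑ q, D p q * a q = _
          by_cases hpj : p = j
          · rw [if_pos hpj, hpj]
            exact Finset.sum_eq_single_of_mem j (Finset.mem_univ j)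
              fun b _ hb => by rw [hDz j b fun hh => hb hh.2, zero_mul]
          · rw [if_neg hpj]
            exact Finset.sum_eq_zero fun q _ => by rw [hDz p q fun hh => hpj hh.1, zero_mul]
        have hsum : a ⬝ᵥ D.mulVec a = a j * (D j j * a j) := by
          show ∑ p, a p * D.mulVec a p = _
          have hz : ∀ b ∈ Finset.univ, b ≠ j → a b * D.mulVec a b = 0 := by
            intro b _ hb
            rw [hrow b, if_neg hb, mul_zero]
          rw [Finset.sum_eq_single_of_mem j (Finset.mem_univ j) hz, hrow j, if_pos rfl]
        rw [← hdxD, hsum] at hda0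
        have hDjj : D j j = 0 := by
          rcases mul_eq_zero.mp hda0 with h | h
          · exact absurd h hj.ne'
          · rcases mul_eq_zero.mp h with h | h
            · exact h
            · exact absurd h hj.ne'
        have hD0 : D = 0 := by
          ext p q
          by_cases h : p = j ∧ q = j
          · obtain ⟨rfl, rfl⟩ := h
            simpa using hDjj
          · simpa using hDz p q h
        have hdx0 : dx = 0 := by rw [← hdxD, hD0, zero_mulVec]
        rw [Prod.mk_eq_zero]
        exact ⟨hdx0, hD0⟩
    · obtain ⟨j, hj, rfl⟩ := hv1
      obtain ⟨k, hk, rfl⟩ := hv2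
      have hjk : j ≠ k := by
        rintro rfl
        exact hne rfl
      set v₁ : Fin n → ℝ := Pi.single j (a j)⁻¹ with hv1d
      set v₂ : Fin n → ℝ := Pi.single k (a k)⁻¹ with hv2d
      have hv10 : ∀ m, 0 ≤ v₁ m := fun m => (pisingle_bnd j m (inv_nonneg.mpr hj.le)).1
      have hv20 : ∀ m, 0 ≤ v₂ m := fun m => (pisingle_bnd k m (inv_nonneg.mpr hk.le)).1
      have hv1a : v₁ ⬝ᵥ a = 1 := by rw [hv1d, single_dotProduct]; exact inv_mul_cancel₀ hj.ne'
      have hv2a : v₂ ⬝ᵥ a = 1 := by rw [hv2d, single_dotProduct]; exact inv_mul_cancel₀ hk.ne'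
      have hav1 : a ⬝ᵥ v₁ = 1 := by rw [hv1d, dotProduct_single]; exact mul_inv_cancel₀ hj.ne'
      have hav2 : a ⬝ᵥ v₂ = 1 := by rw [hv2d, dotProduct_single]; exact mul_inv_cancel₀ hk.ne'
      set M : Matrix (Fin n) (Fin n) ℝ := (1 / 2 : ℝ) • (vecMulVec v₁ v₂ + vecMulVec v₂ v₁) with hM
      set xx : Fin n → ℝ := (1 / 2 : ℝ) • (v₁ + v₂) with hxx
      have hMs : M.IsSymm := by
        show Mᵀ = M
        ext p q
        rw [hM]
        simp only [transpose_apply, Matrix.smul_apply, Matrix.add_apply, vecMulVec_apply, smul_eq_mul]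
        ring
      have hMa : M.mulVec a = xx := by
        rw [hM, smul_mulVec, add_mulVec, vecMulVec_mulVec', vecMulVec_mulVec', hv2a, hv1a,
          one_smul, one_smul, hxx]
      have haxx : a ⬝ᵥ xx = 1 := by
        rw [hxx, dotProduct_smul, dotProduct_add, hav1, hav2]
        norm_num
      have hxx0 : ∀ m, 0 ≤ xx m := by
        intro m
        rw [hxx]
        simp only [Pi.smul_apply, Pi.add_apply, smul_eq_mul]
        have := hv10 m; have := hv20 m; linarith
      have hM0 : ∀ p q, 0 ≤ M p q := by
        intro p q
        rw [hM]
        simp only [Matrix.smul_apply, Matrix.add_apply, vecMulVec_apply, smul_eq_mul]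
        have := mul_nonneg (hv10 p) (hv20 q)
        have := mul_nonneg (hv20 p) (hv10 q)
        linarith
      have hMz : ∀ p q : Fin n, ¬((p = j ∧ q = k) ∨ (p = k ∧ q = j)) → M p q = 0 := by
        intro p q h
        rw [not_or] at h
        rw [hM]
        simp only [Matrix.smul_apply, Matrix.add_apply, vecMulVec_apply, smul_eq_mul]
        have h1 : v₁ p * v₂ q = 0 := by
          rcases not_and_or.mp h.1 with h' | h'
          · rw [hv1d, Pi.single_eq_of_ne h', zero_mul]
          · rw [hv2d, Pi.single_eq_of_ne h', mul_zero]
        have h2 : v₂ p * v₁ q = 0 := by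
          rcases not_and_or.mp h.2 with h' | h'
          · rw [hv2d, Pi.single_eq_of_ne h', zero_mul]
          · rw [hv1d, Pi.single_eq_of_ne h', mul_zero]
        rw [h1, h2]; ring
      refine ⟨⟨hMs, hMa, haxx, fun m => hxx0 m, hM0⟩, ?_⟩
      rintro ⟨dx, D⟩ hp hm
      simp only [Prod.mk_add_mk, Prod.mk_sub_mk, Set.mem_setOf_eq] at hp hm
      obtain ⟨hps, hpa, hpd, hpx, hpM⟩ := hp
      obtain ⟨hms, hma, hmd, hmx, hmM⟩ := hm
      have hDz : ∀ p q, ¬((p = j ∧ q = k) ∨ (p = k ∧ q = j)) → D p q = 0 := by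
        intro p q h
        have h1 := hpM p q
        have h2 := hmM p q
        rw [Matrix.add_apply, hMz p q h] at h1
        rw [Matrix.sub_apply, hMz p q h] at h2
        linarith
      have hDs : D.IsSymm := by
        have h1 : D = (M + D) - M := (add_sub_cancel_left M D).symm
        rw [h1]
        exact hps.sub hMs
      have hDkj : D k j = D j k := hDs.apply j k
      have hdxD : D.mulVec a = dx := by
        rw [add_mulVec, hMa] at hpa
        exact add_left_cancel hpa
      have hda0 : a ⬝ᵥ dx = 0 := by
        rw [dotProduct_add, haxx] at hpd
        linarith
      have hrow : ∀ p, D.mulVec a p =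
          (if p = j then D j k * a k else 0) + (if p = k then D k j * a j else 0) := by
        intro p
        show ∑ q, D p q * a q = _
        by_cases h1 : p = j
        · rw [if_pos h1, if_neg (fun hh => hjk (h1 ▸ hh)), add_zero, h1]
          refine Finset.sum_eq_single_of_mem k (Finset.mem_univ k) fun b _ hb => ?_
          have hc : ¬((j = j ∧ b = k) ∨ (j = k ∧ b = j)) := by
            rintro (⟨-, h⟩ | ⟨h, -⟩)
            · exact hb h
            · exact hjk h
          rw [hDz j b hc, zero_mul]
        · by_cases h2 : p = k
          · rw [if_neg h1, if_pos h2, zero_add, h2]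
            refine Finset.sum_eq_single_of_mem j (Finset.mem_univ j) fun b _ hb => ?_
            have hc : ¬((k = j ∧ b = k) ∨ (k = k ∧ b = j)) := by
              rintro (⟨h, -⟩ | ⟨-, h⟩)
              · exact hjk h.symm
              · exact hb h
            rw [hDz k b hc, zero_mul]
          · rw [if_neg h1, if_neg h2, add_zero]
            refine Finset.sum_eq_zero fun q _ => ?_
            have hc : ¬((p = j ∧ q = k) ∨ (p = k ∧ q = j)) := by
              rintro (⟨h, -⟩ | ⟨h, -⟩)
              · exact h1 h
              · exact h2 h
            rw [hDz p q hc, zero_mul]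
      have hsum : a ⬝ᵥ D.mulVec a = a j * (D j k * a k) + a k * (D k j * a j) := by
        show ∑ p, a p * D.mulVec a p = _
        have hsub : ∑ p, a p * D.mulVec a p
            = ∑ p ∈ ({j, k} : Finset (Fin n)), a p * D.mulVec a p := by
          refine (Finset.sum_subset (Finset.subset_univ _) fun p _ hp => ?_).symm
          simp only [Finset.mem_insert, Finset.mem_singleton, not_or] at hp
          rw [hrow p, if_neg hp.1, if_neg hp.2, add_zero, mul_zero]
        rw [hsub, Finset.sum_pair hjk, hrow j, hrow k, if_pos rfl, if_pos rfl,
          if_neg hjk, if_neg (Ne.symm hjk)]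
        ring
      rw [← hdxD, hsum, hDkj] at hda0
      have ht : D j k * (2 * (a j * a k)) = 0 := by linear_combination hda0
      have hDjk : D j k = 0 := by
        rcases mul_eq_zero.mp ht with h | h
        · exact h
        · nlinarith [mul_pos hj hk]
      have hD0 : D = 0 := by
        ext p q
        rw [Matrix.zero_apply]
        rcases Classical.em ((p = j ∧ q = k) ∨ (p = k ∧ q = j)) with h | h
        · rcases h with ⟨rfl, rfl⟩ | ⟨rfl, rfl⟩
          · exact hDjk
          · rw [hDkj]; exact hDjk
        · exact hDz p q h
      have hdx0 : dx = 0 := by rw [← hdxD, hD0, zero_mulVec]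
      rw [Prod.mk_eq_zero]
      exact ⟨hdx0, hD0⟩
end

section
/- For the standard quadratic program min{(1/2) x^T Q x + c^T x : e^T x = 1, x ≥ 0} with Q ∈ S^n, c ∈ ℝ^n, the optimal value of its RLT relaxation min{(1/2)⟨Q,X⟩ + c^T x : X e = x, e^T x = 1, x ≥ 0, X ≥ 0} equals min{ min_{k}((1/2) Q_{kk} + c_k), min_{i ≠ j}(1/2)(Q_{ij} + c_i + c_j) }. -/
open Matrix

/-- For the standard quadratic program `min{½ xᵀQx + cᵀx : eᵀx = 1, x ≥ 0}`, the
optimal value of its RLT relaxation equals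
`min{ min_k (½ Q_kk + c_k), min_{i ≠ j} ½ (Q_ij + c_i + c_j) }`. -/
theorem stmt_11 {n : ℕ} (hn : 2 ≤ n) (Q : Matrix (Fin n) (Fin n) ℝ) (hQ : Q.IsSymm)
    (c : Fin n → ℝ)
    (h₁ : (Finset.univ : Finset (Fin n)).Nonempty)
    (h₂ : ((Finset.univ : Finset (Fin n × Fin n)).filter fun q => q.1 ≠ q.2).Nonempty)
    (S : Set ℝ)
    (hS : S = {val | ∃ (x : Fin n → ℝ) (X : Matrix (Fin n) (Fin n) ℝ),
      X.IsSymm ∧ X.mulVec (fun _ => 1) = x ∧ (fun _ => (1 : ℝ)) ⬝ᵥ x = 1 ∧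
      0 ≤ x ∧ (∀ i j, 0 ≤ X i j) ∧
      val = 1 / 2 * (Qᵀ * X).trace + c ⬝ᵥ x}) :
    IsLeast S
      (min ((Finset.univ : Finset (Fin n)).inf' h₁ fun k => 1 / 2 * Q k k + c k)
        (((Finset.univ : Finset (Fin n × Fin n)).filter fun q => q.1 ≠ q.2).inf' h₂
          fun q => 1 / 2 * (Q q.1 q.2 + c q.1 + c q.2))) := by
  have htr : ∀ X : Matrix (Fin n) (Fin n) ℝ, (Qᵀ * X).trace = ∑ a, ∑ b, Q a b * X a b := by
    intro X
    simp [Matrix.trace, Matrix.mul_apply, Matrix.diag]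
    exact Finset.sum_comm
  have hsplit : ∀ (f g : Fin n → Fin n → ℝ),
      (∑ a, ∑ b, (f a b + g a b)) = (∑ a, ∑ b, f a b) + (∑ a, ∑ b, g a b) := by
    intro f g; rw [← Finset.sum_add_distrib]
    exact Finset.sum_congr rfl fun a _ => Finset.sum_add_distrib
  have hmul : ∀ (r : ℝ) (f : Fin n → Fin n → ℝ),
      (∑ a, ∑ b, r * f a b) = r * ∑ a, ∑ b, f a b := by
    intro r f
    rw [Finset.mul_sum]
    exact Finset.sum_congr rfl fun a _ => (Finset.mul_sum _ _ _).symm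
  have hcongr : ∀ (f g : Fin n → Fin n → ℝ), (∀ a b, f a b = g a b) →
      (∑ a, ∑ b, f a b) = ∑ a, ∑ b, g a b := fun f g h =>
    Finset.sum_congr rfl fun a _ => Finset.sum_congr rfl fun b _ => h a b
  subst hS
  constructor
  · -- membership
    rcases min_cases ((Finset.univ : Finset (Fin n)).inf' h₁ fun k => 1 / 2 * Q k k + c k)
      (((Finset.univ : Finset (Fin n × Fin n)).filter fun q => q.1 ≠ q.2).inf' h₂
        fun q => 1 / 2 * (Q q.1 q.2 + c q.1 + c q.2)) with h | h <;> rw [h.1]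
    · -- diagonal vertex
      obtain ⟨k, -, hk⟩ := Finset.exists_mem_eq_inf' h₁ fun k => 1 / 2 * Q k k + c k
      rw [hk]
      refine ⟨fun i => if i = k then 1 else 0,
        Matrix.of fun i j => if i = k ∧ j = k then 1 else 0, ?_, ?_, ?_, ?_, ?_, ?_⟩
      · ext i j; simp [Matrix.transpose_apply, and_comm]
      · ext i
        by_cases hik : i = k <;>
          simp [Matrix.mulVec, dotProduct, hik, ite_and]
      · simp [dotProduct]
      · intro i; positivity
      · intro i j; dsimp; positivity
      · rw [htr]
        simp [dotProduct, mul_ite, ite_and]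
    · -- off-diagonal vertex
      obtain ⟨p, hpmem, hp⟩ := Finset.exists_mem_eq_inf' h₂
        fun q => 1 / 2 * (Q q.1 q.2 + c q.1 + c q.2)
      obtain ⟨i, j⟩ := p
      simp only [Finset.mem_filter, Finset.mem_univ, true_and] at hpmem
      rw [hp]
      have hsym : Q j i = Q i j := by
        have := congrFun (congrFun hQ j) i
        simpa [Matrix.transpose_apply] using this.symm
      refine ⟨fun l => (if l = i then (1:ℝ)/2 else 0) + (if l = j then 1/2 else 0),
        Matrix.of fun a b => (if a = i ∧ b = j then (1:ℝ)/2 else 0) +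
          (if a = j ∧ b = i then 1/2 else 0), ?_, ?_, ?_, ?_, ?_, ?_⟩
      · ext a b
        simp only [Matrix.transpose_apply, Matrix.of_apply]
        rw [add_comm]
        congr 1 <;> simp [and_comm]
      · ext a
        simp only [Matrix.mulVec, dotProduct, Matrix.of_apply, mul_one,
          Finset.sum_add_distrib]
        congr 1
        · by_cases hai : a = i <;> simp [hai, ite_and]
        · by_cases haj : a = j <;> simp [haj, ite_and]
      · simp [dotProduct, Finset.sum_add_distrib]
        norm_num
      · intro l; dsimp; positivity
      · intro a b; dsimp; positivity
      · have h3 : (Qᵀ * (Matrix.of fun a b => (if a = i ∧ b = j then (1:ℝ)/2 else 0) +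
            (if a = j ∧ b = i then 1/2 else 0))).trace = Q i j := by
          rw [htr]
          simp [mul_add, mul_ite, ite_and, Finset.sum_add_distrib, hsym]
          ring
        have h4 : c ⬝ᵥ (fun l => (if l = i then (1:ℝ)/2 else 0) + (if l = j then 1/2 else 0))
            = (c i + c j) / 2 := by
          simp [dotProduct, mul_add, mul_ite, Finset.sum_add_distrib]
          ring
        rw [h3, h4]; ring
  · -- lower bound
    rintro v ⟨x, X, hXsym, hXe, hex, hx, hX, rfl⟩
    set m := (min ((Finset.univ : Finset (Fin n)).inf' h₁ fun k => 1 / 2 * Q k k + c k)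
        (((Finset.univ : Finset (Fin n × Fin n)).filter fun q => q.1 ≠ q.2).inf' h₂
          fun q => 1 / 2 * (Q q.1 q.2 + c q.1 + c q.2))) with hm
    have hxdef : ∀ a, x a = ∑ b, X a b := by
      intro a
      rw [← congrFun hXe a]
      simp [Matrix.mulVec, dotProduct]
    have hsum1 : ∑ a, ∑ b, X a b = 1 := by
      rw [← hex]; simp [dotProduct, hxdef]
    have hc : c ⬝ᵥ x = ∑ a, ∑ b, (c a + c b) / 2 * X a b := by
      have h1 : c ⬝ᵥ x = ∑ a, ∑ b, c a * X a b := by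
        simp [dotProduct, hxdef, Finset.mul_sum]
      have h2 : (∑ a, ∑ b, c a * X a b) = ∑ a, ∑ b, c b * X a b := by
        rw [Finset.sum_comm]
        refine Finset.sum_congr rfl fun a _ => Finset.sum_congr rfl fun b _ => ?_
        have : X b a = X a b := by
          have := congrFun (congrFun hXsym a) b
          simpa [Matrix.transpose_apply] using this
        rw [this]
      have h5 : (∑ a, ∑ b, (c a + c b) / 2 * X a b)
          = (∑ a, ∑ b, (1/2 * (c a * X a b) + 1/2 * (c b * X a b))) :=
        hcongr _ _ fun a b => by ring
      rw [h5, hsplit, hmul, hmul, ← h2, h1]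
      ring
    have key : 1 / 2 * (Qᵀ * X).trace + c ⬝ᵥ x
        = ∑ a, ∑ b, (1 / 2 * Q a b + (c a + c b) / 2) * X a b := by
      rw [htr, hc,
        hcongr (fun a b => (1 / 2 * Q a b + (c a + c b) / 2) * X a b)
          (fun a b => 1/2 * (Q a b * X a b) + (c a + c b) / 2 * X a b)
          (fun a b => by ring),
        hsplit, hmul]
    rw [key]
    calc m = ∑ a, ∑ b, m * X a b := by rw [show (∑ a, ∑ b, m * X a b) = m * ∑ a, ∑ b, X a b from hmul m X, hsum1, mul_one]
      _ ≤ ∑ a, ∑ b, (1 / 2 * Q a b + (c a + c b) / 2) * X a b := by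
          refine Finset.sum_le_sum fun a _ => Finset.sum_le_sum fun b _ => ?_
          refine mul_le_mul_of_nonneg_right ?_ (hX a b)
          by_cases hab : a = b
          · subst hab
            refine le_trans (min_le_left _ _) ?_
            calc _ ≤ 1/2 * Q a a + c a :=
                Finset.inf'_le (fun k => 1 / 2 * Q k k + c k) (Finset.mem_univ a)
              _ = _ := by ring
          · refine le_trans (min_le_right _ _) ?_
            have hmem : (a, b) ∈ (Finset.univ : Finset (Fin n × Fin n)).filter
                fun q => q.1 ≠ q.2 := by simp [hab]
            calc _ ≤ 1/2 * (Q a b + c a + c b) :=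
                Finset.inf'_le (fun q => 1 / 2 * (Q q.1 q.2 + c q.1 + c q.2)) hmem
              _ = _ := by ring
end

section
/- For the standard quadratic program over the unit simplex, the feasible region 𝓕 = {(x,X) : X e = x, e^T x = 1, x ≥ 0, X ≥ 0} of the RLT relaxation has vertices exactly: (e^j, e^j (e^j)^T) for j = 1,…,n, and ((1/2)(e^i + e^j), (1/2)(e^i (e^j)^T + e^j (e^i)^T)) for 1 ≤ i < j ≤ n. -/
open Matrix

namespace Stmt12Aux

variable {n : ℕ}

/-- The feasible region. -/
def Feas (n : ℕ) : Set ((Fin n → ℝ) × Matrix (Fin n) (Fin n) ℝ) :=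
  {s | s.2.IsSymm ∧ s.2.mulVec (fun _ => 1) = s.1 ∧
      (fun _ => (1 : ℝ)) ⬝ᵥ s.1 = 1 ∧ 0 ≤ s.1 ∧ ∀ i j, 0 ≤ s.2 i j}

lemma mem_Feas_mk (v : Fin n → ℝ) (M : Matrix (Fin n) (Fin n) ℝ) :
    (v, M) ∈ Feas n ↔ M.IsSymm ∧ M.mulVec (fun _ => 1) = v ∧
      (fun _ => (1 : ℝ)) ⬝ᵥ v = 1 ∧ 0 ≤ v ∧ ∀ i j, 0 ≤ M i j := Iff.rfl

/-- symmetric "indicator" matrix of the orbit of position `(p,q)`. -/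
def Tm (p q : Fin n) : Matrix (Fin n) (Fin n) ℝ :=
  fun r s => if (r = p ∧ s = q) ∨ (r = q ∧ s = p) then 1 else 0

lemma Tm_nonneg (p q r s : Fin n) : 0 ≤ Tm p q r s := by
  unfold Tm; split <;> norm_num

lemma Tm_symm (p q : Fin n) : (Tm p q).IsSymm := by
  ext r s
  simp only [Matrix.transpose_apply, Tm]
  exact if_congr (by tauto) rfl rfl

lemma Tm_apply_self (p q : Fin n) : Tm p q p q = 1 := by simp [Tm]

lemma Tm_apply_swap (p q : Fin n) : Tm p q q p = 1 := by simp [Tm]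

lemma Tm_eq_zero {p q r s : Fin n} (h : ¬ ((r = p ∧ s = q) ∨ (r = q ∧ s = p))) :
    Tm p q r s = 0 := by simp only [Tm, if_neg h]

lemma Tm_rowsum (p q r : Fin n) :
    ∑ s, Tm p q r s =
      (if p = q then (if r = p then (1 : ℝ) else 0)
       else (if r = p then 1 else 0) + (if r = q then 1 else 0)) := by
  by_cases hpq : p = q
  · subst hpq
    by_cases hr : r = p
    · subst hr
      simp [Tm, Finset.sum_ite_eq']
    · simp [Tm, hr]
  · by_cases hr1 : r = p
    · subst hr1
      simp [Tm, hpq, Finset.sum_ite_eq', Ne.symm hpq]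
    · by_cases hr2 : r = q
      · subst hr2
        simp [Tm, hpq, hr1, Finset.sum_ite_eq', Ne.symm hpq]
      · simp [Tm, hpq, hr1, hr2]

lemma Tm_total (p q : Fin n) :
    ∑ r, ∑ s, Tm p q r s = if p = q then 1 else 2 := by
  simp only [Tm_rowsum]
  by_cases hpq : p = q
  · simp [hpq, Finset.sum_ite_eq']
  · simp [hpq, Finset.sum_add_distrib, Finset.sum_ite_eq']
    norm_num

lemma smulTm_mulVec (p q : Fin n) (a : ℝ) :
    (a • Tm p q).mulVec (fun _ => 1) =
      if p = q then a • (Pi.single p 1 : Fin n → ℝ)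
      else a • ((Pi.single p 1 : Fin n → ℝ) + Pi.single q 1) := by
  funext r
  have h1 : ((a • Tm p q).mulVec (fun _ => 1)) r = a * ∑ s, Tm p q r s := by
    simp [Matrix.mulVec, dotProduct, Finset.mul_sum]
  rw [h1, Tm_rowsum]
  by_cases hpq : p = q
  · rw [if_pos hpq, if_pos hpq]
    simp [Pi.single_apply, mul_ite]
  · rw [if_neg hpq, if_neg hpq]
    simp [Pi.single_apply, mul_add, mul_ite]

lemma smulTm_eq (p q : Fin n) (a : ℝ) :
    a • Tm p q = if p = q then a • vecMulVec (Pi.single p (1:ℝ)) (Pi.single p 1)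
      else a • (vecMulVec (Pi.single p (1:ℝ)) (Pi.single q 1)
        + vecMulVec (Pi.single q 1) (Pi.single p 1)) := by
  by_cases hpq : p = q
  · subst hpq
    rw [if_pos rfl]
    funext r s
    by_cases hr : r = p <;> by_cases hs : s = p <;>
      simp [Tm, vecMulVec, Pi.single_apply, hr, hs]
  · rw [if_neg hpq]
    funext r s
    by_cases h1 : r = p <;> by_cases h2 : s = q <;> by_cases h3 : r = q <;>
      by_cases h4 : s = p <;>
      simp_all [Tm, vecMulVec, Pi.single_apply]

/-- total sum of a matrix in terms of the scaled Tm representation. -/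
lemma smul_total (p q : Fin n) (a : ℝ) :
    ∑ r, ∑ s, (a • Tm p q) r s = a * (if p = q then 1 else 2) := by
  simp only [Matrix.smul_apply, smul_eq_mul, ← Finset.mul_sum, Tm_total]

/-- Key sufficiency lemma: any admissible scaling of `Tm p q` is a vertex. -/
lemma isVertex_aux (p q : Fin n) (a : ℝ) (ha : 0 < a)
    (hsum : a * (if p = q then 1 else 2) = 1) :
    IsVertexPt (Feas n) ((a • Tm p q).mulVec (fun _ => 1), a • Tm p q) := by
  have hXsymm : (a • Tm p q).IsSymm := (Tm_symm p q).smul a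
  have hXnn : ∀ r s, 0 ≤ (a • Tm p q) r s := fun r s =>
    mul_nonneg ha.le (Tm_nonneg p q r s)
  have hxnn : (0:Fin n → ℝ) ≤ (a • Tm p q).mulVec (fun _ => 1) := by
    intro r
    simp only [Matrix.mulVec, dotProduct, Pi.zero_apply, mul_one]
    exact Finset.sum_nonneg fun s _ => hXnn r s
  have hxsum : (fun _ => (1:ℝ)) ⬝ᵥ (a • Tm p q).mulVec (fun _ => 1) = 1 := by
    have h0 : (fun _ => (1:ℝ)) ⬝ᵥ (a • Tm p q).mulVec (fun _ => 1)
        = ∑ r, ∑ s, (a • Tm p q) r s := by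
      simp [dotProduct, Matrix.mulVec]
    rw [h0, smul_total, hsum]
  constructor
  · exact (mem_Feas_mk _ _).2 ⟨hXsymm, rfl, hxsum, hxnn, hXnn⟩
  · rintro ⟨u, D⟩ hp hm
    replace hp : ((a • Tm p q).mulVec (fun _ => 1) + u, a • Tm p q + D) ∈ Feas n := hp
    replace hm : ((a • Tm p q).mulVec (fun _ => 1) - u, a • Tm p q - D) ∈ Feas n := hm
    obtain ⟨hsp, hrp, hssp, -, hnnp⟩ := (mem_Feas_mk _ _).1 hp
    obtain ⟨-, -, -, -, hnnm⟩ := (mem_Feas_mk _ _).1 hm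
    -- D vanishes off the orbit of (p,q)
    have hDsupp : ∀ r s, ¬ ((r = p ∧ s = q) ∨ (r = q ∧ s = p)) → D r s = 0 := by
      intro r s h
      have h0 : (a • Tm p q) r s = 0 := by
        simp [Tm_eq_zero h]
      have h1 := hnnp r s
      have h2 := hnnm r s
      simp only [Matrix.add_apply, Matrix.sub_apply, h0, zero_add, zero_sub] at h1 h2
      linarith
    -- D is symmetric
    have hDsymm : D.IsSymm := by
      have h1 : (a • Tm p q)ᵀ + Dᵀ = a • Tm p q + D := by
        rw [← Matrix.transpose_add]; exact hsp
      rw [hXsymm] at h1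
      exact add_left_cancel h1
    -- representation of D
    have hDrep : D = D p q • Tm p q := by
      funext r s
      by_cases h : (r = p ∧ s = q) ∨ (r = q ∧ s = p)
      · rcases h with ⟨h1, h2⟩ | ⟨h1, h2⟩
        · rw [h1, h2, Matrix.smul_apply, Tm_apply_self, smul_eq_mul, mul_one]
        · rw [h1, h2, Matrix.smul_apply, Tm_apply_swap, smul_eq_mul, mul_one]
          exact (hDsymm.apply q p).symm
      · rw [hDsupp r s h, Matrix.smul_apply, Tm_eq_zero h, smul_eq_mul, mul_zero]
    -- u = D.mulVec 1
    have hu : u = D.mulVec (fun _ => 1) := by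
      rw [Matrix.add_mulVec] at hrp
      exact (add_left_cancel hrp).symm
    -- total sum of D is zero
    have hDpq : D p q = 0 := by
      have h1 : (fun _ => (1:ℝ)) ⬝ᵥ u = 0 := by
        rw [dotProduct_add, hxsum] at hssp
        linarith
      have h2 : (fun _ => (1:ℝ)) ⬝ᵥ u = ∑ r, ∑ s, D r s := by
        rw [hu]
        simp [dotProduct, Matrix.mulVec]
      have h3 : ∑ r, ∑ s, D r s = D p q * (if p = q then 1 else 2) := by
        conv_lhs => rw [hDrep]
        exact smul_total p q (D p q)
      rw [h2, h3] at h1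
      rcases eq_or_ne p q with h | h
      · subst h; simpa using h1
      · rw [if_neg h] at h1; linarith
    have hD : D = 0 := by rw [hDrep, hDpq, zero_smul]
    have hu0 : u = 0 := by rw [hu, hD]; simp [Matrix.mulVec]
    simp [Prod.ext_iff, hD, hu0]

end Stmt12Aux

open Stmt12Aux in
/-- The vertices of the RLT feasible region
`𝓕 = {(x,X) : X e = x, eᵀ x = 1, x ≥ 0, X ≥ 0}` of a standard quadratic program are
exactly `(eʲ, eʲ(eʲ)ᵀ)` for `j = 1,…,n` and `(½(eⁱ+eʲ), ½(eⁱ(eʲ)ᵀ + eʲ(eⁱ)ᵀ))` for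
`i ≠ j`. -/
theorem stmt_12 {n : ℕ}
    (cF : Set ((Fin n → ℝ) × Matrix (Fin n) (Fin n) ℝ))
    (hcF : cF = {s | s.2.IsSymm ∧ s.2.mulVec (fun _ => 1) = s.1 ∧
      (fun _ => (1 : ℝ)) ⬝ᵥ s.1 = 1 ∧ 0 ≤ s.1 ∧ ∀ i j, 0 ≤ s.2 i j})
    (x : Fin n → ℝ) (X : Matrix (Fin n) (Fin n) ℝ) :
    IsVertexPt cF (x, X) ↔
      ((∃ j : Fin n, x = Pi.single j 1 ∧
          X = vecMulVec (Pi.single j 1) (Pi.single j 1)) ∨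
       (∃ i j : Fin n, i ≠ j ∧
          x = (1 / 2 : ℝ) • (Pi.single i 1 + Pi.single j 1) ∧
          X = (1 / 2 : ℝ) • (vecMulVec (Pi.single i 1) (Pi.single j 1)
            + vecMulVec (Pi.single j 1) (Pi.single i 1)))) := by
  subst hcF
  change IsVertexPt (Feas n) (x, X) ↔ _
  constructor
  · rintro ⟨hmem, hvert⟩
    obtain ⟨hsymm, hrow, hsum, hxnn, hXnn⟩ := (mem_Feas_mk _ _).1 hmem
    have hrow' : ∀ r, ∑ s, X r s = x r := by
      intro r
      have := congrFun hrow r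
      simpa [Matrix.mulVec, dotProduct] using this
    have hsum' : ∑ r, x r = 1 := by simpa [dotProduct] using hsum
    have htot : ∑ r, ∑ s, X r s = 1 := by
      rw [Finset.sum_congr rfl fun r _ => hrow' r]; exact hsum'
    have hex : ∃ i j, X i j ≠ 0 := by
      by_contra h
      push_neg at h
      simp [h] at htot
    obtain ⟨i, j, hij0⟩ := hex
    have haij : 0 < X i j := (hXnn i j).lt_of_ne (Ne.symm hij0)
    -- support uniqueness
    have hsupp : ∀ k l, X k l ≠ 0 → (k = i ∧ l = j) ∨ (k = j ∧ l = i) := by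
      intro k l hkl0
      by_contra hcon
      push_neg at hcon
      obtain ⟨h1, h2⟩ := hcon
      have hb : 0 < X k l := (hXnn k l).lt_of_ne (Ne.symm hkl0)
      have hdisj : ∀ r s : Fin n, ((r = i ∧ s = j) ∨ (r = j ∧ s = i)) →
          ¬ ((r = k ∧ s = l) ∨ (r = l ∧ s = k)) := by
        intro r s h hc
        rcases h with ⟨hr, hs⟩ | ⟨hr, hs⟩ <;> rcases hc with ⟨h3, h4⟩ | ⟨h3, h4⟩
        · exact h1 (h3.symm.trans hr) (h4.symm.trans hs)
        · exact h2 (h4.symm.trans hs) (h3.symm.trans hr)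
        · exact h2 (h3.symm.trans hr) (h4.symm.trans hs)
        · exact h1 (h4.symm.trans hs) (h3.symm.trans hr)
      set a := X i j with ha_def
      set b := X k l with hb_def
      set Sij : ℝ := if i = j then 1 else 2 with hSij_def
      set Skl : ℝ := if k = l then 1 else 2 with hSkl_def
      have hSij1 : 1 ≤ Sij := by rw [hSij_def]; split <;> norm_num
      have hSij2 : Sij ≤ 2 := by rw [hSij_def]; split <;> norm_num
      have hSkl1 : 1 ≤ Skl := by rw [hSkl_def]; split <;> norm_num
      have hSkl2 : Skl ≤ 2 := by rw [hSkl_def]; split <;> norm_num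
      have hSklpos : 0 < Skl := by linarith
      set c : ℝ := min a b / 2 with hc_def
      set d : ℝ := c * Sij / Skl with hd_def
      have hc0 : 0 < c := by
        rw [hc_def]
        have := lt_min haij hb
        linarith
      have hminnn : 0 ≤ min a b := le_min haij.le hb.le
      have hca : c ≤ a := by
        have := min_le_left a b
        rw [hc_def]; linarith
      have hd0 : 0 ≤ d := by
        rw [hd_def]
        positivity
      have hdb : d ≤ b := by
        have h2c : 2 * c = min a b := by rw [hc_def]; ring
        have hminb : min a b ≤ b := min_le_right a b
        rw [hd_def, div_le_iff₀ hSklpos]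
        nlinarith
      set D : Matrix (Fin n) (Fin n) ℝ := c • Tm i j - d • Tm k l with hD_def
      set u : Fin n → ℝ := D.mulVec (fun _ => 1) with hu_def
      -- pointwise bound
      have habs : ∀ r s, |D r s| ≤ X r s := by
        intro r s
        by_cases hA : (r = i ∧ s = j) ∨ (r = j ∧ s = i)
        · have ht1 : Tm i j r s = 1 := by
            unfold Tm; rw [if_pos hA]
          have ht2 : Tm k l r s = 0 := Tm_eq_zero (hdisj r s hA)
          have hDv : D r s = c := by
            rw [hD_def]
            simp [ht1, ht2]
          have hXv : X r s = a := by
            rcases hA with ⟨h1', h2'⟩ | ⟨h1', h2'⟩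
            · rw [h1', h2', ha_def]
            · rw [h1', h2', ha_def]
              exact hsymm.apply i j
          rw [hDv, hXv, abs_of_pos hc0]
          exact hca
        · by_cases hB : (r = k ∧ s = l) ∨ (r = l ∧ s = k)
          · have ht1 : Tm i j r s = 0 := by
              apply Tm_eq_zero
              intro hc'
              exact hdisj r s hc' hB
            have ht2 : Tm k l r s = 1 := by
              unfold Tm; rw [if_pos hB]
            have hDv : D r s = -d := by
              rw [hD_def]; simp [ht1, ht2]
            have hXv : X r s = b := by
              rcases hB with ⟨h1', h2'⟩ | ⟨h1', h2'⟩
              · rw [h1', h2', hb_def]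
              · rw [h1', h2', hb_def]
                exact hsymm.apply k l
            rw [hDv, hXv, abs_neg, abs_of_nonneg hd0]
            exact hdb
          · have ht1 : Tm i j r s = 0 := Tm_eq_zero hA
            have ht2 : Tm k l r s = 0 := Tm_eq_zero hB
            have hDv : D r s = 0 := by rw [hD_def]; simp [ht1, ht2]
            rw [hDv, abs_zero]
            exact hXnn r s
      have hentp : ∀ r s, 0 ≤ X r s + D r s := by
        intro r s
        have h := abs_le.1 (habs r s)
        linarith [h.1]
      have hentm : ∀ r s, 0 ≤ X r s - D r s := by
        intro r s
        have h := abs_le.1 (habs r s)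
        linarith [h.2]
      have hDsymm : D.IsSymm := ((Tm_symm i j).smul c).sub ((Tm_symm k l).smul d)
      have hDsum : ∑ r, ∑ s, D r s = 0 := by
        have hds : d * Skl = c * Sij := by
          rw [hd_def]
          field_simp
        calc ∑ r, ∑ s, D r s
            = ∑ r, ∑ s, ((c • Tm i j) r s - (d • Tm k l) r s) := rfl
          _ = (∑ r, ∑ s, (c • Tm i j) r s) - ∑ r, ∑ s, (d • Tm k l) r s := by
              simp [Finset.sum_sub_distrib]
          _ = c * Sij - d * Skl := by
              rw [smul_total, smul_total, ← hSij_def, ← hSkl_def]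
          _ = 0 := by rw [hds]; ring
      have husum : ∑ r, u r = 0 := by
        have h4 : ∀ r, u r = ∑ s, D r s := by
          intro r; simp [hu_def, Matrix.mulVec, dotProduct]
        rw [Finset.sum_congr rfl fun r _ => h4 r]
        exact hDsum
      -- memberships
      have hmemp : (x + u, X + D) ∈ Feas n := by
        rw [mem_Feas_mk]
        refine ⟨hsymm.add hDsymm, ?_, ?_, ?_, fun r s => by
          simpa using hentp r s⟩
        · rw [Matrix.add_mulVec, hrow, hu_def]
        · simp only [dotProduct, Pi.add_apply, one_mul]
          rw [Finset.sum_add_distrib]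
          simp only [dotProduct, one_mul] at hsum
          rw [hsum, husum, add_zero]
        · intro r
          have h1' : (x + u) r = ∑ s, (X r s + D r s) := by
            rw [Finset.sum_add_distrib, hrow' r]
            simp [hu_def, Matrix.mulVec, dotProduct]
          simp only [Pi.zero_apply]
          rw [h1']
          exact Finset.sum_nonneg fun s _ => hentp r s
      have hmemm : (x - u, X - D) ∈ Feas n := by
        rw [mem_Feas_mk]
        refine ⟨hsymm.sub hDsymm, ?_, ?_, ?_, fun r s => by
          simpa using hentm r s⟩
        · rw [Matrix.sub_mulVec, hrow, hu_def]
        · simp only [dotProduct, Pi.sub_apply, one_mul]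
          rw [Finset.sum_sub_distrib]
          simp only [dotProduct, one_mul] at hsum
          rw [hsum, husum, sub_zero]
        · intro r
          have h1' : (x - u) r = ∑ s, (X r s - D r s) := by
            rw [Finset.sum_sub_distrib, hrow' r]
            simp [hu_def, Matrix.mulVec, dotProduct]
          simp only [Pi.zero_apply]
          rw [h1']
          exact Finset.sum_nonneg fun s _ => hentm r s
      have hzero := hvert (u, D) hmemp hmemm
      have hD0 : D = 0 := (Prod.ext_iff.1 hzero).2
      have hDc : D i j = c := by
        rw [hD_def]
        have ht2 : Tm k l i j = 0 := Tm_eq_zero (hdisj i j (Or.inl ⟨rfl, rfl⟩))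
        simp [Tm_apply_self, ht2]
      rw [hD0] at hDc
      exact hc0.ne' (by simpa using hDc.symm)
    -- representation of X
    have hXrep : X = X i j • Tm i j := by
      funext r s
      by_cases h : (r = i ∧ s = j) ∨ (r = j ∧ s = i)
      · rcases h with ⟨h1, h2⟩ | ⟨h1, h2⟩
        · rw [h1, h2, Matrix.smul_apply, Tm_apply_self, smul_eq_mul, mul_one]
        · rw [h1, h2, Matrix.smul_apply, Tm_apply_swap, smul_eq_mul, mul_one]
          exact (hsymm.apply j i).symm
      · have h0 : X r s = 0 := by
          by_contra h0
          exact h (hsupp r s h0)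
        rw [h0, Matrix.smul_apply, Tm_eq_zero h, smul_eq_mul, mul_zero]
    have ha1 : X i j * (if i = j then 1 else 2) = 1 := by
      have h5 := smul_total i j (X i j)
      rw [← hXrep] at h5
      rw [← h5]
      exact htot
    have hxX : x = (X i j • Tm i j).mulVec (fun _ => 1) := by
      rw [← hrow]
      conv_lhs => rw [hXrep]
    by_cases hij : i = j
    · left
      rw [if_pos hij, mul_one] at ha1
      refine ⟨j, ?_, ?_⟩
      · rw [hxX, ha1, hij, smulTm_mulVec, if_pos rfl, one_smul]
      · conv_lhs => rw [hXrep]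
        rw [ha1, hij, one_smul]
        have h6 := smulTm_eq j j (1:ℝ)
        rw [if_pos rfl, one_smul, one_smul] at h6
        exact h6
    · right
      rw [if_neg hij] at ha1
      have ha2 : X i j = 1 / 2 := by linarith
      refine ⟨i, j, hij, ?_, ?_⟩
      · rw [hxX, ha2, smulTm_mulVec, if_neg hij]
      · conv_lhs => rw [hXrep]
        rw [ha2]
        have := smulTm_eq i j (1/2 : ℝ)
        rw [if_neg hij] at this
        exact this
  · rintro (⟨j, hx, hX⟩ | ⟨i, j, hij, hx, hX⟩)
    · have h1 : X = (1:ℝ) • Tm j j := by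
        rw [hX]
        have := smulTm_eq j j (1:ℝ)
        rw [if_pos rfl, one_smul, one_smul] at this
        rw [this, one_smul]
      have h2 : x = ((1:ℝ) • Tm j j).mulVec (fun _ => 1) := by
        rw [hx, smulTm_mulVec, if_pos rfl, one_smul]
      rw [h1, h2]
      exact isVertex_aux j j 1 one_pos (by simp)
    · have h1 : X = ((1:ℝ)/2) • Tm i j := by
        rw [hX]
        have := smulTm_eq i j (1/2 : ℝ)
        rw [if_neg hij] at this
        rw [this]
      have h2 : x = (((1:ℝ)/2) • Tm i j).mulVec (fun _ => 1) := by
        rw [hx, smulTm_mulVec, if_neg hij]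
      rw [h1, h2]
      exact isVertex_aux i j (1/2) (by norm_num) (by rw [if_neg hij]; norm_num)
end

section
/- Let the columns of M ∈ ℝ^{n×s} lie in F = {x : G^T x ≤ g, H^T x = h} and the columns of P ∈ ℝ^{n×t} lie in F_∞ = {d : G^T d ≤ 0, H^T d = 0}. For any (x_A, X_A) with X_A ∈ S^{s+t}, X_A ≥ 0, X_A a_A = x_A, a_A^T x_A = 1, x_A ≥ 0 (where a_A = (e; 0) ∈ ℝ^{s+t}), define x̂ = [M P] x_A and X̂ = [M P] X_A [M P]^T. Then (x̂, X̂) lies in the RLT feasible region 𝓕 = {(x,X) : G^T x ≤ g, H^T x = h, H^T X = h x^T, G^T X G − G^T x g^T − g x^T G + g g^T ≥ 0}, and (1/2)⟨Q, X̂⟩ + c^T x̂ = (1/2)⟨Q_A, X_A⟩ + c_A^T x_A where Q_A = [M P]^T Q [M P] and c_A = [M P]^T c. Consequently the RLT optimal value ℓ*_R of the original formulation is at most the RLT optimal value ℓ*_{RA} of the alternative formulation: ℓ*_R ≤ ℓ*_{RA}. -/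
open Matrix

section Helpers

variable {α β γ : Type*} [Fintype α] [Fintype β] [Fintype γ]

omit [Fintype α] [Fintype γ] in
lemma vecMulVec_mul_right' (u : α → ℝ) (v : β → ℝ) (A : Matrix β γ ℝ) :
    vecMulVec u v * A = vecMulVec u (v ᵥ* A) := by
  ext i k
  simp [mul_apply, vecMulVec_apply, vecMul, dotProduct, Finset.mul_sum, mul_assoc]

omit [Fintype α] [Fintype γ] in
lemma mul_vecMulVec_left' (A : Matrix α β ℝ) (u : β → ℝ) (v : γ → ℝ) :
    A * vecMulVec u v = vecMulVec (A *ᵥ u) v := by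
  ext i k
  simp [mul_apply, vecMulVec_apply, mulVec, dotProduct, Finset.sum_mul, mul_assoc]

omit [Fintype α] [Fintype β] in
lemma vecMulVec_transpose'_s13 (u : α → ℝ) (v : β → ℝ) :
    (vecMulVec u v)ᵀ = vecMulVec v u := by
  ext i j; simp [vecMulVec_apply, mul_comm]

omit [Fintype β] in
lemma vecMul_vecMulVec' (x u : α → ℝ) (v : β → ℝ) :
    x ᵥ* vecMulVec u v = (x ⬝ᵥ u) • v := by
  ext j
  simp [vecMul, vecMulVec_apply, dotProduct, Finset.sum_mul, mul_assoc]

omit [Fintype α] in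
lemma vecMulVec_mulVec'_s13 (u : α → ℝ) (v x : β → ℝ) :
    vecMulVec u v *ᵥ x = (v ⬝ᵥ x) • u := by
  ext i
  simp [mulVec, vecMulVec_apply, dotProduct, Finset.mul_sum, mul_comm, mul_left_comm]

end Helpers

/-- Feasible solutions of the RLT relaxation (RLTA) of the alternative formulation
map to feasible solutions of (RLT) with equal objective value; consequently
`ℓ*_R ≤ ℓ*_{RA}`. -/
theorem stmt_13 {n m p s t : ℕ} (Q : Matrix (Fin n) (Fin n) ℝ) (hQ : Q.IsSymm)
    (c : Fin n → ℝ) (G : Matrix (Fin n) (Fin m) ℝ) (H : Matrix (Fin n) (Fin p) ℝ)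
    (g : Fin m → ℝ) (h : Fin p → ℝ)
    (F : Set (Fin n → ℝ)) (hF : F = {x | Gᵀ.mulVec x ≤ g ∧ Hᵀ.mulVec x = h})
    (M : Matrix (Fin n) (Fin s) ℝ) (hM : ∀ i : Fin s, (fun r => M r i) ∈ F)
    (P : Matrix (Fin n) (Fin t) ℝ)
    (hP : ∀ j : Fin t, Gᵀ.mulVec (fun r => P r j) ≤ 0 ∧ Hᵀ.mulVec (fun r => P r j) = 0)
    (B : Matrix (Fin n) (Fin s ⊕ Fin t) ℝ) (hB : B = fromCols M P)
    (aA : Fin s ⊕ Fin t → ℝ) (haA : aA = Sum.elim (fun _ => 1) (fun _ => 0))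
    (cF : Set ((Fin n → ℝ) × Matrix (Fin n) (Fin n) ℝ))
    (hcF : cF = {z | z.2.IsSymm ∧ Gᵀ.mulVec z.1 ≤ g ∧ Hᵀ.mulVec z.1 = h ∧
      Hᵀ * z.2 = vecMulVec h z.1 ∧
      ∀ i j, 0 ≤ (Gᵀ * z.2 * G - vecMulVec (Gᵀ.mulVec z.1) g
        - vecMulVec g (Gᵀ.mulVec z.1) + vecMulVec g g) i j})
    (cFA : Set ((Fin s ⊕ Fin t → ℝ) × Matrix (Fin s ⊕ Fin t) (Fin s ⊕ Fin t) ℝ))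
    (hcFA : cFA = {z | z.2.IsSymm ∧ z.2.mulVec aA = z.1 ∧ aA ⬝ᵥ z.1 = 1 ∧
      0 ≤ z.1 ∧ ∀ i j, 0 ≤ z.2 i j}) :
    (∀ xA : Fin s ⊕ Fin t → ℝ, ∀ XA : Matrix (Fin s ⊕ Fin t) (Fin s ⊕ Fin t) ℝ,
      (xA, XA) ∈ cFA →
        (B.mulVec xA, B * XA * Bᵀ) ∈ cF ∧
        1 / 2 * (Qᵀ * (B * XA * Bᵀ)).trace + c ⬝ᵥ B.mulVec xA
          = 1 / 2 * ((Bᵀ * Q * B)ᵀ * XA).trace + Bᵀ.mulVec c ⬝ᵥ xA) ∧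
    sInf ((fun z : (Fin n → ℝ) × Matrix (Fin n) (Fin n) ℝ =>
        ((1 / 2 * (Qᵀ * z.2).trace + c ⬝ᵥ z.1 : ℝ) : EReal)) '' cF) ≤
      sInf ((fun z : (Fin s ⊕ Fin t → ℝ) × Matrix (Fin s ⊕ Fin t) (Fin s ⊕ Fin t) ℝ =>
        ((1 / 2 * ((Bᵀ * Q * B)ᵀ * z.2).trace + Bᵀ.mulVec c ⬝ᵥ z.1 : ℝ) : EReal)) '' cFA) := by
  rw [hF] at hM
  have key : ∀ xA : Fin s ⊕ Fin t → ℝ, ∀ XA : Matrix (Fin s ⊕ Fin t) (Fin s ⊕ Fin t) ℝ,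
      (xA, XA) ∈ cFA →
        (B.mulVec xA, B * XA * Bᵀ) ∈ cF ∧
        1 / 2 * (Qᵀ * (B * XA * Bᵀ)).trace + c ⬝ᵥ B.mulVec xA
          = 1 / 2 * ((Bᵀ * Q * B)ᵀ * XA).trace + Bᵀ.mulVec c ⬝ᵥ xA := by
    intro xA XA hmem
    rw [hcFA] at hmem
    obtain ⟨hS, hXa, hax, hx0, hX0⟩ := hmem
    -- basic matrix facts
    have haB : Hᵀ * B = vecMulVec h aA := by
      rw [hB]; ext k i
      cases i with
      | inl a =>
        have h2 := congrFun (hM a).2 k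
        simpa [mul_apply, mulVec, dotProduct, fromCols, vecMulVec_apply, haA] using h2
      | inr b =>
        have h2 := congrFun (hP b).2 k
        simpa [mul_apply, mulVec, dotProduct, fromCols, vecMulVec_apply, haA] using h2
    have hGB : ∀ k i, (Gᵀ * B) k i ≤ vecMulVec g aA k i := by
      intro k i
      rw [hB]
      cases i with
      | inl a =>
        have h2 := (hM a).1 k
        simpa [mul_apply, mulVec, dotProduct, fromCols, vecMulVec_apply, haA] using h2
      | inr b =>
        have h2 := (hP b).1 k
        simpa [mul_apply, mulVec, dotProduct, fromCols, vecMulVec_apply, haA] using h2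
    have exA : aA ᵥ* XA = xA := by rw [← mulVec_transpose, hS, hXa]
    have hxa1 : xA ⬝ᵥ aA = 1 := by rw [dotProduct_comm]; exact hax
    -- feasibility
    have hfeas : (B.mulVec xA, B * XA * Bᵀ) ∈ cF := by
      rw [hcF]
      refine ⟨?_, ?_, ?_, ?_, ?_⟩
      · show (B * XA * Bᵀ)ᵀ = B * XA * Bᵀ
        rw [transpose_mul, transpose_mul, transpose_transpose, hS, ← Matrix.mul_assoc]
      · show Gᵀ *ᵥ (B *ᵥ xA) ≤ g
        intro k
        rw [mulVec_mulVec]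
        have : ((Gᵀ * B) *ᵥ xA) k ≤ (vecMulVec g aA *ᵥ xA) k := by
          simp only [mulVec, dotProduct]
          exact Finset.sum_le_sum fun i _ => mul_le_mul_of_nonneg_right (hGB k i) (hx0 i)
        refine this.trans ?_
        rw [vecMulVec_mulVec'_s13, hax]
        simp
      · show Hᵀ *ᵥ (B *ᵥ xA) = h
        rw [mulVec_mulVec, haB, vecMulVec_mulVec'_s13, hax, one_smul]
      · show Hᵀ * (B * XA * Bᵀ) = vecMulVec h (B *ᵥ xA)
        calc Hᵀ * (B * XA * Bᵀ) = ((Hᵀ * B) * XA) * Bᵀ := by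
              simp only [Matrix.mul_assoc]
          _ = vecMulVec h (aA ᵥ* XA) * Bᵀ := by rw [haB, vecMulVec_mul_right']
          _ = vecMulVec h (xA ᵥ* Bᵀ) := by rw [exA, vecMulVec_mul_right']
          _ = vecMulVec h (B *ᵥ xA) := by rw [vecMul_transpose]
      · -- RLT inequality
        set K : Matrix (Fin m) (Fin s ⊕ Fin t) ℝ := Gᵀ * B - vecMulVec g aA with hKdef
        have hK : ∀ k i, K k i ≤ 0 := by
          intro k i
          have := hGB k i
          simp only [hKdef, Matrix.sub_apply]
          linarith
        have e1 : (Gᵀ * B) * XA * (Gᵀ * B)ᵀ = Gᵀ * (B * XA * Bᵀ) * G := by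
          rw [transpose_mul, transpose_transpose]
          simp only [Matrix.mul_assoc]
        have e2 : (Gᵀ * B) * XA * vecMulVec aA g = vecMulVec (Gᵀ *ᵥ (B *ᵥ xA)) g := by
          rw [mul_vecMulVec_left', ← mulVec_mulVec, hXa, ← mulVec_mulVec]
        have e3 : vecMulVec g aA * XA * (Gᵀ * B)ᵀ = vecMulVec g (Gᵀ *ᵥ (B *ᵥ xA)) := by
          rw [vecMulVec_mul_right', exA, vecMulVec_mul_right', vecMul_transpose,
            mulVec_mulVec]
        have e4 : vecMulVec g aA * XA * vecMulVec aA g = vecMulVec g g := by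
          rw [vecMulVec_mul_right', exA, vecMulVec_mul_right', vecMul_vecMulVec', hxa1,
            one_smul]
        have hid : Gᵀ * (B * XA * Bᵀ) * G - vecMulVec (Gᵀ *ᵥ (B *ᵥ xA)) g
            - vecMulVec g (Gᵀ *ᵥ (B *ᵥ xA)) + vecMulVec g g = K * XA * Kᵀ := by
          have t1 : Kᵀ = (Gᵀ * B)ᵀ - vecMulVec aA g := by
            rw [hKdef, transpose_sub, vecMulVec_transpose'_s13]
          rw [hKdef, t1]
          simp only [Matrix.sub_mul, Matrix.mul_sub, e1, e2, e3, e4]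
          abel
        intro i j
        show 0 ≤ (Gᵀ * (B * XA * Bᵀ) * G - vecMulVec (Gᵀ *ᵥ (B *ᵥ xA)) g
            - vecMulVec g (Gᵀ *ᵥ (B *ᵥ xA)) + vecMulVec g g) i j
        rw [hid]
        have hexp : (K * XA * Kᵀ) i j
            = ∑ k, ∑ l, K i l * XA l k * K j k := by
          simp [mul_apply, Finset.sum_mul, add_mul]
        rw [hexp]
        refine Finset.sum_nonneg fun k _ => Finset.sum_nonneg fun l _ => ?_
        have h1 := hK i l
        have h2 := hK j k
        have h3 := hX0 l k
        nlinarith [mul_nonneg (mul_nonneg (neg_nonneg.2 h1) h3) (neg_nonneg.2 h2)]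
    refine ⟨hfeas, ?_⟩
    have tr : (Qᵀ * (B * XA * Bᵀ)).trace = ((Bᵀ * Q * B)ᵀ * XA).trace := by
      rw [transpose_mul, transpose_mul, transpose_transpose,
        ← Matrix.mul_assoc, ← Matrix.mul_assoc, trace_mul_comm]
      simp only [Matrix.mul_assoc]
    have dp : c ⬝ᵥ (B *ᵥ xA) = Bᵀ *ᵥ c ⬝ᵥ xA := by
      rw [dotProduct_mulVec, mulVec_transpose]
    rw [tr, dp]
  refine ⟨key, ?_⟩
  apply sInf_le_sInf
  rintro x ⟨⟨xA, XA⟩, hmem, rfl⟩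
  obtain ⟨hfeas, hobj⟩ := key xA XA hmem
  exact ⟨(B.mulVec xA, B * XA * Bᵀ), hfeas, congrArg Real.toEReal hobj⟩
end

section
/- Fix x̂ ∈ F and consider the parametric LP ℓ_R^0(x̂) = min{(1/2)⟨Q,X⟩ : H^T X = h x̂^T, G^T X G − G^T x̂ g^T − g x̂^T G + g g^T ≥ 0} over X ∈ S^n, and ℓ_R(x̂) = c^T x̂ + ℓ_R^0(x̂). If there exists x̂ ∈ F with ℓ_R(x̂) = −∞, then ℓ_R(x̃) = −∞ for every x̃ ∈ F, and hence the RLT relaxation is unbounded: ℓ*_R = −∞. -/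
open Matrix
open scoped RealInnerProductSpace

section Stmt15Farkas


section Cone

variable {ι : Type*} [Fintype ι] [DecidableEq ι]
variable {E : Type*} [AddCommGroup E] [Module ℝ E]

/-- auxiliary step: reduce a dependent nonneg combination -/
lemma conic_reduce (v : ι → E) (S : Finset ι) (y : ι → ℝ) (hy : ∀ i, 0 ≤ y i)
    (hsupp : ∀ i ∉ S, y i = 0) (c : ι → ℝ) (hc0 : ∑ i, c i • v i = 0)
    (hcs : ∀ i ∉ S, c i = 0) (hpos : ∃ i ∈ S, 0 < c i) :
    ∃ i₀ ∈ S, ∃ y' : ι → ℝ, (∀ i, 0 ≤ y' i) ∧ (∀ i ∉ S.erase i₀, y' i = 0) ∧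
      ∑ i, y' i • v i = ∑ i, y i • v i := by
  classical
  obtain ⟨j, hjS, hjpos⟩ := hpos
  have hP : (S.filter (fun i => 0 < c i)).Nonempty := ⟨j, Finset.mem_filter.2 ⟨hjS, hjpos⟩⟩
  obtain ⟨i₀, hi₀P, hi₀min⟩ := Finset.exists_min_image _ (fun i => y i / c i) hP
  rw [Finset.mem_filter] at hi₀P
  obtain ⟨hi₀S, hi₀pos⟩ := hi₀P
  set t := y i₀ / c i₀ with ht
  have htnn : 0 ≤ t := div_nonneg (hy i₀) hi₀pos.le
  refine ⟨i₀, hi₀S, fun i => y i - t * c i, ?_, ?_, ?_⟩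
  · intro i
    by_cases hci : 0 < c i
    · have hiS : i ∈ S := by
        by_contra hiS; exact absurd (hcs i hiS) (ne_of_gt hci)
      have := hi₀min i (Finset.mem_filter.2 ⟨hiS, hci⟩)
      have h2 : t * c i ≤ y i := by
        rw [← le_div_iff₀ hci]; exact this
      simp only; linarith
    · push_neg at hci
      have h2 : t * c i ≤ 0 := mul_nonpos_of_nonneg_of_nonpos htnn hci
      simp only; linarith [hy i]
  · intro i hi
    by_cases hiS : i ∈ S
    · have : i = i₀ := by
        by_contra hne
        exact hi (Finset.mem_erase.2 ⟨hne, hiS⟩)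
      subst this
      show y i - t * c i = 0
      rw [ht, div_mul_cancel₀ _ (ne_of_gt hi₀pos), sub_self]
    · simp only; rw [hsupp i hiS, hcs i hiS]; ring
  · have : ∑ i, (y i - t * c i) • v i = ∑ i, y i • v i - t • ∑ i, c i • v i := by
      rw [Finset.smul_sum, ← Finset.sum_sub_distrib]
      congr 1; ext i; rw [sub_smul, smul_smul]
    rw [this, hc0, smul_zero, sub_zero]

/-- Conic Carathéodory: any nonneg combination is a nonneg combination over a
linearly independent subfamily. -/
lemma conic_cara (v : ι → E) (S : Finset ι) (y : ι → ℝ) (hy : ∀ i, 0 ≤ y i)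
    (hsupp : ∀ i ∉ S, y i = 0) :
    ∃ (T : Finset ι) (y' : ι → ℝ), LinearIndependent ℝ (fun i : T => v i) ∧
      (∀ i, 0 ≤ y' i) ∧ (∀ i ∉ T, y' i = 0) ∧ ∑ i, y' i • v i = ∑ i, y i • v i := by
  classical
  induction S using Finset.strongInduction generalizing y with
  | _ S ih =>
    by_cases hLI : LinearIndependent ℝ (fun i : S => v i)
    · exact ⟨S, y, hLI, hy, hsupp, rfl⟩
    · obtain ⟨g, hg0, i₁, hi₁⟩ := Fintype.not_linearIndependent_iff.mp hLI
      set c : ι → ℝ := fun i => if h : i ∈ S then g ⟨i, h⟩ else 0 with hcdef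
      have hcs : ∀ i ∉ S, c i = 0 := fun i hi => dif_neg hi
      have hcsum : ∑ i, c i • v i = 0 := by
        rw [← Finset.sum_subset (Finset.subset_univ S)
          (fun i _ hi => by rw [hcs i hi, zero_smul])]
        rw [← Finset.sum_attach S (fun i => c i • v i)]
        simpa [hcdef] using hg0
      have hkey : ∀ c : ι → ℝ, (∑ i, c i • v i = 0) → (∀ i ∉ S, c i = 0) →
          (∃ i ∈ S, 0 < c i) →
          ∃ (T : Finset ι) (y' : ι → ℝ), LinearIndependent ℝ (fun i : T => v i) ∧
            (∀ i, 0 ≤ y' i) ∧ (∀ i ∉ T, y' i = 0) ∧ ∑ i, y' i • v i = ∑ i, y i • v i := by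
        intro c hc0 hcs hpos
        obtain ⟨i₀, hi₀S, y', hy', hy's, hy'sum⟩ :=
          conic_reduce v S y hy hsupp c hc0 hcs hpos
        obtain ⟨T, y'', hT, h1, h2, h3⟩ :=
          ih (S.erase i₀) (Finset.erase_ssubset hi₀S) y' hy' hy's
        exact ⟨T, y'', hT, h1, h2, h3.trans hy'sum⟩
      rcases lt_trichotomy (c i₁) 0 with hneg | hzero | hpos
      · refine hkey (fun i => -c i) ?_ (fun i hi => by show -c i = 0; rw [hcs i hi]; ring)
          ⟨i₁, i₁.2, by simpa [hcdef] using hneg⟩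
        rw [← neg_zero, ← hcsum, ← Finset.sum_neg_distrib]
        congr 1; ext i; rw [neg_smul]
      · exact absurd (by simpa [hcdef] using hzero) hi₁
      · exact hkey c hcsum hcs ⟨i₁, i₁.2, hpos⟩

end Cone

section Closed
variable {ι : Type*} [Fintype ι] [DecidableEq ι]
variable {E : Type*} [NormedAddCommGroup E] [NormedSpace ℝ E] [FiniteDimensional ℝ E]

lemma sum_extend_eq (v : ι → E) (T : Finset ι) (y : ι → ℝ) (hsupp : ∀ i ∉ T, y i = 0) :
    ∑ i, y i • v i = ∑ i : T, y (↑i) • v (↑i) := by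
  rw [Finset.sum_coe_sort T (fun i => y i • v i)]
  exact (Finset.sum_subset (Finset.subset_univ T)
    (fun i _ hi => by rw [hsupp i hi, zero_smul])).symm

lemma isClosed_coneOf (v : ι → E) :
    IsClosed {z : E | ∃ y : ι → ℝ, (∀ i, 0 ≤ y i) ∧ z = ∑ i, y i • v i} := by
  classical
  have key : {z : E | ∃ y : ι → ℝ, (∀ i, 0 ≤ y i) ∧ z = ∑ i, y i • v i} =
      ⋃ T : {T : Finset ι // LinearIndependent ℝ (fun i : T => v i)},
        (fun y : ↥(T.1) → ℝ => ∑ i, y i • v i) '' {y | ∀ i, 0 ≤ y i} := by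
    ext z
    simp only [Set.mem_setOf_eq, Set.mem_iUnion, Set.mem_image]
    constructor
    · rintro ⟨y, hy, rfl⟩
      obtain ⟨T, y', hT, h1, h2, h3⟩ := conic_cara v Finset.univ y hy (by simp)
      exact ⟨⟨T, hT⟩, fun i => y' i, fun i => h1 i, by rw [← h3, sum_extend_eq v T y' h2]⟩
    · rintro ⟨T, y, hy, rfl⟩
      refine ⟨fun i => if h : i ∈ T.1 then y ⟨i, h⟩ else 0, fun i => ?_, ?_⟩
      · by_cases h : i ∈ T.1
        · simp only; rw [dif_pos h]; exact hy ⟨i, h⟩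
        · simp only; rw [dif_neg h]
      · rw [sum_extend_eq v T.1 _ (fun i hi => dif_neg hi)]
        congr 1; ext i; rw [dif_pos i.2]
  rw [key]
  apply isClosed_iUnion_of_finite
  rintro ⟨T, hT⟩
  have : ∃ f : (↥T → ℝ) →ₗ[ℝ] E, ∀ y, f y = ∑ i, y i • v (↑i) := by
    refine ⟨{ toFun := fun y => ∑ i, y i • v i, map_add' := ?_, map_smul' := ?_ }, fun _ => rfl⟩
    · intro a b; simp [add_smul, Finset.sum_add_distrib]
    · intro r a; simp [smul_smul, Finset.smul_sum]
  obtain ⟨f, hf⟩ := this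
  have hker : LinearMap.ker f = ⊥ := by
    rw [LinearMap.ker_eq_bot']
    intro y hy0
    rw [hf] at hy0
    have := Fintype.linearIndependent_iff.mp hT y hy0
    ext i; exact this i
  have hemb := LinearMap.isClosedEmbedding_of_injective hker
  have himg : (fun y : ↥T → ℝ => ∑ i, y i • v i) '' {y | ∀ i, 0 ≤ y i}
      = f '' {y | ∀ i, 0 ≤ y i} :=
    Set.image_congr (fun y _ => (hf y).symm)
  rw [himg]
  apply hemb.isClosedMap
  have : {y : ↥T → ℝ | ∀ i, 0 ≤ y i} = ⋂ i, (fun y : ↥T → ℝ => y i) ⁻¹' Set.Ici 0 := by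
    ext y; simp [Set.mem_iInter]
  rw [this]
  exact isClosed_iInter fun i => isClosed_Ici.preimage (continuous_apply i)
end Closed

section Farkas
variable {ι : Type*} [Fintype ι] [DecidableEq ι]
variable {E : Type*} [NormedAddCommGroup E] [InnerProductSpace ℝ E] [FiniteDimensional ℝ E]

lemma farkas (v : ι → E) (q : E)
    (h : ∀ D : E, (∀ i, 0 ≤ ⟪v i, D⟫) → 0 ≤ ⟪q, D⟫) :
    ∃ y : ι → ℝ, (∀ i, 0 ≤ y i) ∧ q = ∑ i, y i • v i := by
  classical
  by_contra hq
  push_neg at hq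
  set C : Set E := {z : E | ∃ y : ι → ℝ, (∀ i, 0 ≤ y i) ∧ z = ∑ i, y i • v i} with hC
  have hqC : q ∉ C := by
    rintro ⟨y, hy, hqy⟩; exact (hq y hy) hqy
  have hcone : ∃ K : ConvexCone ℝ E, (K : Set E) = C := by
    refine ⟨{ carrier := C, smul_mem' := ?_, add_mem' := ?_ }, rfl⟩
    · rintro r hr z ⟨y, hy, rfl⟩
      exact ⟨fun i => r * y i, fun i => mul_nonneg hr.le (hy i),
        by rw [Finset.smul_sum]; congr 1; ext i; rw [smul_smul]⟩
    · rintro z ⟨y, hy, rfl⟩ w ⟨y', hy', rfl⟩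
      exact ⟨fun i => y i + y' i, fun i => add_nonneg (hy i) (hy' i),
        by rw [← Finset.sum_add_distrib]; congr 1; ext i; rw [add_smul]⟩
  obtain ⟨K, hK⟩ := hcone
  have hne : (K : Set E).Nonempty := ⟨0, by rw [hK]; exact ⟨fun _ => 0, fun _ => le_refl 0, by simp⟩⟩
  have hclosed : IsClosed (K : Set E) := by rw [hK]; exact isClosed_coneOf v
  have hqK : q ∉ K := by rw [← SetLike.mem_coe, hK]; exact hqC
  obtain ⟨D, hD1, hD2⟩ : ∃ y, (∀ x ∈ K, 0 ≤ ⟪x, y⟫) ∧ ⟪y, q⟫ < 0 := by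
    have hpt : K.Pointed := by
      rw [ConvexCone.Pointed, ← SetLike.mem_coe, hK]
      exact ⟨fun _ => 0, fun _ => le_refl 0, by simp⟩
    obtain ⟨y, hy1, hy2⟩ := ProperCone.hyperplane_separation'
      (⟨K.toPointedCone hpt, hclosed⟩ : ProperCone ℝ E) hqK
    exact ⟨y, hy1, by rw [real_inner_comm]; exact hy2⟩
  have hvD : ∀ i, 0 ≤ ⟪v i, D⟫ := by
    intro i
    apply hD1
    rw [← SetLike.mem_coe, hK]
    refine ⟨fun j => if j = i then 1 else 0, fun j => by positivity, ?_⟩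
    simp [ite_smul]
  have := h D hvD
  rw [real_inner_comm] at hD2
  linarith

/-- Unbounded LP has a strictly improving recession direction. -/
lemma lp_recession {κ : Type*} [Fintype κ] [DecidableEq κ]
    (a : ι → E) (e : κ → E) (d : ι → ℝ) (b : κ → ℝ) (q : E)
    (hunb : ∀ B : ℝ, ∃ z : E, (∀ k, ⟪e k, z⟫ = b k) ∧ (∀ i, d i ≤ ⟪a i, z⟫) ∧ ⟪q, z⟫ < B) :
    ∃ D : E, (∀ k, ⟪e k, D⟫ = 0) ∧ (∀ i, 0 ≤ ⟪a i, D⟫) ∧ ⟪q, D⟫ < 0 := by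
  classical
  by_contra hno
  push_neg at hno
  have hfar : ∀ D : E, (∀ j : ι ⊕ (κ ⊕ κ), 0 ≤ ⟪Sum.elim a (Sum.elim e (fun k => -e k)) j, D⟫) →
      0 ≤ ⟪q, D⟫ := by
    intro D hD
    refine hno D (fun k => le_antisymm ?_ ?_) (fun i => hD (Sum.inl i))
    · have := hD (Sum.inr (Sum.inr k)); rw [Sum.elim_inr, Sum.elim_inr, inner_neg_left] at this
      linarith
    · exact hD (Sum.inr (Sum.inl k))
  obtain ⟨y, hy, hq⟩ := farkas (Sum.elim a (Sum.elim e (fun k => -e k))) q hfar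
  set B₀ : ℝ := ∑ i, y (Sum.inl i) * d i +
    (∑ k, y (Sum.inr (Sum.inl k)) * b k - ∑ k, y (Sum.inr (Sum.inr k)) * b k) with hB₀
  obtain ⟨z, hz1, hz2, hz3⟩ := hunb B₀
  have hqz : ⟪q, z⟫ = ∑ i, y (Sum.inl i) * ⟪a i, z⟫ +
      (∑ k, y (Sum.inr (Sum.inl k)) * b k - ∑ k, y (Sum.inr (Sum.inr k)) * b k) := by
    rw [hq, sum_inner, Fintype.sum_sum_type, Fintype.sum_sum_type]
    congr 1
    · congr 1; ext i; rw [real_inner_smul_left, Sum.elim_inl]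
    · rw [sub_eq_add_neg, ← Finset.sum_neg_distrib]
      congr 1
      · congr 1; ext k; rw [real_inner_smul_left, Sum.elim_inr, Sum.elim_inl, hz1 k]
      · congr 1; ext k
        rw [real_inner_smul_left, Sum.elim_inr, Sum.elim_inr, inner_neg_left, hz1 k]; ring
  have : B₀ ≤ ⟪q, z⟫ := by
    rw [hqz, hB₀]
    apply add_le_add_left
    apply Finset.sum_le_sum
    intro i _
    exact mul_le_mul_of_nonneg_left (hz2 i) (hy (Sum.inl i))
  linarith
end Farkas

namespace Stmt15Aux

variable {n m p : ℕ}

noncomputable def toE (M : Matrix (Fin n) (Fin n) ℝ) : EuclideanSpace ℝ (Fin n × Fin n) :=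
  (WithLp.equiv 2 _).symm (fun ij => M ij.1 ij.2)

@[simp] lemma toE_apply (M : Matrix (Fin n) (Fin n) ℝ) (ij : Fin n × Fin n) :
    toE M ij = M ij.1 ij.2 := rfl

lemma inner_toE (M : Matrix (Fin n) (Fin n) ℝ) (z : EuclideanSpace ℝ (Fin n × Fin n)) :
    ⟪toE M, z⟫ = ∑ i, ∑ j, M i j * z (i, j) := by
  rw [PiLp.inner_apply, Fintype.sum_prod_type]
  simp [RCLike.inner_apply]
  exact Finset.sum_congr rfl fun i _ => Finset.sum_congr rfl fun j _ => mul_comm _ _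

lemma inner_e1 (H : Matrix (Fin n) (Fin p) ℝ) (k : Fin p) (l : Fin n)
    (z : EuclideanSpace ℝ (Fin n × Fin n)) :
    ⟪toE (Matrix.of fun i j => if j = l then H i k else 0), z⟫ = ∑ i, H i k * z (i, l) := by
  rw [inner_toE]
  apply Finset.sum_congr rfl
  intro i _
  simp [ite_mul, Finset.sum_ite_eq']

lemma inner_e2 (r s : Fin n) (z : EuclideanSpace ℝ (Fin n × Fin n)) :
    ⟪toE (Matrix.of fun i j => (if i = r ∧ j = s then (1:ℝ) else 0)
      - (if i = s ∧ j = r then (1:ℝ) else 0)), z⟫ = z (r, s) - z (s, r) := by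
  rw [inner_toE]
  simp [sub_mul, ite_mul, Finset.sum_sub_distrib, ite_and, Finset.sum_ite_eq']

lemma entry_HX (H : Matrix (Fin n) (Fin p) ℝ) (X : Matrix (Fin n) (Fin n) ℝ) (k : Fin p)
    (l : Fin n) : (Hᵀ * X) k l = ∑ i, H i k * X i l := by
  simp [Matrix.mul_apply]

lemma entry_GXG (G : Matrix (Fin n) (Fin m) ℝ) (X : Matrix (Fin n) (Fin n) ℝ) (u w : Fin m) :
    (Gᵀ * X * G) u w = ∑ i, ∑ j, G i u * G j w * X i j := by
  simp only [Matrix.mul_apply, Finset.sum_mul, transpose_apply]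
  rw [Finset.sum_comm]
  apply Finset.sum_congr rfl; intro i _
  apply Finset.sum_congr rfl; intro j _
  ring

lemma trace_QX (Q X : Matrix (Fin n) (Fin n) ℝ) :
    (Qᵀ * X).trace = ∑ i, ∑ j, Q i j * X i j := by
  simp only [Matrix.trace, Matrix.diag, Matrix.mul_apply, transpose_apply]
  rw [Finset.sum_comm]

lemma HT_vmv (H : Matrix (Fin n) (Fin p) ℝ) (u w : Fin n → ℝ) :
    Hᵀ * vecMulVec u w = vecMulVec (Hᵀ.mulVec u) w := by
  ext k l
  simp [Matrix.mul_apply, vecMulVec_apply, Matrix.mulVec, dotProduct, Finset.sum_mul, mul_assoc]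

lemma GT_vmv_G (G : Matrix (Fin n) (Fin m) ℝ) (u w : Fin n → ℝ) :
    Gᵀ * vecMulVec u w * G = vecMulVec (Gᵀ.mulVec u) (Gᵀ.mulVec w) := by
  ext a b
  simp only [Matrix.mul_apply, vecMulVec_apply, Matrix.mulVec, dotProduct, transpose_apply,
    Finset.sum_mul, Finset.mul_sum]
  exact Finset.sum_congr rfl fun x _ => Finset.sum_congr rfl fun i _ => by ring

lemma vmv_isSymm (u : Fin n → ℝ) : (vecMulVec u u).IsSymm := by
  ext i j; simp [Matrix.IsSymm, vecMulVec_apply, mul_comm]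

end Stmt15Aux

end Stmt15Farkas
open Stmt15Aux


/-- If the parametric inner LP `ℓ_R(x̂)` is unbounded below for some `x̂ ∈ F`, then it
is unbounded below for every `x̃ ∈ F`, and hence `ℓ*_R = −∞`. -/
theorem stmt_15 {n m p : ℕ} (Q : Matrix (Fin n) (Fin n) ℝ) (hQ : Q.IsSymm)
    (c : Fin n → ℝ) (G : Matrix (Fin n) (Fin m) ℝ) (H : Matrix (Fin n) (Fin p) ℝ)
    (g : Fin m → ℝ) (h : Fin p → ℝ)
    (F : Set (Fin n → ℝ)) (hF : F = {x | Gᵀ.mulVec x ≤ g ∧ Hᵀ.mulVec x = h})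
    (hne : F.Nonempty)
    (Feas : (Fin n → ℝ) → Matrix (Fin n) (Fin n) ℝ → Prop)
    (hFeas : Feas = fun x X => X.IsSymm ∧ Hᵀ * X = vecMulVec h x ∧
      ∀ i j, 0 ≤ (Gᵀ * X * G - vecMulVec (Gᵀ.mulVec x) g
        - vecMulVec g (Gᵀ.mulVec x) + vecMulVec g g) i j)
    (cF : Set ((Fin n → ℝ) × Matrix (Fin n) (Fin n) ℝ))
    (hcF : cF = {z | Gᵀ.mulVec z.1 ≤ g ∧ Hᵀ.mulVec z.1 = h ∧ Feas z.1 z.2})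
    (x : Fin n → ℝ) (hx : x ∈ F)
    (hunb : ∀ B : ℝ, ∃ X, Feas x X ∧ 1 / 2 * (Qᵀ * X).trace + c ⬝ᵥ x < B) :
    (∀ x' ∈ F, ∀ B : ℝ, ∃ X, Feas x' X ∧ 1 / 2 * (Qᵀ * X).trace + c ⬝ᵥ x' < B) ∧
    sInf ((fun z : (Fin n → ℝ) × Matrix (Fin n) (Fin n) ℝ =>
        ((1 / 2 * (Qᵀ * z.2).trace + c ⬝ᵥ z.1 : ℝ) : EReal)) '' cF) = ⊥ := by
  classical
  subst hF hFeas hcF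
  obtain ⟨hxG, hxH⟩ := hx
  -- Extract a strictly improving recession direction via Farkas machinery.
  obtain ⟨D, hD1, hD2, hD3⟩ :=
    lp_recession
      (fun uw : Fin m × Fin m => toE (Matrix.of fun i j' => G i uw.1 * G j' uw.2))
      (Sum.elim
        (fun kl : Fin p × Fin n =>
          toE (Matrix.of fun i j' => if j' = kl.2 then H i kl.1 else 0))
        (fun rs : Fin n × Fin n =>
          toE (Matrix.of fun i j' => (if i = rs.1 ∧ j' = rs.2 then (1:ℝ) else 0)
            - (if i = rs.2 ∧ j' = rs.1 then 1 else 0))))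
      (fun uw : Fin m × Fin m =>
        Gᵀ.mulVec x uw.1 * g uw.2 + g uw.1 * Gᵀ.mulVec x uw.2 - g uw.1 * g uw.2)
      (Sum.elim (fun kl : Fin p × Fin n => h kl.1 * x kl.2) (fun _ => 0))
      (toE Q) (by
    intro B
    obtain ⟨X, ⟨hXsym, hXH, hXG⟩, hval⟩ := hunb (B / 2 + c ⬝ᵥ x)
    refine ⟨toE X, ?_, ?_, ?_⟩
    · rintro (⟨k, l⟩ | ⟨r, s⟩)
      · rw [Sum.elim_inl, Sum.elim_inl, inner_e1]
        simp only [toE_apply]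
        rw [← entry_HX, hXH, vecMulVec_apply]
      · rw [Sum.elim_inr, Sum.elim_inr, inner_e2]
        simp only [toE_apply]
        have hs := congrFun (congrFun hXsym s) r
        rw [transpose_apply] at hs
        simp [hs]
    · rintro ⟨u, w⟩
      rw [inner_toE]
      have := hXG u w
      simp only [Matrix.sub_apply, Matrix.add_apply, vecMulVec_apply] at this
      rw [entry_GXG] at this
      simp only [toE_apply, Matrix.of_apply]
      linarith
    · rw [inner_toE]
      simp only [toE_apply]
      rw [← trace_QX]
      linarith)
  -- translate D into a matrix direction
  set Dm : Matrix (Fin n) (Fin n) ℝ := Matrix.of fun i j => D (i, j) with hDmdef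
  have hDm_apply : ∀ i j, Dm i j = D (i, j) := fun i j => rfl
  have hDsym : Dm.IsSymm := by
    ext r s
    have := hD1 (Sum.inr (r, s))
    rw [Sum.elim_inr, inner_e2] at this
    rw [transpose_apply, hDm_apply, hDm_apply]
    linarith
  have hHD : Hᵀ * Dm = 0 := by
    ext k l
    have := hD1 (Sum.inl (k, l))
    rw [Sum.elim_inl, inner_e1] at this
    rw [entry_HX, Matrix.zero_apply]
    exact this
  have hGDG : ∀ u w, 0 ≤ (Gᵀ * Dm * G) u w := by
    intro u w
    have := hD2 (u, w)
    rw [inner_toE] at this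
    rw [entry_GXG]
    simpa [hDm_apply] using this
  have hQD : (Qᵀ * Dm).trace < 0 := by
    rw [trace_QX]
    have := hD3
    rw [inner_toE] at this
    simpa [hDm_apply] using this
  -- main construction
  have main : ∀ x' : Fin n → ℝ, Gᵀ.mulVec x' ≤ g → Hᵀ.mulVec x' = h → ∀ B : ℝ,
      ∃ X, (X.IsSymm ∧ Hᵀ * X = vecMulVec h x' ∧
        ∀ i j, 0 ≤ (Gᵀ * X * G - vecMulVec (Gᵀ.mulVec x') g
          - vecMulVec g (Gᵀ.mulVec x') + vecMulVec g g) i j) ∧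
        1 / 2 * (Qᵀ * X).trace + c ⬝ᵥ x' < B := by
    intro x' hG' hH' B
    set s₀ : ℝ := 1 / 2 * (Qᵀ * Dm).trace with hs₀def
    have hs₀ : s₀ < 0 := by rw [hs₀def]; linarith
    set K₀ : ℝ := 1 / 2 * (Qᵀ * vecMulVec x' x').trace + c ⬝ᵥ x' with hK₀def
    set t : ℝ := max 0 ((B - K₀ - 1) / s₀) with htdef
    have ht0 : 0 ≤ t := le_max_left _ _
    refine ⟨vecMulVec x' x' + t • Dm, ⟨?_, ?_, ?_⟩, ?_⟩
    · rw [Matrix.IsSymm, Matrix.transpose_add, Matrix.transpose_smul, hDsym,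
        (vmv_isSymm x').eq]
    · rw [Matrix.mul_add, Matrix.mul_smul, hHD, smul_zero, add_zero, HT_vmv, hH']
    · intro u w
      have h1 : 0 ≤ (g u - Gᵀ.mulVec x' u) * (g w - Gᵀ.mulVec x' w) :=
        mul_nonneg (sub_nonneg.2 (hG' u)) (sub_nonneg.2 (hG' w))
      have h2 : 0 ≤ t * (Gᵀ * Dm * G) u w := mul_nonneg ht0 (hGDG u w)
      simp only [Matrix.mul_add, Matrix.add_mul, Matrix.mul_smul, Matrix.smul_mul,
        GT_vmv_G, Matrix.sub_apply, Matrix.add_apply, Matrix.smul_apply,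
        vecMulVec_apply, smul_eq_mul]
      nlinarith [h1, h2]
    · have hval : 1 / 2 * (Qᵀ * (vecMulVec x' x' + t • Dm)).trace + c ⬝ᵥ x'
          = K₀ + t * s₀ := by
        rw [Matrix.mul_add, Matrix.trace_add, Matrix.mul_smul, Matrix.trace_smul,
          hK₀def, hs₀def, smul_eq_mul]
        ring
      rw [hval]
      rcases le_or_gt ((B - K₀ - 1) / s₀) 0 with hc | hc
      · have hteq : t = 0 := by rw [htdef, max_eq_left hc]
        have : 0 ≤ B - K₀ - 1 := by
          by_contra hlt
          push_neg at hlt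
          have : 0 < (B - K₀ - 1) / s₀ := div_pos_of_neg_of_neg (by linarith) hs₀
          linarith
        rw [hteq]
        linarith
      · have hteq : t = (B - K₀ - 1) / s₀ := by rw [htdef, max_eq_right hc.le]
        rw [hteq, div_mul_cancel₀ _ (ne_of_lt hs₀)]
        linarith
  constructor
  · intro x' hx' B
    exact main x' hx'.1 hx'.2 B
  · rw [sInf_eq_bot]
    intro b hb
    have hr : ∃ r : ℝ, (r : EReal) < b := by
      induction b with
      | bot => exact absurd hb (lt_irrefl _)
      | coe r₀ => exact ⟨r₀ - 1, by exact_mod_cast sub_one_lt r₀⟩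
      | top => exact ⟨0, EReal.coe_lt_top 0⟩
    obtain ⟨r, hrb⟩ := hr
    obtain ⟨X, hfeas, hvr⟩ := main x hxG hxH r
    refine ⟨((1 / 2 * (Qᵀ * X).trace + c ⬝ᵥ x : ℝ) : EReal), ⟨(x, X), ⟨hxG, hxH, hfeas⟩, rfl⟩, ?_⟩
    exact lt_trans (by exact_mod_cast hvr) hrb
end

section
/- Suppose F = {x : G^T x ≤ g, H^T x = h} is nonempty and the optimal value ℓ* of the quadratic program min{(1/2) x^T Q x + c^T x : x ∈ F} is finite and attained. If there exists v lying on a minimal face of F such that (v, v v^T) is an optimal solution of the RLT relaxation, then the RLT relaxation is exact: ℓ*_R = ℓ*, and v is an optimal solution of the quadratic program. -/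
open Matrix

lemma rlt_lift {n m p : ℕ} (G : Matrix (Fin n) (Fin m) ℝ) (H : Matrix (Fin n) (Fin p) ℝ)
    (g : Fin m → ℝ) (h : Fin p → ℝ) (x : Fin n → ℝ)
    (hg : Gᵀ.mulVec x ≤ g) (hh : Hᵀ.mulVec x = h) :
    (vecMulVec x x).IsSymm ∧
    Hᵀ * vecMulVec x x = vecMulVec h x ∧
    ∀ i j, 0 ≤ (Gᵀ * vecMulVec x x * G - vecMulVec (Gᵀ.mulVec x) g
        - vecMulVec g (Gᵀ.mulVec x) + vecMulVec g g) i j := by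
  have hGM : ∀ i j, (Gᵀ * vecMulVec x x * G) i j = Gᵀ.mulVec x i * Gᵀ.mulVec x j := by
    intro i j
    simp only [Matrix.mul_apply, Matrix.vecMulVec_apply, Matrix.mulVec, dotProduct,
      Matrix.transpose_apply]
    rw [Finset.sum_mul_sum]
    simp_rw [Finset.sum_mul]
    rw [Finset.sum_comm]
    refine Finset.sum_congr rfl fun a _ => Finset.sum_congr rfl fun b _ => by ring
  refine ⟨?_, ?_, ?_⟩
  · ext i j
    simp [Matrix.vecMulVec_apply, Matrix.transpose_apply, mul_comm]
  · ext i j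
    simp only [Matrix.mul_apply, Matrix.vecMulVec_apply, ← hh, Matrix.mulVec, dotProduct]
    rw [Finset.sum_mul]
    refine Finset.sum_congr rfl fun a _ => by ring
  · intro i j
    simp only [Matrix.sub_apply, Matrix.add_apply, Matrix.vecMulVec_apply, hGM]
    have hi : Gᵀ.mulVec x i ≤ g i := hg i
    have hj : Gᵀ.mulVec x j ≤ g j := hg j
    nlinarith [mul_nonneg (sub_nonneg.mpr hi) (sub_nonneg.mpr hj)]

lemma rlt_obj {n : ℕ} (Q : Matrix (Fin n) (Fin n) ℝ) (x : Fin n → ℝ) :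
    (Qᵀ * vecMulVec x x).trace = x ⬝ᵥ Q.mulVec x := by
  simp only [Matrix.trace, Matrix.diag, Matrix.mul_apply, Matrix.vecMulVec_apply,
    Matrix.transpose_apply, dotProduct, Matrix.mulVec]
  rw [Finset.sum_comm]
  simp_rw [Finset.mul_sum]
  congr 1; ext k; congr 1; ext l; ring

/-- If there is a point `v` on a minimal face of `F` such that `(v, v vᵀ)` is optimal
for the RLT relaxation, then the RLT relaxation is exact (`ℓ*_R = ℓ*`) and `v` is an
optimal solution of the quadratic program. -/
theorem stmt_16 {n m p : ℕ} (Q : Matrix (Fin n) (Fin n) ℝ) (hQ : Q.IsSymm)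
    (c : Fin n → ℝ) (G : Matrix (Fin n) (Fin m) ℝ) (H : Matrix (Fin n) (Fin p) ℝ)
    (g : Fin m → ℝ) (h : Fin p → ℝ)
    (F : Set (Fin n → ℝ)) (hF : F = {x | Gᵀ.mulVec x ≤ g ∧ Hᵀ.mulVec x = h})
    (hne : F.Nonempty)
    (q : (Fin n → ℝ) → ℝ) (hq : q = fun x => 1 / 2 * (x ⬝ᵥ Q.mulVec x) + c ⬝ᵥ x)
    -- ℓ* is finite and attained at xstar
    (xstar : Fin n → ℝ) (hxstar : xstar ∈ F) (hopt : ∀ x ∈ F, q xstar ≤ q x)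
    (cF : Set ((Fin n → ℝ) × Matrix (Fin n) (Fin n) ℝ))
    (hcF : cF = {z | z.2.IsSymm ∧ Gᵀ.mulVec z.1 ≤ g ∧ Hᵀ.mulVec z.1 = h ∧
      Hᵀ * z.2 = vecMulVec h z.1 ∧
      ∀ i j, 0 ≤ (Gᵀ * z.2 * G - vecMulVec (Gᵀ.mulVec z.1) g
        - vecMulVec g (Gᵀ.mulVec z.1) + vecMulVec g g) i j})
    (objR : (Fin n → ℝ) × Matrix (Fin n) (Fin n) ℝ → ℝ)
    (hobjR : objR = fun z => 1 / 2 * (Qᵀ * z.2).trace + c ⬝ᵥ z.1)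
    -- v lies on a minimal face of F: an affine subspace of the form below contained in F
    (v : Fin n → ℝ) (J : Set (Fin m))
    (hface : {x : Fin n → ℝ | (∀ j ∈ J, Gᵀ.mulVec x j = g j) ∧ Hᵀ.mulVec x = h} ⊆ F)
    (hvJ : (∀ j ∈ J, Gᵀ.mulVec v j = g j) ∧ Hᵀ.mulVec v = h)
    -- (v, v vᵀ) is an optimal solution of (RLT)
    (hvfeas : (v, vecMulVec v v) ∈ cF)
    (hvopt : ∀ z ∈ cF, objR (v, vecMulVec v v) ≤ objR z) :
    objR (v, vecMulVec v v) = q xstar ∧ v ∈ F ∧ ∀ x ∈ F, q v ≤ q x := by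
  -- objR on lifted points equals q
  have hobj : ∀ x : Fin n → ℝ, objR (x, vecMulVec x x) = q x := by
    intro x
    simp [hobjR, hq, rlt_obj]
  -- v is feasible
  rw [hcF] at hvfeas
  obtain ⟨-, hvg, hvh, -, -⟩ := hvfeas
  have hvF : v ∈ F := by rw [hF]; exact ⟨hvg, hvh⟩
  -- for each x ∈ F, the lift is feasible
  have hqle : ∀ x ∈ F, q v ≤ q x := by
    intro x hx
    rw [hF] at hx
    obtain ⟨hxg, hxh⟩ := hx
    obtain ⟨h1, h2, h3⟩ := rlt_lift G H g h x hxg hxh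
    have := hvopt (x, vecMulVec x x) (by rw [hcF]; exact ⟨h1, hxg, hxh, h2, h3⟩)
    rwa [hobj, hobj] at this
  have heq : q v = q xstar := le_antisymm (hqle xstar hxstar) (hopt v hvF)
  exact ⟨by rw [hobj, heq], hvF, hqle⟩
end
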